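/- arXiv:2412.19180 — 7 statements merged into one kernel-verified Lean document; each statement's English description precedes it below -/
import Mathlib

section
/- For every integer n ≥ 2, the quantity (n³ + 1)·σ₁^{(1,4)}(n) − (n + 1)·σ₃(n) equals 0 if n is a prime with n ≡ 1 (mod 4), is negative if n ≢ 1 (mod 4), and is positive otherwise. -/
open Finset

/-- `σ_k(n) = ∑_{d ∣ n} d^k`. -/
def sigmaK (k n : ℕ) : ℕ := ∑ d ∈ n.divisors, d ^ k

/-- `σ_k^{(a,N)}(n) = σ_k(n)` if `n ≡ a (mod N)`, and `0` otherwise. -/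
def sigmaKRes (k a N n : ℕ) : ℕ := if n % N = a then sigmaK k n else 0

private lemma pair_sum (n d : ℕ) (hd : d ∈ n.divisors) :
    ((((n:ℤ))^2 - n + 1) * d - (d:ℤ)^3) +
      ((((n:ℤ))^2 - n + 1) * ((n/d : ℕ):ℤ) - ((n/d : ℕ):ℤ)^3)
      = ((d:ℤ) + ((n/d : ℕ):ℤ)) * (((n:ℤ)+1)^2 - ((d:ℤ) + ((n/d : ℕ):ℤ))^2) := by
  obtain ⟨hdvd, hn0⟩ := Nat.mem_divisors.mp hd
  have h : (d:ℤ) * ((n/d : ℕ):ℤ) = n := by exact_mod_cast Nat.mul_div_cancel' hdvd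
  set e : ℤ := ((n/d : ℕ):ℤ)
  have hn' : (n:ℤ) = d * e := h.symm
  rw [hn']; ring

private lemma S_key (n : ℕ) :
    2 * ∑ d ∈ n.divisors, ((((n:ℤ))^2 - n + 1) * d - (d:ℤ)^3)
      = ∑ d ∈ n.divisors,
          ((d:ℤ) + ((n/d : ℕ):ℤ)) * (((n:ℤ)+1)^2 - ((d:ℤ) + ((n/d : ℕ):ℤ))^2) := by
  have h := Nat.sum_div_divisors n (fun d => (((n:ℤ))^2 - n + 1) * d - (d:ℤ)^3)
  rw [two_mul]
  nth_rewrite 2 [← h]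
  rw [← Finset.sum_add_distrib]
  exact Finset.sum_congr rfl fun d hd => pair_sum n d hd

private lemma term_nonneg (n d : ℕ) (hd : d ∈ n.divisors) :
    0 ≤ ((d:ℤ) + ((n/d : ℕ):ℤ)) * (((n:ℤ)+1)^2 - ((d:ℤ) + ((n/d : ℕ):ℤ))^2) := by
  obtain ⟨hdvd, hn0⟩ := Nat.mem_divisors.mp hd
  have h : (d:ℤ) * ((n/d : ℕ):ℤ) = n := by exact_mod_cast Nat.mul_div_cancel' hdvd
  have hd1 : (1:ℤ) ≤ d := by
    exact_mod_cast Nat.one_le_iff_ne_zero.mpr (fun h0 => hn0 (by simpa [h0] using hdvd))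
  have he1 : (1:ℤ) ≤ ((n/d : ℕ):ℤ) := by
    have : 0 < n / d := Nat.div_pos (Nat.le_of_dvd (Nat.pos_of_ne_zero hn0) hdvd)
      (by exact_mod_cast hd1)
    exact_mod_cast this
  set e : ℤ := ((n/d : ℕ):ℤ) with he
  have key : ((n:ℤ)+1)^2 - ((d:ℤ)+e)^2 = (((d:ℤ)-1)*(e-1)) * ((n:ℤ)+1+((d:ℤ)+e)) := by
    rw [← h]; ring
  rw [key]
  have h1 : (0:ℤ) ≤ (d:ℤ) + e := by linarith
  have h2 : (0:ℤ) ≤ ((d:ℤ)-1)*(e-1) := mul_nonneg (by linarith) (by linarith)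
  have h3 : (0:ℤ) ≤ (n:ℤ)+1+((d:ℤ)+e) := by positivity
  exact mul_nonneg h1 (mul_nonneg h2 h3)

private lemma term_pos (n d : ℕ) (hd : d ∈ n.divisors) (h2 : 2 ≤ d) (hlt : d < n) :
    0 < ((d:ℤ) + ((n/d : ℕ):ℤ)) * (((n:ℤ)+1)^2 - ((d:ℤ) + ((n/d : ℕ):ℤ))^2) := by
  obtain ⟨hdvd, hn0⟩ := Nat.mem_divisors.mp hd
  have h : (d:ℤ) * ((n/d : ℕ):ℤ) = n := by exact_mod_cast Nat.mul_div_cancel' hdvd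
  have hd2 : (2:ℤ) ≤ d := by exact_mod_cast h2
  have he2 : (2:ℤ) ≤ ((n/d : ℕ):ℤ) := by
    have hmul := Nat.div_mul_cancel hdvd
    have : 2 ≤ n / d := by
      rcases Nat.lt_or_ge (n / d) 2 with hc | hc
      · interval_cases h' : n / d <;> omega
      · exact hc
    exact_mod_cast this
  set e : ℤ := ((n/d : ℕ):ℤ) with he
  have key : ((n:ℤ)+1)^2 - ((d:ℤ)+e)^2 = (((d:ℤ)-1)*(e-1)) * ((n:ℤ)+1+((d:ℤ)+e)) := by
    rw [← h]; ring
  rw [key]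
  have h1 : (0:ℤ) < (d:ℤ) + e := by linarith
  have h2 : (0:ℤ) < ((d:ℤ)-1)*(e-1) := mul_pos (by linarith) (by linarith)
  have h3 : (0:ℤ) < (n:ℤ)+1+((d:ℤ)+e) := by positivity
  exact mul_pos h1 (mul_pos h2 h3)

theorem prime_detection_one_mod_four (n : ℕ) (hn : 2 ≤ n) :
    (n.Prime ∧ n % 4 = 1 →
      ((n : ℤ) ^ 3 + 1) * sigmaKRes 1 1 4 n - ((n : ℤ) + 1) * sigmaK 3 n = 0) ∧
    (n % 4 ≠ 1 →
      ((n : ℤ) ^ 3 + 1) * sigmaKRes 1 1 4 n - ((n : ℤ) + 1) * sigmaK 3 n < 0) ∧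
    (¬(n.Prime ∧ n % 4 = 1) → n % 4 = 1 →
      0 < ((n : ℤ) ^ 3 + 1) * sigmaKRes 1 1 4 n - ((n : ℤ) + 1) * sigmaK 3 n) := by
  have hn0 : n ≠ 0 := by omega
  have c1 : ((sigmaK 1 n : ℕ) : ℤ) = ∑ d ∈ n.divisors, (d:ℤ) := by
    simp [sigmaK]
  have c3 : ((sigmaK 3 n : ℕ) : ℤ) = ∑ d ∈ n.divisors, (d:ℤ)^3 := by
    simp [sigmaK]
  set S : ℤ := ∑ d ∈ n.divisors, ((((n:ℤ))^2 - n + 1) * d - (d:ℤ)^3) with hS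
  have hSsplit : S = (((n:ℤ))^2 - n + 1) * (∑ d ∈ n.divisors, (d:ℤ))
      - ∑ d ∈ n.divisors, (d:ℤ)^3 := by
    rw [hS, Finset.sum_sub_distrib, ← Finset.mul_sum]
  have hE : ((n : ℤ) ^ 3 + 1) * (sigmaK 1 n) - ((n : ℤ) + 1) * (sigmaK 3 n)
      = ((n:ℤ) + 1) * S := by
    rw [c1, c3, hSsplit]; ring
  have hσ3pos : 0 < sigmaK 3 n := by
    refine Finset.sum_pos (fun d hd => pow_pos (Nat.pos_of_mem_divisors hd) 3) ?_
    exact ⟨n, Nat.mem_divisors_self n hn0⟩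
  refine ⟨?_, ?_, ?_⟩
  · rintro ⟨hp, h4⟩
    rw [sigmaKRes, if_pos h4, hE]
    have hdiv : n.divisors = {1, n} := hp.divisors
    have h1n : (1 : ℕ) ≠ n := by omega
    have : S = 0 := by
      rw [hS, hdiv, Finset.sum_pair h1n]
      push_cast
      ring
    rw [this, mul_zero]
  · intro h4
    rw [sigmaKRes, if_neg h4]
    have h1 : (0:ℤ) < ((n:ℤ) + 1) * (sigmaK 3 n) := by
      have : (0:ℤ) < (sigmaK 3 n : ℤ) := by exact_mod_cast hσ3pos
      positivity
    simpa using h1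
  · intro hnp h4
    rw [sigmaKRes, if_pos h4, hE]
    have hnotp : ¬ n.Prime := fun hp => hnp ⟨hp, h4⟩
    obtain ⟨m, hm, hm2, hmlt⟩ := Nat.exists_dvd_of_not_prime2 hn hnotp
    have hmmem : m ∈ n.divisors := Nat.mem_divisors.mpr ⟨hm, hn0⟩
    have h2S : 0 < 2 * S := by
      rw [hS, S_key]
      exact Finset.sum_pos' (fun d hd => term_nonneg n d hd)
        ⟨m, hmmem, term_pos n m hmmem hm2 hmlt⟩
    have hSpos : 0 < S := by linarith
    have : (0:ℤ) < (n:ℤ) + 1 := by positivity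
    exact mul_pos this hSpos
end

section
/- Let N be a positive integer and let k, l be positive integers with l > k. For every integer n ≥ 2, the quantity Σ_{d ∣ n, gcd(n/d, N) = 1} ((n^l + 1)·d^k − (n^k + 1)·d^l) equals 0 if n is a prime not dividing N, is negative if every prime factor p of n satisfies p ∣ N, and is positive otherwise. -/
open Finset


-- positivity of a single proper-divisor term
lemma aux_pos (n d k l : ℕ) (hd : 1 ≤ d) (hdn : 2 * d ≤ n) (hk : 1 ≤ k) (hkl : k < l) :
    0 < ((n : ℤ) ^ l + 1) * (d : ℤ) ^ k - ((n : ℤ) ^ k + 1) * (d : ℤ) ^ l := by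
  obtain ⟨t, ht⟩ : ∃ t, l = k + t := ⟨l - k, by omega⟩
  have ht1 : 1 ≤ t := by omega
  subst ht
  set A : ℤ := (n : ℤ) ^ k with hA
  set B : ℤ := (n : ℤ) ^ t with hB
  set C : ℤ := (d : ℤ) ^ k with hC
  set D : ℤ := (d : ℤ) ^ t with hD
  have hdZ : (1 : ℤ) ≤ (d : ℤ) := by exact_mod_cast hd
  have hnZ : (2 : ℤ) * d ≤ (n : ℤ) := by exact_mod_cast hdn
  have hn2 : (2 : ℤ) ≤ (n : ℤ) := by linarith
  have hA2 : (2 : ℤ) ≤ A := by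
    calc (2:ℤ) ≤ (n : ℤ) := hn2
    _ ≤ A := le_self_pow₀ (by linarith) (by omega)
  have hC1 : (1 : ℤ) ≤ C := by rw [hC, show (1:ℤ) = 1^k by simp]; exact pow_le_pow_left₀ (by norm_num) hdZ k
  have hD1 : (1 : ℤ) ≤ D := by rw [hD, show (1:ℤ) = 1^t by simp]; exact pow_le_pow_left₀ (by norm_num) hdZ t
  have hBD : 2 * D ≤ B := by
    have h1 : ((2:ℤ) * d) ^ t ≤ (n : ℤ) ^ t :=
      pow_le_pow_left₀ (by positivity) hnZ t
    have h2 : (2:ℤ) * D ≤ ((2:ℤ)*d) ^ t := by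
      rw [mul_pow, hD]
      have : (2:ℤ) ≤ 2 ^ t := by
        calc (2:ℤ) = 2^1 := (pow_one 2).symm
        _ ≤ 2^t := pow_le_pow_right₀ (by norm_num) ht1
      nlinarith [pow_pos (show (0:ℤ) < d by linarith) t]
    linarith
  have key : ((n:ℤ)^(k+t) + 1) * C - ((n:ℤ)^k + 1) * ((d:ℤ)^(k+t))
      = (A*B + 1) * C - (A + 1) * (C*D) := by
    rw [pow_add, pow_add]
  rw [key]
  nlinarith [mul_nonneg (mul_nonneg (by linarith : (0:ℤ) ≤ A) (by linarith : (0:ℤ) ≤ C)) (by linarith : (0:ℤ) ≤ B - 2*D),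
    mul_nonneg (mul_nonneg (by linarith : (0:ℤ) ≤ C) (by linarith : (0:ℤ) ≤ D)) (by linarith : (0:ℤ) ≤ A - 1)]


-- f(m) + f(n) > 0 when m = n/p, composite n
lemma aux_key (n m k l : ℕ) (hm : 2 ≤ m) (hmn : 2 * m ≤ n) (hk : 1 ≤ k) (hkl : k < l) :
    0 < (((n : ℤ) ^ l + 1) * (m : ℤ) ^ k - ((n : ℤ) ^ k + 1) * (m : ℤ) ^ l)
      + (((n : ℤ) ^ l + 1) * (n : ℤ) ^ k - ((n : ℤ) ^ k + 1) * (n : ℤ) ^ l) := by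
  by_cases hcase : m = 2 ∧ k = 1
  · obtain ⟨hm2, hk1⟩ := hcase
    subst hm2; subst hk1
    -- goal: 0 < (n^l+1)*2 - (n+1)*2^l + (n^l+1)*n - (n+1)*n^l
    have hn4 : (4 : ℤ) ≤ (n : ℤ) := by exact_mod_cast hmn
    obtain ⟨t, ht⟩ : ∃ t, l = t + 2 := ⟨l - 2, by omega⟩
    subst ht
    set x : ℤ := 2 ^ t with hx
    have hx1 : (1 : ℤ) ≤ x := one_le_pow₀ (by norm_num)
    have h2l : (2 : ℤ) ^ (t + 2) = 4 * x := by rw [pow_add]; ring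
    have hnl : 4 * (n : ℤ) * x ^ 2 ≤ (n : ℤ) ^ (t + 2) := by
      have h1 : (4 : ℤ) ^ (t + 1) ≤ (n : ℤ) ^ (t + 1) :=
        pow_le_pow_left₀ (by norm_num) hn4 (t + 1)
      have h2 : (4 : ℤ) ^ (t + 1) = 4 * x ^ 2 := by
        rw [hx, ← pow_mul, show (4:ℤ) = 2^2 by norm_num, ← pow_mul]
        rw [← pow_add]; congr 1; omega
      have h3 : (n : ℤ) ^ (t + 2) = (n : ℤ) * (n : ℤ) ^ (t + 1) := by ring
      nlinarith [pow_pos (show (0:ℤ) < (n:ℤ) by linarith) (t+1)]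
    push_cast
    rw [h2l]
    nlinarith [mul_nonneg (mul_nonneg (by linarith : (0:ℤ) ≤ (n:ℤ) - 4) (by linarith : (0:ℤ) ≤ x)) (by linarith : (0:ℤ) ≤ x - 1),
      sq_nonneg (x - 1), mul_nonneg (by linarith : (0:ℤ) ≤ x) (by linarith : (0:ℤ) ≤ x - 1)]
  · -- then m^k ≥ 3
    have hc3 : 3 ≤ m ^ k := by
      rcases Nat.lt_or_ge m 3 with h | h
      · have hm2 : m = 2 := by omega
        have hk2 : 2 ≤ k := by
          rcases Nat.lt_or_ge k 2 with h' | h'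
          · exact absurd ⟨hm2, by omega⟩ hcase
          · exact h'
        calc 3 ≤ 2 ^ 2 := by norm_num
        _ ≤ 2 ^ k := Nat.pow_le_pow_right (by norm_num) hk2
        _ = m ^ k := by rw [hm2]
      · calc 3 ≤ m := h
        _ ≤ m ^ k := Nat.le_self_pow (by omega) m
    obtain ⟨t, ht⟩ : ∃ t, l = k + t := ⟨l - k, by omega⟩
    have ht1 : 1 ≤ t := by omega
    subst ht
    set a : ℤ := (n : ℤ) ^ k with ha
    set b : ℤ := (n : ℤ) ^ t with hb
    set c : ℤ := (m : ℤ) ^ k with hc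
    set d : ℤ := (m : ℤ) ^ t with hd
    have hmZ : (2 : ℤ) ≤ (m : ℤ) := by exact_mod_cast hm
    have hnZ : (2 : ℤ) * m ≤ (n : ℤ) := by exact_mod_cast hmn
    have hcZ : (3 : ℤ) ≤ c := by rw [hc]; exact_mod_cast hc3
    have hdZ : (2 : ℤ) ≤ d := by
      rw [hd]
      calc (2:ℤ) ≤ (m:ℤ) := hmZ
      _ ≤ (m:ℤ) ^ t := le_self_pow₀ (by linarith) (by omega)
    have hac : 2 * c ≤ a := by
      have h1 : ((2:ℤ) * m) ^ k ≤ (n : ℤ) ^ k := pow_le_pow_left₀ (by positivity) hnZ k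
      have h2 : (2:ℤ) * c ≤ ((2:ℤ) * m) ^ k := by
        rw [mul_pow, hc]
        have : (2:ℤ) ≤ 2 ^ k := le_self_pow₀ (by norm_num) (by omega)
        nlinarith [pow_pos (show (0:ℤ) < (m:ℤ) by linarith) k]
      linarith
    have hbd : 2 * d ≤ b := by
      have h1 : ((2:ℤ) * m) ^ t ≤ (n : ℤ) ^ t := pow_le_pow_left₀ (by positivity) hnZ t
      have h2 : (2:ℤ) * d ≤ ((2:ℤ) * m) ^ t := by
        rw [mul_pow, hd]
        have : (2:ℤ) ≤ 2 ^ t := le_self_pow₀ (by norm_num) (by omega)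
        nlinarith [pow_pos (show (0:ℤ) < (m:ℤ) by linarith) t]
      linarith
    have key : (((n:ℤ)^(k+t) + 1) * (m:ℤ)^k - ((n:ℤ)^k + 1) * (m:ℤ)^(k+t))
        + (((n:ℤ)^(k+t) + 1) * (n:ℤ)^k - ((n:ℤ)^k + 1) * (n:ℤ)^(k+t))
        = (a*b*c + c + a) - (a*c*d + c*d + a*b) := by
      rw [pow_add, pow_add]; ring
    rw [key]
    -- a(c−1)(b−2d) ≥ 0 ; then ad(c−2) + c + a − cd > 0 using a ≥ 2c, c ≥ 3
    nlinarith [mul_nonneg (mul_nonneg (by linarith : (0:ℤ) ≤ a) (by linarith : (0:ℤ) ≤ c - 1)) (by linarith : (0:ℤ) ≤ b - 2*d),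
      mul_nonneg (mul_nonneg (by linarith : (0:ℤ) ≤ d) (by linarith : (0:ℤ) ≤ a - 2*c)) (by linarith : (0:ℤ) ≤ c - 2),
      mul_nonneg (mul_nonneg (by linarith : (0:ℤ) ≤ d) (by linarith : (0:ℤ) ≤ c)) (by linarith : (0:ℤ) ≤ 2*c - 5)]


section helpers
variable {N k l n : ℕ}

-- divisor helper: proper divisor satisfies 2d ≤ n
lemma aux_proper {n d : ℕ} (hn : n ≠ 0) (hd : d ∣ n) (hne : d ≠ n) : 1 ≤ d ∧ 2 * d ≤ n := by
  obtain ⟨e, he⟩ := hd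
  have he0 : e ≠ 0 := by rintro rfl; simp at he; exact hn he
  have he1 : e ≠ 1 := by rintro rfl; simp at he; exact hne he.symm
  have hd0 : d ≠ 0 := by rintro rfl; simp at he; exact hn he
  constructor
  · omega
  · have : 2 ≤ e := by omega
    calc 2 * d ≤ e * d := Nat.mul_le_mul_right d this
    _ = n := by rw [he, Nat.mul_comm]

end helpers

theorem lelievre_criteria (N : ℕ) (hN : 0 < N) (k l : ℕ) (hk : 0 < k) (hkl : k < l)
    (n : ℕ) (hn : 2 ≤ n) :
    (n.Prime → ¬ n ∣ N →
      ∑ d ∈ n.divisors.filter (fun d => Nat.gcd (n / d) N = 1),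
        (((n : ℤ) ^ l + 1) * (d : ℤ) ^ k - ((n : ℤ) ^ k + 1) * (d : ℤ) ^ l) = 0) ∧
    ((∀ p : ℕ, p.Prime → p ∣ n → p ∣ N) →
      ∑ d ∈ n.divisors.filter (fun d => Nat.gcd (n / d) N = 1),
        (((n : ℤ) ^ l + 1) * (d : ℤ) ^ k - ((n : ℤ) ^ k + 1) * (d : ℤ) ^ l) < 0) ∧
    (¬(n.Prime ∧ ¬ n ∣ N) → ¬(∀ p : ℕ, p.Prime → p ∣ n → p ∣ N) →
      0 < ∑ d ∈ n.divisors.filter (fun d => Nat.gcd (n / d) N = 1),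
        (((n : ℤ) ^ l + 1) * (d : ℤ) ^ k - ((n : ℤ) ^ k + 1) * (d : ℤ) ^ l)) := by
  have hn0 : n ≠ 0 := by omega
  have hnk_lt : (n : ℤ) ^ k < (n : ℤ) ^ l := by
    have : (1 : ℤ) < (n : ℤ) := by exact_mod_cast hn
    exact pow_lt_pow_right₀ this hkl
  set f : ℕ → ℤ := fun d => ((n : ℤ) ^ l + 1) * (d : ℤ) ^ k - ((n : ℤ) ^ k + 1) * (d : ℤ) ^ l with hf
  have hfn : f n = (n : ℤ) ^ k - (n : ℤ) ^ l := by simp only [hf]; ring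
  have hnmem : n ∈ n.divisors.filter (fun d => Nat.gcd (n / d) N = 1) := by
    rw [Finset.mem_filter, Nat.mem_divisors]
    refine ⟨⟨dvd_refl n, hn0⟩, ?_⟩
    rw [Nat.div_self (by omega : 0 < n), Nat.gcd_one_left]
  refine ⟨?_, ?_, ?_⟩
  · -- Case 1 : prime, not dividing N
    intro hp hdvd
    have hdiv : n.divisors = {1, n} := Nat.Prime.divisors hp
    have hfilt : n.divisors.filter (fun d => Nat.gcd (n / d) N = 1) = {1, n} := by
      rw [hdiv]
      apply Finset.filter_true_of_mem
      intro d hd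
      simp only [Finset.mem_insert, Finset.mem_singleton] at hd
      rcases hd with rfl | h
      · rw [Nat.div_one]
        exact (Nat.Prime.coprime_iff_not_dvd hp).mpr hdvd
      · rw [h, Nat.div_self (by omega : 0 < n), Nat.gcd_one_left]
    rw [hfilt, Finset.sum_insert (by simp; omega), Finset.sum_singleton]
    push_cast
    ring
  · -- Case 2 : all prime factors divide N
    intro hall
    have hfilt : n.divisors.filter (fun d => Nat.gcd (n / d) N = 1) = {n} := by
      apply Finset.eq_singleton_iff_unique_mem.mpr
      refine ⟨hnmem, ?_⟩
      intro d hd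
      rw [Finset.mem_filter, Nat.mem_divisors] at hd
      obtain ⟨⟨hdvd, _⟩, hgcd⟩ := hd
      by_contra hne
      obtain ⟨h1, h2⟩ := aux_proper hn0 hdvd hne
      have hq : 2 ≤ n / d := by
        obtain ⟨e, he⟩ := hdvd
        have he0 : e ≠ 0 := by rintro rfl; simp at he; exact hn0 he
        have he1 : e ≠ 1 := by rintro rfl; simp at he; exact hne he.symm
        have : n / d = e := by rw [he]; exact Nat.mul_div_cancel_left e (by omega)
        omega
      set p := (n / d).minFac with hp
      have hpp : p.Prime := Nat.minFac_prime (by omega)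
      have hpd : p ∣ n / d := Nat.minFac_dvd _
      have hpn : p ∣ n := hpd.trans (Nat.div_dvd_of_dvd hdvd)
      have hpN : p ∣ N := hall p hpp hpn
      have : p ∣ Nat.gcd (n / d) N := Nat.dvd_gcd hpd hpN
      rw [hgcd] at this
      exact Nat.Prime.one_lt hpp |>.ne' (Nat.eq_one_of_dvd_one this ▸ rfl) |>.elim
    rw [hfilt, Finset.sum_singleton]
    show f n < 0
    rw [hfn]; linarith
  · -- Case 3
    intro h1 h2
    push_neg at h2
    obtain ⟨p, hpp, hpn, hpN⟩ := h2
    have hnp : ¬ n.Prime := by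
      intro hprime
      have hnN : n ∣ N := by
        by_contra hc
        exact h1 ⟨hprime, hc⟩
      have : p = n := (Nat.prime_dvd_prime_iff_eq hpp hprime).mp hpn
      exact hpN (this ▸ hnN)
    set m := n / p with hm
    have hmdvd : m ∣ n := Nat.div_dvd_of_dvd hpn
    have hmp : n / m = p := Nat.div_div_self hpn hn0
    have hmn : m * p = n := Nat.div_mul_cancel hpn
    have hm2 : 2 ≤ m := by
      rcases Nat.lt_or_ge m 2 with h | h
      · interval_cases m
        · omega
        · simp at hmn; exact absurd (hmn ▸ hpp) hnp
      · exact h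
    have hmne : m ≠ n := by
      intro h
      have : p = 1 := by
        have := hmn
        rw [h] at this
        nlinarith [hn]
      exact hpp.one_lt.ne' this
    have h2m : 2 * m ≤ n := by
      have := hpp.two_le
      calc 2 * m ≤ p * m := Nat.mul_le_mul_right m this
      _ = n := by rw [Nat.mul_comm]; exact hmn
    have hmmem : m ∈ n.divisors.filter (fun d => Nat.gcd (n / d) N = 1) := by
      rw [Finset.mem_filter, Nat.mem_divisors]
      exact ⟨⟨hmdvd, hn0⟩, by rw [hmp]; exact (Nat.Prime.coprime_iff_not_dvd hpp).mpr hpN⟩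
    set S := n.divisors.filter (fun d => Nat.gcd (n / d) N = 1) with hS
    have hmem' : m ∈ S.erase n := Finset.mem_erase.mpr ⟨hmne, hmmem⟩
    have step1 : ∑ d ∈ S, f d = (∑ d ∈ S.erase n, f d) + f n :=
      (Finset.sum_erase_add S f hnmem).symm
    have step2 : ∑ d ∈ S.erase n, f d = (∑ d ∈ (S.erase n).erase m, f d) + f m :=
      (Finset.sum_erase_add _ f hmem').symm
    have hrest : 0 ≤ ∑ d ∈ (S.erase n).erase m, f d := by
      apply Finset.sum_nonneg
      intro d hd
      have hd1 := Finset.mem_of_mem_erase hd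
      have hdne : d ≠ n := (Finset.mem_erase.mp hd1).1
      have hd2 := Finset.mem_of_mem_erase hd1
      rw [hS, Finset.mem_filter, Nat.mem_divisors] at hd2
      obtain ⟨h1d, h2d⟩ := aux_proper hn0 hd2.1.1 hdne
      exact le_of_lt (aux_pos n d k l h1d h2d hk hkl)
    have hpair : 0 < f m + f n := aux_key n m k l hm2 h2m hk hkl
    show 0 < ∑ d ∈ S, f d
    rw [step1, step2]
    linarith
end

section
/- For every positive integer n, 24·M₂⁽²⁾(n) = σ₃⁽²⁾(n) − (3n − 2)·σ₁⁽²⁾(n). -/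
open Finset

/-- The finite set of admissible tuples `((m₁,d₁),…,(m_k,d_k))` with
`0 < m₁ < ⋯ < m_k`, `d_i > 0`, and `n = m₁d₁ + ⋯ + m_k d_k`. -/
def macTuples (k n : ℕ) : Finset (Fin k → ℕ × ℕ) :=
  (Fintype.piFinset fun _ => Finset.range (n + 1) ×ˢ Finset.range (n + 1)).filter
    fun f => (∀ i, 0 < (f i).1 ∧ 0 < (f i).2) ∧
      (∀ i j : Fin k, i < j → (f i).1 < (f j).1) ∧
      (∑ i, (f i).1 * (f i).2) = n

/-- The level 2 MacMahon partition function `M_k^{(2)}(n)`: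
the sum of `d₁⋯d_k` over tuples with all `m_i` odd. -/
def M2 (k n : ℕ) : ℕ :=
  ∑ f ∈ (macTuples k n).filter (fun f => ∀ i, Odd (f i).1), ∏ i, (f i).2

/-- The level 2 divisor sum `σ_k^{(2)}(n) = ∑_{d ∣ n, n/d odd} d^k`. -/
def sigma2 (k n : ℕ) : ℕ :=
  ∑ d ∈ n.divisors.filter (fun d => Odd (n / d)), d ^ k

def Om (n : ℕ) : Finset (ℕ × ℕ × ℕ × ℕ) :=
  ((Finset.range (n+1)) ×ˢ (Finset.range (n+1)) ×ˢ (Finset.range (n+1)) ×ˢ (Finset.range (n+1))).filter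
    (fun q => 0 < q.1 ∧ 0 < q.2.1 ∧ 0 < q.2.2.1 ∧ 0 < q.2.2.2 ∧
      q.1 * q.2.2.1 + q.2.1 * q.2.2.2 = n)

lemma mem_Om {n : ℕ} {q : ℕ × ℕ × ℕ × ℕ} :
    q ∈ Om n ↔ 0 < q.1 ∧ 0 < q.2.1 ∧ 0 < q.2.2.1 ∧ 0 < q.2.2.2 ∧
      q.1 * q.2.2.1 + q.2.1 * q.2.2.2 = n := by
  obtain ⟨a, b, x, y⟩ := q
  simp only [Om, Finset.mem_filter, Finset.mem_product, Finset.mem_range]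
  constructor
  · rintro ⟨-, h⟩; exact h
  · rintro ⟨ha, hb, hx, hy, h⟩
    refine ⟨⟨?_, ?_, ?_, ?_⟩, ha, hb, hx, hy, h⟩ <;> simp only [Nat.lt_succ_iff]
    · calc a = a * 1 := (mul_one a).symm
        _ ≤ a * x := Nat.mul_le_mul_left a hx
        _ ≤ n := h ▸ Nat.le_add_right _ _
    · calc b = b * 1 := (mul_one b).symm
        _ ≤ b * y := Nat.mul_le_mul_left b hy
        _ ≤ n := h ▸ Nat.le_add_left _ _
    · calc x = 1 * x := (one_mul x).symm
        _ ≤ a * x := Nat.mul_le_mul_right x ha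
        _ ≤ n := h ▸ Nat.le_add_right _ _
    · calc y = 1 * y := (one_mul y).symm
        _ ≤ b * y := Nat.mul_le_mul_right y hb
        _ ≤ n := h ▸ Nat.le_add_left _ _

/-- L1: φ-transfer, odd-odd side to odd-even side. -/
lemma L1 (n : ℕ) :
    ∑ q ∈ (Om n).filter (fun q => (Odd q.1 ∧ Odd q.2.1) ∧ q.2.2.2 < q.2.2.1),
        ((q.2.2.1 : ℤ) - q.2.2.2) ^ 2
      = ∑ q ∈ (Om n).filter (fun q => (Odd q.1 ∧ Even q.2.1) ∧ q.1 < q.2.1),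
        (q.2.2.1 : ℤ) ^ 2 := by
  apply Finset.sum_nbij' (i := fun q => (q.1, q.1 + q.2.1, q.2.2.1 - q.2.2.2, q.2.2.2))
    (j := fun q => (q.1, q.2.1 - q.1, q.2.2.1 + q.2.2.2, q.2.2.2))
  · rintro ⟨a, b, x, y⟩ hq
    simp only [Finset.mem_filter, mem_Om] at hq ⊢
    obtain ⟨⟨ha, hb, hx, hy, h⟩, ⟨hoa, hob⟩, hyx⟩ := hq
    rw [Nat.odd_iff] at hoa hob
    have h' : (a : ℤ) * x + b * y = n := by exact_mod_cast h
    refine ⟨⟨ha, by omega, by omega, hy, ?_⟩, ⟨by rw [Nat.odd_iff]; omega, by rw [Nat.even_iff]; omega⟩, by omega⟩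
    zify [hyx.le]
    linear_combination h'
  · rintro ⟨a, b, x, y⟩ hq
    simp only [Finset.mem_filter, mem_Om] at hq ⊢
    obtain ⟨⟨ha, hb, hx, hy, h⟩, ⟨hoa, heb⟩, hab⟩ := hq
    rw [Nat.odd_iff] at hoa; rw [Nat.even_iff] at heb
    have h' : (a : ℤ) * x + b * y = n := by exact_mod_cast h
    refine ⟨⟨ha, by omega, by omega, hy, ?_⟩, ⟨by rw [Nat.odd_iff]; omega, by rw [Nat.odd_iff]; omega⟩, by omega⟩
    zify [hab.le]
    linear_combination h'
  · rintro ⟨a, b, x, y⟩ hq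
    simp only [Finset.mem_filter, mem_Om] at hq
    obtain ⟨⟨ha, hb, hx, hy, h⟩, -, hlt⟩ := hq
    simp only [Prod.mk.injEq]
    exact ⟨trivial, by omega, by omega, trivial⟩
  · rintro ⟨a, b, x, y⟩ hq
    simp only [Finset.mem_filter, mem_Om] at hq
    obtain ⟨⟨ha, hb, hx, hy, h⟩, -, hlt⟩ := hq
    simp only [Prod.mk.injEq]
    exact ⟨trivial, by omega, by omega, trivial⟩
  · rintro ⟨a, b, x, y⟩ hq
    simp only [Finset.mem_filter, mem_Om] at hq
    obtain ⟨-, -, hyx⟩ := hq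
    rw [Nat.cast_sub hyx.le]

/-- L2: φ-transfer, odd-even side to odd-odd side. -/
lemma L2 (n : ℕ) :
    ∑ q ∈ (Om n).filter (fun q => (Odd q.1 ∧ Even q.2.1) ∧ q.2.2.2 < q.2.2.1),
        (q.2.2.1 : ℤ) ^ 2
      = ∑ q ∈ (Om n).filter (fun q => (Odd q.1 ∧ Odd q.2.1) ∧ q.1 < q.2.1),
        ((q.2.2.1 : ℤ) + q.2.2.2) ^ 2 := by
  apply Finset.sum_nbij' (i := fun q => (q.1, q.1 + q.2.1, q.2.2.1 - q.2.2.2, q.2.2.2))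
    (j := fun q => (q.1, q.2.1 - q.1, q.2.2.1 + q.2.2.2, q.2.2.2))
  · rintro ⟨a, b, x, y⟩ hq
    simp only [Finset.mem_filter, mem_Om] at hq ⊢
    obtain ⟨⟨ha, hb, hx, hy, h⟩, ⟨hoa, heb⟩, hyx⟩ := hq
    rw [Nat.odd_iff] at hoa; rw [Nat.even_iff] at heb
    have h' : (a : ℤ) * x + b * y = n := by exact_mod_cast h
    refine ⟨⟨ha, by omega, by omega, hy, ?_⟩, ⟨by rw [Nat.odd_iff]; omega, by rw [Nat.odd_iff]; omega⟩, by omega⟩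
    zify [hyx.le]
    linear_combination h'
  · rintro ⟨a, b, x, y⟩ hq
    simp only [Finset.mem_filter, mem_Om] at hq ⊢
    obtain ⟨⟨ha, hb, hx, hy, h⟩, ⟨hoa, hob⟩, hab⟩ := hq
    rw [Nat.odd_iff] at hoa hob
    have h' : (a : ℤ) * x + b * y = n := by exact_mod_cast h
    refine ⟨⟨ha, by omega, by omega, hy, ?_⟩, ⟨by rw [Nat.odd_iff]; omega, by rw [Nat.even_iff]; omega⟩, by omega⟩
    zify [hab.le]
    linear_combination h'
  · rintro ⟨a, b, x, y⟩ hq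
    simp only [Finset.mem_filter, mem_Om] at hq
    obtain ⟨⟨ha, hb, hx, hy, h⟩, -, hlt⟩ := hq
    simp only [Prod.mk.injEq]
    exact ⟨trivial, by omega, by omega, trivial⟩
  · rintro ⟨a, b, x, y⟩ hq
    simp only [Finset.mem_filter, mem_Om] at hq
    obtain ⟨⟨ha, hb, hx, hy, h⟩, -, hlt⟩ := hq
    simp only [Prod.mk.injEq]
    exact ⟨trivial, by omega, by omega, trivial⟩
  · rintro ⟨a, b, x, y⟩ hq
    simp only [Finset.mem_filter, mem_Om] at hq
    obtain ⟨-, -, hyx⟩ := hq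
    rw [Nat.cast_sub hyx.le]
    ring

/-- L3: ρ-transfer on the odd-even class. -/
lemma L3 (n : ℕ) :
    ∑ q ∈ (Om n).filter (fun q => (Odd q.1 ∧ Even q.2.1) ∧ q.2.1 < q.1),
        (q.2.2.1 : ℤ) ^ 2
      = ∑ q ∈ (Om n).filter (fun q => (Odd q.1 ∧ Even q.2.1) ∧ q.2.2.1 < q.2.2.2),
        (q.2.2.1 : ℤ) ^ 2 := by
  apply Finset.sum_nbij' (i := fun q => (q.1 - q.2.1, q.2.1, q.2.2.1, q.2.2.1 + q.2.2.2))
    (j := fun q => (q.1 + q.2.1, q.2.1, q.2.2.1, q.2.2.2 - q.2.2.1))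
  · rintro ⟨a, b, x, y⟩ hq
    simp only [Finset.mem_filter, mem_Om] at hq ⊢
    obtain ⟨⟨ha, hb, hx, hy, h⟩, ⟨hoa, heb⟩, hba⟩ := hq
    rw [Nat.odd_iff] at hoa; rw [Nat.even_iff] at heb
    have h' : (a : ℤ) * x + b * y = n := by exact_mod_cast h
    refine ⟨⟨by omega, hb, hx, by omega, ?_⟩, ⟨by rw [Nat.odd_iff]; omega, by rw [Nat.even_iff]; omega⟩, by omega⟩
    zify [hba.le]
    linear_combination h'
  · rintro ⟨a, b, x, y⟩ hq
    simp only [Finset.mem_filter, mem_Om] at hq ⊢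
    obtain ⟨⟨ha, hb, hx, hy, h⟩, ⟨hoa, heb⟩, hxy⟩ := hq
    rw [Nat.odd_iff] at hoa; rw [Nat.even_iff] at heb
    have h' : (a : ℤ) * x + b * y = n := by exact_mod_cast h
    refine ⟨⟨by omega, hb, hx, by omega, ?_⟩, ⟨by rw [Nat.odd_iff]; omega, by rw [Nat.even_iff]; omega⟩, by omega⟩
    zify [hxy.le]
    linear_combination h'
  · rintro ⟨a, b, x, y⟩ hq
    simp only [Finset.mem_filter, mem_Om] at hq
    obtain ⟨⟨ha, hb, hx, hy, h⟩, -, hlt⟩ := hq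
    simp only [Prod.mk.injEq]
    exact ⟨by omega, trivial, trivial, by omega⟩
  · rintro ⟨a, b, x, y⟩ hq
    simp only [Finset.mem_filter, mem_Om] at hq
    obtain ⟨⟨ha, hb, hx, hy, h⟩, -, hlt⟩ := hq
    simp only [Prod.mk.injEq]
    exact ⟨by omega, trivial, trivial, by omega⟩
  · rintro ⟨a, b, x, y⟩ hq
    rfl

/-- Swap symmetry, weight (x-y)^2, odd-odd. -/
lemma L4 (n : ℕ) :
    ∑ q ∈ (Om n).filter (fun q => (Odd q.1 ∧ Odd q.2.1) ∧ q.2.2.1 < q.2.2.2),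
        ((q.2.2.1 : ℤ) - q.2.2.2) ^ 2
      = ∑ q ∈ (Om n).filter (fun q => (Odd q.1 ∧ Odd q.2.1) ∧ q.2.2.2 < q.2.2.1),
        ((q.2.2.1 : ℤ) - q.2.2.2) ^ 2 := by
  apply Finset.sum_nbij' (i := fun q => (q.2.1, q.1, q.2.2.2, q.2.2.1))
    (j := fun q => (q.2.1, q.1, q.2.2.2, q.2.2.1))
  · rintro ⟨a, b, x, y⟩ hq
    simp only [Finset.mem_filter, mem_Om] at hq ⊢
    obtain ⟨⟨ha, hb, hx, hy, h⟩, ⟨hoa, hob⟩, hlt⟩ := hq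
    exact ⟨⟨hb, ha, hy, hx, by omega⟩, ⟨hob, hoa⟩, hlt⟩
  · rintro ⟨a, b, x, y⟩ hq
    simp only [Finset.mem_filter, mem_Om] at hq ⊢
    obtain ⟨⟨ha, hb, hx, hy, h⟩, ⟨hoa, hob⟩, hlt⟩ := hq
    exact ⟨⟨hb, ha, hy, hx, by omega⟩, ⟨hob, hoa⟩, hlt⟩
  · rintro ⟨a, b, x, y⟩ _; rfl
  · rintro ⟨a, b, x, y⟩ _; rfl
  · rintro ⟨a, b, x, y⟩ _; ring

/-- Swap symmetry, weight (x+y)^2, odd-odd. -/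
lemma L5 (n : ℕ) :
    ∑ q ∈ (Om n).filter (fun q => (Odd q.1 ∧ Odd q.2.1) ∧ q.2.1 < q.1),
        ((q.2.2.1 : ℤ) + q.2.2.2) ^ 2
      = ∑ q ∈ (Om n).filter (fun q => (Odd q.1 ∧ Odd q.2.1) ∧ q.1 < q.2.1),
        ((q.2.2.1 : ℤ) + q.2.2.2) ^ 2 := by
  apply Finset.sum_nbij' (i := fun q => (q.2.1, q.1, q.2.2.2, q.2.2.1))
    (j := fun q => (q.2.1, q.1, q.2.2.2, q.2.2.1))
  · rintro ⟨a, b, x, y⟩ hq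
    simp only [Finset.mem_filter, mem_Om] at hq ⊢
    obtain ⟨⟨ha, hb, hx, hy, h⟩, ⟨hoa, hob⟩, hlt⟩ := hq
    exact ⟨⟨hb, ha, hy, hx, by omega⟩, ⟨hob, hoa⟩, hlt⟩
  · rintro ⟨a, b, x, y⟩ hq
    simp only [Finset.mem_filter, mem_Om] at hq ⊢
    obtain ⟨⟨ha, hb, hx, hy, h⟩, ⟨hoa, hob⟩, hlt⟩ := hq
    exact ⟨⟨hb, ha, hy, hx, by omega⟩, ⟨hob, hoa⟩, hlt⟩
  · rintro ⟨a, b, x, y⟩ _; rfl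
  · rintro ⟨a, b, x, y⟩ _; rfl
  · rintro ⟨a, b, x, y⟩ _; ring

/-- Swap symmetry, weight x*y, odd-odd. -/
lemma L6 (n : ℕ) :
    ∑ q ∈ (Om n).filter (fun q => (Odd q.1 ∧ Odd q.2.1) ∧ q.2.1 < q.1),
        (q.2.2.1 : ℤ) * q.2.2.2
      = ∑ q ∈ (Om n).filter (fun q => (Odd q.1 ∧ Odd q.2.1) ∧ q.1 < q.2.1),
        (q.2.2.1 : ℤ) * q.2.2.2 := by
  apply Finset.sum_nbij' (i := fun q => (q.2.1, q.1, q.2.2.2, q.2.2.1))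
    (j := fun q => (q.2.1, q.1, q.2.2.2, q.2.2.1))
  · rintro ⟨a, b, x, y⟩ hq
    simp only [Finset.mem_filter, mem_Om] at hq ⊢
    obtain ⟨⟨ha, hb, hx, hy, h⟩, ⟨hoa, hob⟩, hlt⟩ := hq
    exact ⟨⟨hb, ha, hy, hx, by omega⟩, ⟨hob, hoa⟩, hlt⟩
  · rintro ⟨a, b, x, y⟩ hq
    simp only [Finset.mem_filter, mem_Om] at hq ⊢
    obtain ⟨⟨ha, hb, hx, hy, h⟩, ⟨hoa, hob⟩, hlt⟩ := hq
    exact ⟨⟨hb, ha, hy, hx, by omega⟩, ⟨hob, hoa⟩, hlt⟩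
  · rintro ⟨a, b, x, y⟩ _; rfl
  · rintro ⟨a, b, x, y⟩ _; rfl
  · rintro ⟨a, b, x, y⟩ _; ring

lemma sum_split3 {α : Type*} (S : Finset α) (w : α → ℤ) (f g : α → ℕ) :
    ∑ q ∈ S, w q
      = ∑ q ∈ S.filter (fun q => f q < g q), w q
      + ∑ q ∈ S.filter (fun q => f q = g q), w q
      + ∑ q ∈ S.filter (fun q => g q < f q), w q := by
  classical
  rw [← Finset.sum_filter_add_sum_filter_not S (fun q => f q < g q) w]
  have h1 : S.filter (fun q => ¬ f q < g q)
      = S.filter (fun q => f q = g q) ∪ S.filter (fun q => g q < f q) := by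
    ext q
    simp only [Finset.mem_filter, Finset.mem_union]
    constructor
    · rintro ⟨hS, h⟩
      by_cases he : f q = g q
      · exact Or.inl ⟨hS, he⟩
      · exact Or.inr ⟨hS, by omega⟩
    · rintro (⟨hS, h⟩ | ⟨hS, h⟩) <;> exact ⟨hS, by omega⟩
  have hdis : Disjoint (S.filter (fun q => f q = g q)) (S.filter (fun q => g q < f q)) := by
    rw [Finset.disjoint_left]
    intro q hq1 hq2
    simp only [Finset.mem_filter] at hq1 hq2
    omega
  rw [h1, Finset.sum_union hdis, add_assoc]

lemma Zxy (n : ℕ) :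
    ∑ q ∈ (Om n).filter (fun q => (Odd q.1 ∧ Odd q.2.1) ∧ q.2.2.1 = q.2.2.2),
      ((q.2.2.1 : ℤ) - q.2.2.2) ^ 2 = 0 := by
  apply Finset.sum_eq_zero
  rintro ⟨a, b, x, y⟩ hq
  simp only [Finset.mem_filter] at hq
  obtain ⟨-, -, h⟩ := hq
  subst h
  ring

lemma Zab (n : ℕ) (w : ℕ × ℕ × ℕ × ℕ → ℤ) :
    ∑ q ∈ (Om n).filter (fun q => (Odd q.1 ∧ Even q.2.1) ∧ q.1 = q.2.1), w q = 0 := by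
  apply Finset.sum_eq_zero
  rintro ⟨a, b, x, y⟩ hq
  simp only [Finset.mem_filter] at hq
  obtain ⟨-, ⟨hoa, heb⟩, h⟩ := hq
  rw [Nat.odd_iff] at hoa
  rw [Nat.even_iff] at heb
  omega

def Dfin (n : ℕ) : Finset (ℕ × ℕ) := (Nat.divisorsAntidiagonal n).filter (fun p => Odd p.1)

lemma mem_Dfin {n : ℕ} {p : ℕ × ℕ} :
    p ∈ Dfin n ↔ p.1 * p.2 = n ∧ n ≠ 0 ∧ Odd p.1 := by
  simp only [Dfin, Finset.mem_filter, Nat.mem_divisorsAntidiagonal]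
  tauto

lemma G1 (m : ℕ) : 2 * ∑ x ∈ Finset.range m, (x : ℤ) = (m : ℤ) ^ 2 - m := by
  induction m with
  | zero => simp
  | succ k ih =>
    rw [Finset.sum_range_succ]
    push_cast
    linear_combination ih

lemma G2 (m : ℕ) : 6 * ∑ x ∈ Finset.range m, (x : ℤ) ^ 2
    = 2 * (m : ℤ) ^ 3 - 3 * (m : ℤ) ^ 2 + m := by
  induction m with
  | zero => simp
  | succ k ih =>
    rw [Finset.sum_range_succ]
    push_cast
    linear_combination ih

lemma sum6 (t : ℕ) :
    6 * ∑ x ∈ Finset.Ico 1 t, (x : ℤ) * ((t : ℤ) - x) = (t : ℤ) ^ 3 - t := by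
  have hsub : ∑ x ∈ Finset.Ico 1 t, (x : ℤ) * ((t : ℤ) - x)
      = ∑ x ∈ Finset.range t, (x : ℤ) * ((t : ℤ) - x) := by
    apply Finset.sum_subset
    · intro x hx
      simp only [Finset.mem_Ico] at hx
      simp only [Finset.mem_range]
      omega
    · intro x hx hnx
      simp only [Finset.mem_range] at hx
      simp only [Finset.mem_Ico] at hnx
      have : x = 0 := by omega
      subst this
      ring
  have e1 : ∑ x ∈ Finset.range t, (x : ℤ) * ((t : ℤ) - x)
      = (t : ℤ) * (∑ x ∈ Finset.range t, (x : ℤ)) - ∑ x ∈ Finset.range t, (x : ℤ) ^ 2 := by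
    rw [Finset.mul_sum, ← Finset.sum_sub_distrib]
    apply Finset.sum_congr rfl
    intros
    ring
  rw [hsub, e1]
  linear_combination 3 * (t : ℤ) * G1 t - G2 t

lemma card_odd_range (m : ℕ) :
    ((Finset.range m).filter (fun a => Odd a)).card = m / 2 := by
  induction m with
  | zero => simp
  | succ k ih =>
    rw [Finset.range_add_one, Finset.filter_insert]
    by_cases hk : Odd k
    · rw [if_pos hk, Finset.card_insert_of_notMem (by simp), ih]
      rw [Nat.odd_iff] at hk
      omega
    · rw [if_neg hk, ih]
      rw [Nat.odd_iff] at hk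
      omega

lemma diag_reindex (w1 : ℕ × ℕ × ℕ × ℕ → ℤ) (w2 : (_ : ℕ × ℕ) × ℕ → ℤ)
    (hw : ∀ a x y : ℕ, w1 (a, a, x, y) = w2 ⟨(a, x + y), x⟩) (n : ℕ) :
    ∑ q ∈ (Om n).filter (fun q => (Odd q.1 ∧ Odd q.2.1) ∧ q.1 = q.2.1), w1 q
      = ∑ r ∈ (Dfin n).sigma (fun p => Finset.Ico 1 p.2), w2 r := by
  apply Finset.sum_nbij' (i := fun q => ⟨(q.1, q.2.2.1 + q.2.2.2), q.2.2.1⟩)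
    (j := fun r => (r.1.1, r.1.1, r.2, r.1.2 - r.2))
  · rintro ⟨a, b, x, y⟩ hq
    simp only [Finset.mem_filter, mem_Om] at hq
    obtain ⟨⟨ha, hb, hx, hy, h⟩, ⟨hoa, hob⟩, hab⟩ := hq
    subst hab
    simp only [Finset.mem_sigma, mem_Dfin, Finset.mem_Ico]
    have hax : 0 < a * x := Nat.mul_pos ha hx
    refine ⟨⟨by rw [Nat.mul_add]; exact h, by omega, hoa⟩, by omega, by omega⟩
  · rintro ⟨⟨s, t⟩, x⟩ hr
    simp only [Finset.mem_sigma, mem_Dfin, Finset.mem_Ico] at hr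
    obtain ⟨⟨hst, hn0, hos⟩, hx1, hxt⟩ := hr
    simp only [Finset.mem_filter, mem_Om]
    have hs : 0 < s := by
      rcases Nat.eq_zero_or_pos s with h0 | h0
      · subst h0; simp at hst; omega
      · exact h0
    have hsum : x + (t - x) = t := by omega
    refine ⟨⟨hs, hs, by omega, by omega, ?_⟩, ⟨hos, hos⟩, trivial⟩
    rw [← Nat.mul_add, hsum]
    exact hst
  · rintro ⟨a, b, x, y⟩ hq
    simp only [Finset.mem_filter, mem_Om] at hq
    obtain ⟨⟨ha, hb, hx, hy, h⟩, -, hab⟩ := hq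
    subst hab
    simp only [Prod.mk.injEq]
    exact ⟨trivial, trivial, trivial, by omega⟩
  · rintro ⟨⟨s, t⟩, x⟩ hr
    simp only [Finset.mem_sigma, mem_Dfin, Finset.mem_Ico] at hr
    obtain ⟨⟨hst, hn0, hos⟩, hx1, hxt⟩ := hr
    have hsum : x + (t - x) = t := by omega
    simp only [hsum]
  · rintro ⟨a, b, x, y⟩ hq
    simp only [Finset.mem_filter, mem_Om] at hq
    obtain ⟨-, -, hab⟩ := hq
    subst hab
    exact hw a x y

lemma B1ev (n : ℕ) :
    ∑ q ∈ (Om n).filter (fun q => (Odd q.1 ∧ Odd q.2.1) ∧ q.1 = q.2.1),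
        ((q.2.2.1 : ℤ) + q.2.2.2) ^ 2
      = ∑ p ∈ Dfin n, ((p.2 : ℤ) ^ 3 - (p.2 : ℤ) ^ 2) := by
  rw [diag_reindex _ (fun r => (r.1.2 : ℤ) ^ 2) (by intro a x y; push_cast; ring) n,
    Finset.sum_sigma]
  apply Finset.sum_congr rfl
  rintro ⟨s, t⟩ hp
  dsimp only
  rw [mem_Dfin] at hp
  obtain ⟨hst, hn0, -⟩ := hp
  have ht : 1 ≤ t := by
    rcases Nat.eq_zero_or_pos t with h0 | h0
    · subst h0; simp at hst; omega
    · exact h0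
  rw [Finset.sum_const, Nat.card_Ico, nsmul_eq_mul]
  push_cast [Nat.cast_sub ht]
  ring

lemma Bdev (n : ℕ) :
    6 * ∑ q ∈ (Om n).filter (fun q => (Odd q.1 ∧ Odd q.2.1) ∧ q.1 = q.2.1),
        ((q.2.2.1 : ℤ) * q.2.2.2)
      = ∑ p ∈ Dfin n, ((p.2 : ℤ) ^ 3 - p.2) := by
  rw [diag_reindex _ (fun r => (r.2 : ℤ) * ((r.1.2 - r.2 : ℕ) : ℤ))
    (by intro a x y; dsimp only; rw [Nat.add_sub_cancel_left]) n, Finset.sum_sigma, Finset.mul_sum]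
  apply Finset.sum_congr rfl
  rintro ⟨s, t⟩ hp
  dsimp only
  have h1 : ∑ x ∈ Finset.Ico 1 t, (x : ℤ) * ((t - x : ℕ) : ℤ)
      = ∑ x ∈ Finset.Ico 1 t, (x : ℤ) * ((t : ℤ) - x) := by
    apply Finset.sum_congr rfl
    intro x hx
    simp only [Finset.mem_Ico] at hx
    rw [Nat.cast_sub hx.2.le]
  rw [h1, sum6]

lemma B2ev (n : ℕ) :
    2 * ∑ q ∈ (Om n).filter (fun q => (Odd q.1 ∧ Even q.2.1) ∧ q.2.2.1 = q.2.2.2),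
        (q.2.2.1 : ℤ) ^ 2
      = ∑ p ∈ Dfin n, ((n : ℤ) * p.2 - (p.2 : ℤ) ^ 2) := by
  have step1 : ∑ q ∈ (Om n).filter (fun q => (Odd q.1 ∧ Even q.2.1) ∧ q.2.2.1 = q.2.2.2),
        (q.2.2.1 : ℤ) ^ 2
      = ∑ r ∈ (Dfin n).sigma (fun p => (Finset.range p.1).filter (fun a => Odd a)),
        (r.1.2 : ℤ) ^ 2 := by
    apply Finset.sum_nbij' (i := fun q => ⟨(q.1 + q.2.1, q.2.2.1), q.1⟩)
      (j := fun r => (r.2, r.1.1 - r.2, r.1.2, r.1.2))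
    · rintro ⟨a, b, x, y⟩ hq
      simp only [Finset.mem_filter, mem_Om] at hq
      obtain ⟨⟨ha, hb, hx, hy, h⟩, ⟨hoa, heb⟩, hxy⟩ := hq
      subst hxy
      simp only [Finset.mem_sigma, mem_Dfin, Finset.mem_filter, Finset.mem_range]
      have hax : 0 < a * x := Nat.mul_pos ha hx
      rw [Nat.odd_iff] at hoa; rw [Nat.even_iff] at heb
      refine ⟨⟨by rw [Nat.add_mul]; exact h, by omega, by rw [Nat.odd_iff]; omega⟩,
        by omega, by rw [Nat.odd_iff]; omega⟩
    · rintro ⟨⟨s, t⟩, a⟩ hr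
      simp only [Finset.mem_sigma, mem_Dfin, Finset.mem_filter, Finset.mem_range] at hr
      obtain ⟨⟨hst, hn0, hos⟩, has, hoa⟩ := hr
      simp only [Finset.mem_filter, mem_Om]
      have ht : 0 < t := by
        rcases Nat.eq_zero_or_pos t with h0 | h0
        · subst h0; simp at hst; omega
        · exact h0
      rw [Nat.odd_iff] at hos hoa
      have hsum : a + (s - a) = s := by omega
      refine ⟨⟨by omega, by omega, ht, ht, ?_⟩,
        ⟨by rw [Nat.odd_iff]; omega, by rw [Nat.even_iff]; omega⟩, trivial⟩
      rw [← Nat.add_mul, hsum]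
      exact hst
    · rintro ⟨a, b, x, y⟩ hq
      simp only [Finset.mem_filter, mem_Om] at hq
      obtain ⟨⟨ha, hb, hx, hy, h⟩, -, hxy⟩ := hq
      simp only [Prod.mk.injEq]
      exact ⟨trivial, by omega, trivial, by omega⟩
    · rintro ⟨⟨s, t⟩, a⟩ hr
      simp only [Finset.mem_sigma, mem_Dfin, Finset.mem_filter, Finset.mem_range] at hr
      obtain ⟨⟨hst, hn0, hos⟩, has, hoa⟩ := hr
      have hsum : a + (s - a) = s := by omega
      simp only [hsum]
    · rintro ⟨a, b, x, y⟩ _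
      rfl
  rw [step1, Finset.sum_sigma, Finset.mul_sum]
  apply Finset.sum_congr rfl
  rintro ⟨s, t⟩ hp
  dsimp only
  rw [mem_Dfin] at hp
  obtain ⟨hst, hn0, hos⟩ := hp
  rw [Finset.sum_const, card_odd_range, nsmul_eq_mul]
  have hos' := Nat.odd_iff.mp hos
  have h2 : ((s / 2 : ℕ) : ℤ) * 2 = (s : ℤ) - 1 := by
    have h3 : (s / 2) * 2 + 1 = s := by omega
    have h4 : ((s / 2 : ℕ) : ℤ) * 2 + 1 = (s : ℤ) := by exact_mod_cast h3
    linarith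
  have hst' : (s : ℤ) * t = n := by exact_mod_cast hst
  linear_combination (t : ℤ) ^ 2 * h2 + (t : ℤ) * hst'

lemma sig_bridge (k n : ℕ) :
    ((sigma2 k n : ℕ) : ℤ) = ∑ p ∈ Dfin n, (p.2 : ℤ) ^ k := by
  rw [sigma2, Nat.cast_sum]
  apply Finset.sum_nbij' (i := fun d => ((n / d, d) : ℕ × ℕ)) (j := fun p => p.2)
  · intro d hd
    simp only [Finset.mem_filter, Nat.mem_divisors] at hd
    obtain ⟨⟨hdvd, hn0⟩, hodd⟩ := hd
    rw [mem_Dfin]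
    exact ⟨Nat.div_mul_cancel hdvd, hn0, hodd⟩
  · intro p hp
    rw [mem_Dfin] at hp
    obtain ⟨hst, hn0, hos⟩ := hp
    simp only [Finset.mem_filter, Nat.mem_divisors]
    have hp2 : 0 < p.2 := by
      rcases Nat.eq_zero_or_pos p.2 with h0 | h0
      · rw [h0, mul_zero] at hst; omega
      · exact h0
    have hdiv : n / p.2 = p.1 := by
      rw [← hst, Nat.mul_div_cancel _ hp2]
    exact ⟨⟨Dvd.intro_left p.1 hst, hn0⟩, by rw [hdiv]; exact hos⟩
  · intro d hd
    rfl
  · intro p hp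
    rw [mem_Dfin] at hp
    obtain ⟨hst, hn0, hos⟩ := hp
    have hp2 : 0 < p.2 := by
      rcases Nat.eq_zero_or_pos p.2 with h0 | h0
      · rw [h0, mul_zero] at hst; omega
      · exact h0
    have hdiv : n / p.2 = p.1 := by
      rw [← hst, Nat.mul_div_cancel _ hp2]
    exact Prod.ext hdiv rfl
  · intro d hd
    push_cast
    rfl

lemma mem_macT2 {n : ℕ} {f : Fin 2 → ℕ × ℕ} :
    f ∈ macTuples 2 n ↔ 0 < (f 0).1 ∧ 0 < (f 0).2 ∧ 0 < (f 1).1 ∧ 0 < (f 1).2 ∧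
      (f 0).1 < (f 1).1 ∧ (f 0).1 * (f 0).2 + (f 1).1 * (f 1).2 = n := by
  simp only [macTuples, Finset.mem_filter, Fintype.mem_piFinset, Finset.mem_product,
    Finset.mem_range, Fin.sum_univ_two]
  constructor
  · rintro ⟨hb, hpos, hmono, hsum⟩
    exact ⟨(hpos 0).1, (hpos 0).2, (hpos 1).1, (hpos 1).2, hmono 0 1 (by decide), hsum⟩
  · rintro ⟨h1, h2, h3, h4, hlt, hsum⟩
    have b1 : (f 0).1 * (f 0).2 ≤ n := hsum ▸ Nat.le_add_right _ _
    have b2 : (f 1).1 * (f 1).2 ≤ n := hsum ▸ Nat.le_add_left _ _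
    have c1 : (f 0).1 ≤ (f 0).1 * (f 0).2 := Nat.le_mul_of_pos_right _ h2
    have c2 : (f 0).2 ≤ (f 0).1 * (f 0).2 := Nat.le_mul_of_pos_left _ h1
    have c3 : (f 1).1 ≤ (f 1).1 * (f 1).2 := Nat.le_mul_of_pos_right _ h4
    have c4 : (f 1).2 ≤ (f 1).1 * (f 1).2 := Nat.le_mul_of_pos_left _ h3
    refine ⟨?_, ?_, ?_, hsum⟩
    · intro i
      fin_cases i
      · exact (⟨by omega, by omega⟩ : (f 0).1 < n + 1 ∧ (f 0).2 < n + 1)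
      · exact (⟨by omega, by omega⟩ : (f 1).1 < n + 1 ∧ (f 1).2 < n + 1)
    · intro i
      fin_cases i
      · exact ⟨h1, h2⟩
      · exact ⟨h3, h4⟩
    · intro i j hij
      fin_cases i <;> fin_cases j
      all_goals first
        | exact absurd hij (by decide)
        | exact hlt

lemma M2_bridge (n : ℕ) : ((M2 2 n : ℕ) : ℤ)
    = ∑ q ∈ (Om n).filter (fun q => (Odd q.1 ∧ Odd q.2.1) ∧ q.1 < q.2.1),
        (q.2.2.1 : ℤ) * q.2.2.2 := by
  rw [M2, Nat.cast_sum]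
  apply Finset.sum_nbij' (i := fun f => ((f 0).1, (f 1).1, (f 0).2, (f 1).2))
    (j := fun q => ![(q.1, q.2.2.1), (q.2.1, q.2.2.2)])
  · intro f hf
    simp only [Finset.mem_filter] at hf
    obtain ⟨hmem, hodd⟩ := hf
    rw [mem_macT2] at hmem
    obtain ⟨h1, h2, h3, h4, hlt, hsum⟩ := hmem
    simp only [Finset.mem_filter, mem_Om]
    exact ⟨⟨h1, h3, h2, h4, hsum⟩, ⟨hodd 0, hodd 1⟩, hlt⟩
  · rintro ⟨a, b, x, y⟩ hq
    simp only [Finset.mem_filter, mem_Om] at hq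
    obtain ⟨⟨ha, hb, hx, hy, h⟩, ⟨hoa, hob⟩, hab⟩ := hq
    simp only [Finset.mem_filter]
    constructor
    · rw [mem_macT2]
      simp only [Matrix.cons_val_zero, Matrix.cons_val_one, Matrix.head_cons]
      exact ⟨ha, hx, hb, hy, hab, h⟩
    · intro i
      fin_cases i
      · simpa using hoa
      · simpa using hob
  · intro f hf
    funext i
    fin_cases i <;> simp
  · rintro ⟨a, b, x, y⟩ hq
    simp
  · intro f hf
    rw [Fin.prod_univ_two]
    push_cast
    rfl

theorem M2_two_formula (n : ℕ) (hn : 0 < n) :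
    (24 : ℤ) * M2 2 n = sigma2 3 n - (3 * n - 2) * sigma2 1 n := by
  -- region sums over quadruples
  set OO : ℕ × ℕ × ℕ × ℕ → Prop := fun q => Odd q.1 ∧ Odd q.2.1 with hOO
  -- split of T := ∑_{OO} x*y by comparing a and b
  have hsplitT := sum_split3 ((Om n).filter (fun q => Odd q.1 ∧ Odd q.2.1))
      (fun q => (q.2.2.1 : ℤ) * q.2.2.2) (fun q => q.1) (fun q => q.2.1)
  have hsplitX := sum_split3 ((Om n).filter (fun q => Odd q.1 ∧ Odd q.2.1))
      (fun q => ((q.2.2.1 : ℤ) - q.2.2.2) ^ 2) (fun q => q.2.2.1) (fun q => q.2.2.2)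
  have hsplitY := sum_split3 ((Om n).filter (fun q => Odd q.1 ∧ Odd q.2.1))
      (fun q => ((q.2.2.1 : ℤ) + q.2.2.2) ^ 2) (fun q => q.1) (fun q => q.2.1)
  have hsplitZ1 := sum_split3 ((Om n).filter (fun q => Odd q.1 ∧ Even q.2.1))
      (fun q => (q.2.2.1 : ℤ) ^ 2) (fun q => q.1) (fun q => q.2.1)
  have hsplitZ2 := sum_split3 ((Om n).filter (fun q => Odd q.1 ∧ Even q.2.1))
      (fun q => (q.2.2.1 : ℤ) ^ 2) (fun q => q.2.2.1) (fun q => q.2.2.2)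
  simp only [Finset.filter_filter] at hsplitT hsplitX hsplitY hsplitZ1 hsplitZ2
  have h0 : ∑ q ∈ (Om n).filter (fun q => Odd q.1 ∧ Odd q.2.1), ((q.2.2.1 : ℤ) + q.2.2.2) ^ 2
      - ∑ q ∈ (Om n).filter (fun q => Odd q.1 ∧ Odd q.2.1), ((q.2.2.1 : ℤ) - q.2.2.2) ^ 2
      = 4 * ∑ q ∈ (Om n).filter (fun q => Odd q.1 ∧ Odd q.2.1), (q.2.2.1 : ℤ) * q.2.2.2 := by
    rw [← Finset.sum_sub_distrib, Finset.mul_sum]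
    apply Finset.sum_congr rfl
    intros
    ring
  have hL1 := L1 n
  have hL2 := L2 n
  have hL3 := L3 n
  have hL4 := L4 n
  have hL5 := L5 n
  have hL6 := L6 n
  have hZxy := Zxy n
  have hZab := Zab n (fun q => (q.2.2.1 : ℤ) ^ 2)
  have hB1 := B1ev n
  have hB2 := B2ev n
  have hBd := Bdev n
  have hM := M2_bridge n
  have hs3 := sig_bridge 3 n
  have hs1 := sig_bridge 1 n
  -- divisor-sum linear rearrangements
  have e3 : ∑ p ∈ Dfin n, ((p.2 : ℤ) ^ 3 - (p.2 : ℤ) ^ 2)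
      = ∑ p ∈ Dfin n, (p.2 : ℤ) ^ 3 - ∑ p ∈ Dfin n, (p.2 : ℤ) ^ 2 :=
    Finset.sum_sub_distrib _ _
  have e2 : ∑ p ∈ Dfin n, ((n : ℤ) * p.2 - (p.2 : ℤ) ^ 2)
      = (n : ℤ) * ∑ p ∈ Dfin n, (p.2 : ℤ) ^ 1 - ∑ p ∈ Dfin n, (p.2 : ℤ) ^ 2 := by
    rw [Finset.mul_sum, ← Finset.sum_sub_distrib]
    apply Finset.sum_congr rfl
    intros
    ring
  have e1 : ∑ p ∈ Dfin n, ((p.2 : ℤ) ^ 3 - p.2)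
      = ∑ p ∈ Dfin n, (p.2 : ℤ) ^ 3 - ∑ p ∈ Dfin n, (p.2 : ℤ) ^ 1 := by
    rw [← Finset.sum_sub_distrib]
    apply Finset.sum_congr rfl
    intros
    ring
  rw [hs3, hs1]
  linarith [hsplitT, hsplitX, hsplitY, hsplitZ1, hsplitZ2, h0, hL1, hL2, hL3, hL4, hL5, hL6,
    hZxy, hZab, hB1, hB2, hBd, hM, e3, e2, e1]
end

section
/- For every integer n ≥ 2, the quantity (n² − 3n + 2)·M₁⁽³⁾(n) − 12·M₂⁽³⁾(n) equals 0 if n is a prime different from 3, is negative if n = 3^l for some integer l ≥ 1, and is positive otherwise. -/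
open Finset

/-- The level 3 MacMahon partition function `M_k^{(3)}(n)`:
the sum of `d₁⋯d_k` over tuples with no `m_i` divisible by 3. -/
def M3 (k n : ℕ) : ℕ :=
  ∑ f ∈ (macTuples k n).filter (fun f => ∀ i, ¬ (3 ∣ (f i).1)), ∏ i, (f i).2

/-! ### Auxiliary framework : Liouville-style telescoping for the level-3
convolution identity. -/

/-- Quadruples `(a,b,x,y)` of positive integers with `a*x + b*y = n`. -/
def L3Qs (n : ℕ) : Finset (ℕ × ℕ × ℕ × ℕ) :=
  ((Finset.range (n+1)) ×ˢ ((Finset.range (n+1)) ×ˢ ((Finset.range (n+1)) ×ˢ (Finset.range (n+1))))).filter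
    (fun p => p.1 * p.2.2.1 + p.2.1 * p.2.2.2 = n ∧ 0 < p.1 ∧ 0 < p.2.1 ∧ 0 < p.2.2.1 ∧ 0 < p.2.2.2)

lemma L3mem_Qs {n : ℕ} {p : ℕ × ℕ × ℕ × ℕ} :
    p ∈ L3Qs n ↔ p.1 * p.2.2.1 + p.2.1 * p.2.2.2 = n ∧
      0 < p.1 ∧ 0 < p.2.1 ∧ 0 < p.2.2.1 ∧ 0 < p.2.2.2 := by
  obtain ⟨a, b, x, y⟩ := p
  simp only [L3Qs, Finset.mem_filter, Finset.mem_product, Finset.mem_range]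
  constructor
  · rintro ⟨-, h⟩; exact h
  · rintro ⟨heq, ha, hb, hx, hy⟩
    refine ⟨⟨?_, ?_, ?_, ?_⟩, heq, ha, hb, hx, hy⟩
    · have h1 : a ≤ a * x := Nat.le_mul_of_pos_right a hx
      have h2 : a * x ≤ n := by omega
      omega
    · have h1 : b ≤ b * y := Nat.le_mul_of_pos_right b hy
      have h2 : b * y ≤ n := by omega
      omega
    · have h1 : x ≤ a * x := Nat.le_mul_of_pos_left x ha
      have h2 : a * x ≤ n := by omega
      omega
    · have h1 : y ≤ b * y := Nat.le_mul_of_pos_left y hb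
      have h2 : b * y ≤ n := by omega
      omega

/-- The magic weight function. -/
def L3V (a b x y : ℕ) : ℤ :=
  (if b % 3 = 0 then 0 else -2 * (y:ℤ)^2)
  + (if a % 3 = 1 ∧ b % 3 = 1 then (x:ℤ) * y else 0)
  + (if a % 3 = 1 ∧ b % 3 = 2 then 4 * (x:ℤ) * y else 0)
  + (if a % 3 = 2 ∧ b % 3 = 2 then (x:ℤ) * y else 0)

/-- swap symmetry `(a,b,x,y) ↦ (b,a,y,x)` on regions `b<a` vs `a<b`. -/
lemma L3swap_ab (n : ℕ) (w : ℕ → ℕ → ℕ → ℕ → ℤ) :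
    ∑ p ∈ (L3Qs n).filter (fun p => p.2.1 < p.1), w p.1 p.2.1 p.2.2.1 p.2.2.2
      = ∑ p ∈ (L3Qs n).filter (fun p => p.1 < p.2.1), w p.2.1 p.1 p.2.2.2 p.2.2.1 := by
  refine Finset.sum_nbij' (i := fun p => (p.2.1, p.1, p.2.2.2, p.2.2.1))
    (j := fun p => (p.2.1, p.1, p.2.2.2, p.2.2.1)) ?_ ?_ ?_ ?_ ?_
  · rintro ⟨a,b,x,y⟩ hp
    simp only [Finset.mem_filter, L3mem_Qs] at hp ⊢
    obtain ⟨⟨heq, ha, hb, hx, hy⟩, hlt⟩ := hp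
    exact ⟨⟨by linarith, hb, ha, hy, hx⟩, hlt⟩
  · rintro ⟨a,b,x,y⟩ hp
    simp only [Finset.mem_filter, L3mem_Qs] at hp ⊢
    obtain ⟨⟨heq, ha, hb, hx, hy⟩, hlt⟩ := hp
    exact ⟨⟨by linarith, hb, ha, hy, hx⟩, hlt⟩
  · rintro ⟨a,b,x,y⟩ _; rfl
  · rintro ⟨a,b,x,y⟩ _; rfl
  · rintro ⟨a,b,x,y⟩ _; rfl

/-- swap symmetry on regions `y<x` vs `x<y`. -/
lemma L3swap_xy (n : ℕ) (w : ℕ → ℕ → ℕ → ℕ → ℤ) :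
    ∑ p ∈ (L3Qs n).filter (fun p => p.2.2.2 < p.2.2.1), w p.1 p.2.1 p.2.2.1 p.2.2.2
      = ∑ p ∈ (L3Qs n).filter (fun p => p.2.2.1 < p.2.2.2), w p.2.1 p.1 p.2.2.2 p.2.2.1 := by
  refine Finset.sum_nbij' (i := fun p => (p.2.1, p.1, p.2.2.2, p.2.2.1))
    (j := fun p => (p.2.1, p.1, p.2.2.2, p.2.2.1)) ?_ ?_ ?_ ?_ ?_
  · rintro ⟨a,b,x,y⟩ hp
    simp only [Finset.mem_filter, L3mem_Qs] at hp ⊢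
    obtain ⟨⟨heq, ha, hb, hx, hy⟩, hlt⟩ := hp
    exact ⟨⟨by linarith, hb, ha, hy, hx⟩, hlt⟩
  · rintro ⟨a,b,x,y⟩ hp
    simp only [Finset.mem_filter, L3mem_Qs] at hp ⊢
    obtain ⟨⟨heq, ha, hb, hx, hy⟩, hlt⟩ := hp
    exact ⟨⟨by linarith, hb, ha, hy, hx⟩, hlt⟩
  · rintro ⟨a,b,x,y⟩ _; rfl
  · rintro ⟨a,b,x,y⟩ _; rfl
  · rintro ⟨a,b,x,y⟩ _; rfl

/-- The telescoping engine: bijection `{x>y} ≃ {a<b}`, `(a,b,x,y) ↦ (a,a+b,x-y,y)`. -/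
lemma L3engine (n : ℕ) (w : ℕ → ℕ → ℕ → ℕ → ℤ) :
    ∑ p ∈ (L3Qs n).filter (fun p => p.2.2.2 < p.2.2.1), w p.1 p.2.1 p.2.2.1 p.2.2.2
      = ∑ p ∈ (L3Qs n).filter (fun p => p.1 < p.2.1),
          w p.1 (p.2.1 - p.1) (p.2.2.1 + p.2.2.2) p.2.2.2 := by
  refine Finset.sum_nbij' (i := fun p => (p.1, p.1 + p.2.1, p.2.2.1 - p.2.2.2, p.2.2.2))
    (j := fun p => (p.1, p.2.1 - p.1, p.2.2.1 + p.2.2.2, p.2.2.2)) ?_ ?_ ?_ ?_ ?_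
  · rintro ⟨a,b,x,y⟩ hp
    simp only [Finset.mem_filter, L3mem_Qs] at hp ⊢
    obtain ⟨⟨heq, ha, hb, hx, hy⟩, hlt⟩ := hp
    have hxy : x - y + y = x := by omega
    refine ⟨⟨?_, ha, by omega, by omega, hy⟩, by omega⟩
    calc a * (x - y) + (a + b) * y = a * ((x - y) + y) + b * y := by ring
      _ = n := by rw [hxy]; exact heq
  · rintro ⟨a,b,x,y⟩ hp
    simp only [Finset.mem_filter, L3mem_Qs] at hp ⊢
    obtain ⟨⟨heq, ha, hb, hx, hy⟩, hlt⟩ := hp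
    have hba : a + (b - a) = b := by omega
    refine ⟨⟨?_, ha, by omega, by omega, hy⟩, by omega⟩
    calc a * (x + y) + (b - a) * y = a * x + (a + (b - a)) * y := by ring
      _ = n := by rw [hba]; exact heq
  · rintro ⟨a,b,x,y⟩ hp
    simp only [Finset.mem_filter, L3mem_Qs] at hp
    show ((a:ℕ), a + b - a, x - y + y, y) = (a,b,x,y)
    rw [show a + b - a = b from by omega, show x - y + y = x from by omega]
  · rintro ⟨a,b,x,y⟩ hp
    simp only [Finset.mem_filter, L3mem_Qs] at hp
    show ((a:ℕ), a + (b - a), x + y - y, y) = (a,b,x,y)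
    rw [show a + (b - a) = b from by omega, show x + y - y = x from by omega]
  · rintro ⟨a,b,x,y⟩ hp
    simp only [Finset.mem_filter, L3mem_Qs] at hp
    show w a b x y = w a (a + b - a) (x - y + y) y
    rw [show a + b - a = b from by omega, show x - y + y = x from by omega]

/-- Three-way region split of the full sum, by comparing `a` and `b`. -/
lemma L3split_ab (n : ℕ) (F : ℕ × ℕ × ℕ × ℕ → ℤ) :
    ∑ p ∈ L3Qs n, F p
      = ∑ p ∈ (L3Qs n).filter (fun p => p.1 < p.2.1), F p
        + ∑ p ∈ (L3Qs n).filter (fun p => p.1 = p.2.1), F p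
        + ∑ p ∈ (L3Qs n).filter (fun p => p.2.1 < p.1), F p := by
  have h1 := Finset.sum_filter_add_sum_filter_not (L3Qs n) (fun p => p.1 < p.2.1) F
  have h2 := Finset.sum_filter_add_sum_filter_not
    ((L3Qs n).filter (fun p => ¬ p.1 < p.2.1)) (fun p => p.1 = p.2.1) F
  rw [Finset.filter_filter, Finset.filter_filter] at h2
  have e1 : (L3Qs n).filter (fun p => ¬p.1 < p.2.1 ∧ p.1 = p.2.1)
      = (L3Qs n).filter (fun p => p.1 = p.2.1) := by
    apply Finset.filter_congr; intro p _; constructor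
    · rintro ⟨_, h⟩; exact h
    · intro h; exact ⟨by omega, h⟩
  have e2 : (L3Qs n).filter (fun p => ¬p.1 < p.2.1 ∧ ¬p.1 = p.2.1)
      = (L3Qs n).filter (fun p => p.2.1 < p.1) := by
    apply Finset.filter_congr; intro p _; constructor
    · rintro ⟨h1, h2⟩; omega
    · intro h; omega
  rw [e1, e2] at h2
  linarith

lemma L3split_xy (n : ℕ) (F : ℕ × ℕ × ℕ × ℕ → ℤ) :
    ∑ p ∈ L3Qs n, F p
      = ∑ p ∈ (L3Qs n).filter (fun p => p.2.2.1 < p.2.2.2), F p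
        + ∑ p ∈ (L3Qs n).filter (fun p => p.2.2.1 = p.2.2.2), F p
        + ∑ p ∈ (L3Qs n).filter (fun p => p.2.2.2 < p.2.2.1), F p := by
  have h1 := Finset.sum_filter_add_sum_filter_not (L3Qs n) (fun p => p.2.2.1 < p.2.2.2) F
  have h2 := Finset.sum_filter_add_sum_filter_not
    ((L3Qs n).filter (fun p => ¬ p.2.2.1 < p.2.2.2)) (fun p => p.2.2.1 = p.2.2.2) F
  rw [Finset.filter_filter, Finset.filter_filter] at h2
  have e1 : (L3Qs n).filter (fun p => ¬p.2.2.1 < p.2.2.2 ∧ p.2.2.1 = p.2.2.2)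
      = (L3Qs n).filter (fun p => p.2.2.1 = p.2.2.2) := by
    apply Finset.filter_congr; intro p _; constructor
    · rintro ⟨_, h⟩; exact h
    · intro h; exact ⟨by omega, h⟩
  have e2 : (L3Qs n).filter (fun p => ¬p.2.2.1 < p.2.2.2 ∧ ¬p.2.2.1 = p.2.2.2)
      = (L3Qs n).filter (fun p => p.2.2.2 < p.2.2.1) := by
    apply Finset.filter_congr; intro p _; constructor
    · rintro ⟨h1, h2⟩; omega
    · intro h; omega
  rw [e1, e2] at h2
  linarith

/-- Diagonal `a = b` reindexed by divisor pairs. -/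
lemma L3diag_ab (n : ℕ) (w : ℕ → ℕ → ℕ → ℕ → ℤ) :
    ∑ p ∈ (L3Qs n).filter (fun p => p.1 = p.2.1), w p.1 p.2.1 p.2.2.1 p.2.2.2
      = ∑ uv ∈ n.divisorsAntidiagonal, ∑ x ∈ Finset.Ico 1 uv.2, w uv.1 uv.1 x (uv.2 - x) := by
  rw [Finset.sum_sigma' (n.divisorsAntidiagonal) (fun uv => Finset.Ico 1 uv.2)
    (fun uv x => w uv.1 uv.1 x (uv.2 - x))]
  refine Finset.sum_nbij' (i := fun p => ⟨(p.1, p.2.2.1 + p.2.2.2), p.2.2.1⟩)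
    (j := fun q => (q.1.1, q.1.1, q.2, q.1.2 - q.2)) ?_ ?_ ?_ ?_ ?_
  · rintro ⟨a,b,x,y⟩ hp
    simp only [Finset.mem_filter, L3mem_Qs] at hp
    obtain ⟨⟨heq, ha, hb, hx, hy⟩, hab⟩ := hp
    subst hab
    simp only [Finset.mem_sigma, Nat.mem_divisorsAntidiagonal, Finset.mem_Ico]
    have hax : 0 < a * x := Nat.mul_pos ha hx
    refine ⟨⟨?_, by omega⟩, by omega, by omega⟩
    calc a * (x + y) = a * x + a * y := by ring
      _ = n := heq
  · rintro ⟨⟨u,v⟩,x⟩ hq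
    simp only [Finset.mem_sigma, Nat.mem_divisorsAntidiagonal, Finset.mem_Ico] at hq
    obtain ⟨⟨huv, hn0⟩, hx1, hx2⟩ := hq
    simp only [Finset.mem_filter, L3mem_Qs]
    have hu : 0 < u := by
      rcases Nat.eq_zero_or_pos u with h|h
      · subst h; simp at huv; omega
      · exact h
    refine ⟨⟨?_, hu, hu, by omega, by omega⟩, trivial⟩
    calc u * x + u * (v - x) = u * (x + (v - x)) := by ring
      _ = n := by rw [show x + (v - x) = v from by omega]; exact huv
  · rintro ⟨a,b,x,y⟩ hp
    simp only [Finset.mem_filter, L3mem_Qs] at hp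
    obtain ⟨⟨heq, ha, hb, hx, hy⟩, hab⟩ := hp
    subst hab
    show ((a:ℕ), a, x, x + y - x) = (a,a,x,y)
    rw [show x + y - x = y from by omega]
  · rintro ⟨⟨u,v⟩,x⟩ hq
    simp only [Finset.mem_sigma, Nat.mem_divisorsAntidiagonal, Finset.mem_Ico] at hq
    obtain ⟨⟨huv, hn0⟩, hx1, hx2⟩ := hq
    show (⟨(u, x + (v - x)), x⟩ : (_ : ℕ × ℕ) × ℕ) = ⟨(u,v), x⟩
    rw [show x + (v - x) = v from by omega]
  · rintro ⟨a,b,x,y⟩ hp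
    simp only [Finset.mem_filter, L3mem_Qs] at hp
    obtain ⟨⟨heq, ha, hb, hx, hy⟩, hab⟩ := hp
    subst hab
    show w a a x y = w a a x (x + y - x)
    rw [show x + y - x = y from by omega]

/-- Diagonal `x = y` reindexed by divisor pairs. -/
lemma L3diag_xy (n : ℕ) (w : ℕ → ℕ → ℕ → ℕ → ℤ) :
    ∑ p ∈ (L3Qs n).filter (fun p => p.2.2.1 = p.2.2.2), w p.1 p.2.1 p.2.2.1 p.2.2.2
      = ∑ uv ∈ n.divisorsAntidiagonal, ∑ a ∈ Finset.Ico 1 uv.1, w a (uv.1 - a) uv.2 uv.2 := by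
  rw [Finset.sum_sigma' (n.divisorsAntidiagonal) (fun uv => Finset.Ico 1 uv.1)
    (fun uv a => w a (uv.1 - a) uv.2 uv.2)]
  refine Finset.sum_nbij' (i := fun p => ⟨(p.1 + p.2.1, p.2.2.1), p.1⟩)
    (j := fun q => (q.2, q.1.1 - q.2, q.1.2, q.1.2)) ?_ ?_ ?_ ?_ ?_
  · rintro ⟨a,b,x,y⟩ hp
    simp only [Finset.mem_filter, L3mem_Qs] at hp
    obtain ⟨⟨heq, ha, hb, hx, hy⟩, hxy⟩ := hp
    subst hxy
    simp only [Finset.mem_sigma, Nat.mem_divisorsAntidiagonal, Finset.mem_Ico]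
    have hax : 0 < a * x := Nat.mul_pos ha hx
    refine ⟨⟨?_, by omega⟩, by omega, by omega⟩
    calc (a + b) * x = a * x + b * x := by ring
      _ = n := heq
  · rintro ⟨⟨u,v⟩,a⟩ hq
    simp only [Finset.mem_sigma, Nat.mem_divisorsAntidiagonal, Finset.mem_Ico] at hq
    obtain ⟨⟨huv, hn0⟩, ha1, ha2⟩ := hq
    simp only [Finset.mem_filter, L3mem_Qs]
    have hv : 0 < v := by
      rcases Nat.eq_zero_or_pos v with h|h
      · subst h; simp at huv; omega
      · exact h
    refine ⟨⟨?_, by omega, by omega, hv, hv⟩, trivial⟩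
    calc a * v + (u - a) * v = (a + (u - a)) * v := by ring
      _ = n := by rw [show a + (u - a) = u from by omega]; exact huv
  · rintro ⟨a,b,x,y⟩ hp
    simp only [Finset.mem_filter, L3mem_Qs] at hp
    obtain ⟨⟨heq, ha, hb, hx, hy⟩, hxy⟩ := hp
    subst hxy
    show ((a:ℕ), a + b - a, x, x) = (a,b,x,x)
    rw [show a + b - a = b from by omega]
  · rintro ⟨⟨u,v⟩,a⟩ hq
    simp only [Finset.mem_sigma, Nat.mem_divisorsAntidiagonal, Finset.mem_Ico] at hq
    obtain ⟨⟨huv, hn0⟩, ha1, ha2⟩ := hq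
    show (⟨(a + (u - a), v), a⟩ : (_ : ℕ × ℕ) × ℕ) = ⟨(u,v), a⟩
    rw [show a + (u - a) = u from by omega]
  · rintro ⟨a,b,x,y⟩ hp
    simp only [Finset.mem_filter, L3mem_Qs] at hp
    obtain ⟨⟨heq, ha, hb, hx, hy⟩, hxy⟩ := hp
    subst hxy
    show w a b x x = w a (a + b - a) x x
    rw [show a + b - a = b from by omega]

/-- Pointwise core identity behind the level-3 convolution formula. -/
lemma L3pointwise (a b x y : ℕ) (hab : a < b) :
    L3V a b x y + L3V b a y x - L3V a (b - a) (x + y) y - L3V (b - a) a y (x + y)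
      = if a % 3 = 0 ∨ b % 3 = 0 then 0 else 6 * (x:ℤ) * y := by
  obtain ⟨k, rfl⟩ : ∃ k, b = a + (k + 1) := ⟨b - a - 1, by omega⟩
  rw [show a + (k + 1) - a = k + 1 from by omega]
  have ha : a % 3 = 0 ∨ a % 3 = 1 ∨ a % 3 = 2 := by omega
  have hk : (k + 1) % 3 = 0 ∨ (k + 1) % 3 = 1 ∨ (k + 1) % 3 = 2 := by omega
  rcases ha with h1|h1|h1 <;> rcases hk with h2|h2|h2 <;>
    · have hb : (a + (k + 1)) % 3 = ((a % 3) + ((k + 1) % 3)) % 3 := by omega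
      rw [h1, h2] at hb
      simp only [L3V, h1, h2, hb]
      norm_num
      try push_cast
      try ring

lemma L3quad_sum (m : ℕ) (A B C : ℤ) :
    6 * ∑ i ∈ Finset.range m, (A + B * (i:ℤ) + C * (i:ℤ)^2)
      = 6 * m * A + 3 * B * (m:ℤ) * ((m:ℤ) - 1) + C * ((m:ℤ) - 1) * (m:ℤ) * (2 * (m:ℤ) - 1) := by
  induction m with
  | zero => simp
  | succ m ih =>
    rw [Finset.sum_range_succ]
    push_cast
    push_cast at ih
    linear_combination ih

lemma L3S1 (v : ℕ) : 2 * ∑ x ∈ Finset.Ico 1 v, (x:ℤ) = (v:ℤ) * ((v:ℤ) - 1) := by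
  induction v with
  | zero => simp
  | succ v ih =>
    rcases Nat.eq_zero_or_pos v with h|h
    · subst h; simp
    · rw [Finset.sum_Ico_succ_top h]
      push_cast
      linear_combination ih

lemma L3S2 (v : ℕ) : 6 * ∑ x ∈ Finset.Ico 1 v, (x:ℤ)^2 = ((v:ℤ) - 1) * (v:ℤ) * (2*(v:ℤ) - 1) := by
  induction v with
  | zero => simp
  | succ v ih =>
    rcases Nat.eq_zero_or_pos v with h|h
    · subst h; simp
    · rw [Finset.sum_Ico_succ_top h]
      push_cast
      linear_combination ih

lemma L3innerD1 (u v : ℕ) :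
    6 * ∑ x ∈ Finset.Ico 1 v, L3V u u x (v - x)
      = if u % 3 = 0 then 0 else -3 * (v:ℤ)^3 + 6 * (v:ℤ)^2 - 3 * (v:ℤ) := by
  have hV : ∀ x y : ℕ, L3V u u x y
      = if u % 3 = 0 then 0 else -2 * (y:ℤ)^2 + (x:ℤ) * y := by
    intro x y
    have h : u % 3 = 0 ∨ u % 3 = 1 ∨ u % 3 = 2 := by omega
    rcases h with h|h|h <;> simp [L3V, h] <;> ring
  rcases eq_or_ne (u % 3) 0 with h|h
  · simp only [hV, h, if_pos]
    simp
  · simp only [hV, h, if_neg, ite_false]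
    rcases Nat.eq_zero_or_pos v with hv|hv
    · subst hv; simp
    · have hc : ∀ x ∈ Finset.Ico 1 v, (-2 * ((v - x : ℕ):ℤ)^2 + (x:ℤ) * ((v - x : ℕ):ℤ))
          = (-2*(v:ℤ)^2) + (5*(v:ℤ))*(x:ℤ) + (-3)*(x:ℤ)^2 := by
        intro x hx
        simp only [Finset.mem_Ico] at hx
        rw [Nat.cast_sub (le_of_lt hx.2)]
        ring
      rw [Finset.sum_congr rfl hc]
      rw [Finset.sum_add_distrib, Finset.sum_add_distrib, Finset.sum_const,
        ← Finset.mul_sum, ← Finset.mul_sum]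
      rw [Nat.card_Ico]
      have hS1 := L3S1 v
      have hS2 := L3S2 v
      rw [nsmul_eq_mul, Nat.cast_sub hv]
      push_cast
      push_cast at hS1 hS2
      linear_combination (15*(v:ℤ))*hS1 + (-3)*hS2

lemma L3innerD2 (u v : ℕ) :
    ∑ a ∈ Finset.Ico 1 u, L3V a (u - a) v v
      = (if u % 3 = 0 then 0 else (1 - (u:ℤ))) * (v:ℤ)^2 := by
  induction u using Nat.strong_induction_on with
  | _ u ih =>
    match u, ih with
    | 0, _ => simp
    | 1, _ => simp
    | 2, _ =>
      rw [show Finset.Ico 1 2 = {1} from rfl]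
      simp [L3V]
      ring
    | 3, _ =>
      rw [show Finset.Ico 1 3 = {1, 2} from rfl]
      simp [L3V]
      ring
    | 4, _ =>
      rw [show Finset.Ico 1 4 = {1, 2, 3} from rfl]
      simp [L3V]
      ring
    | 5, _ =>
      rw [show Finset.Ico 1 5 = {1, 2, 3, 4} from rfl]
      simp [L3V]
      ring
    | (w+6), ih =>
      have key := ih (w + 3) (by omega)
      have h1 : (1:ℕ) ≤ w + 5 := by omega
      have h2 : (1:ℕ) ≤ w + 4 := by omega
      have h3 : (1:ℕ) ≤ w + 3 := by omega
      rw [show w + 6 = (w + 5) + 1 from rfl, Finset.sum_Ico_succ_top h1]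
      rw [show w + 5 = (w + 4) + 1 from rfl, Finset.sum_Ico_succ_top h2]
      rw [show w + 4 = (w + 3) + 1 from rfl, Finset.sum_Ico_succ_top h3]
      have hshift : ∀ a ∈ Finset.Ico 1 (w + 3), L3V a (w + 6 - a) v v = L3V a (w + 3 - a) v v := by
        intro a haa
        simp only [Finset.mem_Ico] at haa
        have hm : (w + 6 - a) % 3 = (w + 3 - a) % 3 := by omega
        simp only [L3V, hm]
      rw [Finset.sum_congr rfl hshift, key]
      rw [show w + 6 - (w + 3) = 3 from by omega, show w + 6 - (w + 4) = 2 from by omega,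
        show w + 6 - (w + 5) = 1 from by omega]
      have hmod : (w + 6) % 3 = w % 3 ∧ (w + 3) % 3 = w % 3 := by omega
      have hw : w % 3 = 0 ∨ w % 3 = 1 ∨ w % 3 = 2 := by omega
      rcases hw with h|h|h <;>
        · have e3 : (w + 3) % 3 = w % 3 := by omega
          have e6 : (w + 6) % 3 = w % 3 := by omega
          have e4 : (w + 4) % 3 = (w % 3 + 1) % 3 := by omega
          have e5 : (w + 5) % 3 = (w % 3 + 2) % 3 := by omega
          simp only [L3V, e3, e6, e4, e5, h]
          norm_num
          push_cast
          ring

/-- The master convolution identity. -/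
lemma L3master (n : ℕ) :
    12 * ∑ p ∈ (L3Qs n).filter
        (fun p => p.1 < p.2.1 ∧ ¬ 3 ∣ p.1 ∧ ¬ 3 ∣ p.2.1), ((p.2.2.1 : ℤ) * p.2.2.2)
      = ∑ uv ∈ n.divisorsAntidiagonal.filter (fun uv => ¬ 3 ∣ uv.1),
          ((uv.2:ℤ)^3 + uv.2 - 2 * uv.1 * uv.2^2) := by
  classical
  have E1 := L3engine n (fun a b x y => L3V a b x y)
  have E2 := L3engine n (fun a b x y => L3V b a y x)
  have W1 := L3swap_ab n (fun a b x y => L3V a b x y)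
  have W2 := L3swap_xy n (fun a b x y => L3V b a y x)
  have SA := L3split_ab n (fun p => L3V p.1 p.2.1 p.2.2.1 p.2.2.2)
  have SX := L3split_xy n (fun p => L3V p.1 p.2.1 p.2.2.1 p.2.2.2)
  have D1 := L3diag_ab n (fun a b x y => L3V a b x y)
  have D2 := L3diag_xy n (fun a b x y => L3V a b x y)
  -- pointwise identity summed over the region a < b
  have hpt : ∑ p ∈ (L3Qs n).filter (fun p => p.1 < p.2.1),
      (L3V p.1 p.2.1 p.2.2.1 p.2.2.2 + L3V p.2.1 p.1 p.2.2.2 p.2.2.1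
       - L3V p.1 (p.2.1 - p.1) (p.2.2.1 + p.2.2.2) p.2.2.2
       - L3V (p.2.1 - p.1) p.1 p.2.2.2 (p.2.2.1 + p.2.2.2))
      = ∑ p ∈ (L3Qs n).filter (fun p => p.1 < p.2.1),
        (if p.1 % 3 = 0 ∨ p.2.1 % 3 = 0 then 0 else 6 * (p.2.2.1:ℤ) * p.2.2.2) := by
    refine Finset.sum_congr rfl ?_
    intro p hp
    simp only [Finset.mem_filter] at hp
    exact L3pointwise _ _ _ _ hp.2
  rw [Finset.sum_sub_distrib, Finset.sum_sub_distrib, Finset.sum_add_distrib] at hpt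
  rw [← W1, ← E1, ← E2, W2] at hpt
  -- identify the RHS of hpt with 12 * the filtered sum / 2
  have hP : ∑ p ∈ (L3Qs n).filter (fun p => p.1 < p.2.1),
      (if p.1 % 3 = 0 ∨ p.2.1 % 3 = 0 then 0 else 6 * (p.2.2.1:ℤ) * p.2.2.2)
      = 6 * ∑ p ∈ (L3Qs n).filter
          (fun p => p.1 < p.2.1 ∧ ¬ 3 ∣ p.1 ∧ ¬ 3 ∣ p.2.1), ((p.2.2.1:ℤ) * p.2.2.2) := by
    have e : (L3Qs n).filter (fun p => p.1 < p.2.1 ∧ ¬ 3 ∣ p.1 ∧ ¬ 3 ∣ p.2.1)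
        = ((L3Qs n).filter (fun p => p.1 < p.2.1)).filter
            (fun p => ¬(p.1 % 3 = 0 ∨ p.2.1 % 3 = 0)) := by
      rw [Finset.filter_filter]
      apply Finset.filter_congr
      intro p _
      constructor
      · rintro ⟨h1, h2, h3⟩; exact ⟨h1, by omega⟩
      · rintro ⟨h1, h2⟩; exact ⟨h1, by omega, by omega⟩
    conv_rhs => rw [e, Finset.mul_sum, Finset.sum_filter]
    refine Finset.sum_congr rfl ?_
    intro p hp
    by_cases hq : p.1 % 3 = 0 ∨ p.2.1 % 3 = 0
    · simp [hq]
    · simp only [hq, not_false_iff, if_true, if_false, ite_false, ite_true, if_neg, if_pos]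
      ring
  rw [hP] at hpt
  -- evaluate both diagonal sums
  have hD1 : 6 * ∑ p ∈ (L3Qs n).filter (fun p => p.1 = p.2.1), L3V p.1 p.2.1 p.2.2.1 p.2.2.2
      = ∑ uv ∈ n.divisorsAntidiagonal,
          (if uv.1 % 3 = 0 then 0 else -3*(uv.2:ℤ)^3 + 6*(uv.2:ℤ)^2 - 3*(uv.2:ℤ)) := by
    rw [D1, Finset.mul_sum]
    exact Finset.sum_congr rfl (fun uv _ => L3innerD1 uv.1 uv.2)
  have hD2 : 6 * ∑ p ∈ (L3Qs n).filter (fun p => p.2.2.1 = p.2.2.2), L3V p.1 p.2.1 p.2.2.1 p.2.2.2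
      = ∑ uv ∈ n.divisorsAntidiagonal,
          (if uv.1 % 3 = 0 then 0 else 6*(1 - (uv.1:ℤ)) * (uv.2:ℤ)^2) := by
    rw [D2, Finset.mul_sum]
    refine Finset.sum_congr rfl ?_
    intro uv _
    rw [L3innerD2 uv.1 uv.2]
    by_cases h : uv.1 % 3 = 0 <;> simp [h] <;> ring
  -- combine divisor-side sums
  have hcomb : ∑ uv ∈ n.divisorsAntidiagonal,
          (if uv.1 % 3 = 0 then 0 else 6*(1 - (uv.1:ℤ)) * (uv.2:ℤ)^2)
      - ∑ uv ∈ n.divisorsAntidiagonal,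
          (if uv.1 % 3 = 0 then 0 else -3*(uv.2:ℤ)^3 + 6*(uv.2:ℤ)^2 - 3*(uv.2:ℤ))
      = 3 * ∑ uv ∈ n.divisorsAntidiagonal.filter (fun uv => ¬ 3 ∣ uv.1),
          ((uv.2:ℤ)^3 + uv.2 - 2 * uv.1 * uv.2^2) := by
    rw [← Finset.sum_sub_distrib, Finset.mul_sum]
    rw [show n.divisorsAntidiagonal.filter (fun uv => ¬ 3 ∣ uv.1)
        = n.divisorsAntidiagonal.filter (fun uv => ¬ uv.1 % 3 = 0) from by
      apply Finset.filter_congr; intro uv _; constructor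
      · intro h; omega
      · intro h; omega]
    rw [Finset.sum_filter]
    refine Finset.sum_congr rfl ?_
    intro uv _
    by_cases h : uv.1 % 3 = 0
    · simp [h]
    · simp only [h, not_false_iff, ite_true, ite_false, if_neg, if_pos]
      ring
  -- finish linearly
  linarith [hpt, SA, SX, hD1, hD2, hcomb]

lemma L3M2_repr (n : ℕ) :
    (M3 2 n : ℤ) = ∑ p ∈ (L3Qs n).filter
        (fun p => p.1 < p.2.1 ∧ ¬ 3 ∣ p.1 ∧ ¬ 3 ∣ p.2.1), ((p.2.2.1 : ℤ) * p.2.2.2) := by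
  have hN : M3 2 n = ∑ p ∈ (L3Qs n).filter
      (fun p => p.1 < p.2.1 ∧ ¬ 3 ∣ p.1 ∧ ¬ 3 ∣ p.2.1), (p.2.2.1 * p.2.2.2) := by
    unfold M3
    refine Finset.sum_nbij' (i := fun f => ((f 0).1, (f 1).1, (f 0).2, (f 1).2))
      (j := fun p => ![(p.1, p.2.2.1), (p.2.1, p.2.2.2)]) ?_ ?_ ?_ ?_ ?_
    · intro f hf
      simp only [macTuples, Finset.mem_filter, Fintype.mem_piFinset, Finset.mem_product,
        Finset.mem_range] at hf
      obtain ⟨⟨hbound, hpos, hmono, hsum⟩, hdvd⟩ := hf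
      rw [Fin.sum_univ_two] at hsum
      simp only [Finset.mem_filter, L3mem_Qs]
      exact ⟨⟨hsum, (hpos 0).1, (hpos 1).1, (hpos 0).2, (hpos 1).2⟩,
        hmono 0 1 (by decide), hdvd 0, hdvd 1⟩
    · rintro ⟨a,b,x,y⟩ hp
      simp only [Finset.mem_filter, L3mem_Qs] at hp
      obtain ⟨⟨heq, ha, hb, hx, hy⟩, hab, h3a, h3b⟩ := hp
      have b1 : a ≤ a * x := Nat.le_mul_of_pos_right a hx
      have b2 : b ≤ b * y := Nat.le_mul_of_pos_right b hy
      have b3 : x ≤ a * x := Nat.le_mul_of_pos_left x ha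
      have b4 : y ≤ b * y := Nat.le_mul_of_pos_left y hb
      simp only [macTuples, Finset.mem_filter, Fintype.mem_piFinset, Finset.mem_product,
        Finset.mem_range]
      refine ⟨⟨?_, ?_, ?_, ?_⟩, ?_⟩
      · intro i
        fin_cases i <;> simp <;> omega
      · intro i
        fin_cases i <;> simp <;> omega
      · intro i j hij
        fin_cases i <;> fin_cases j <;> simp <;>
          first
            | exact absurd hij (by decide)
            | exact hab
      · rw [Fin.sum_univ_two]
        simpa using heq
      · intro i
        fin_cases i
        · simpa using h3a
        · simpa using h3b
    · intro f hf
      funext i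
      fin_cases i <;> simp
    · rintro ⟨a,b,x,y⟩ hp
      simp
    · intro f hf
      rw [Fin.prod_univ_two]
  rw [hN]
  push_cast
  rfl

lemma L3M1_repr (n : ℕ) (hn : n ≠ 0) :
    (M3 1 n : ℤ) = ∑ uv ∈ n.divisorsAntidiagonal.filter (fun uv => ¬ 3 ∣ uv.1), (uv.2 : ℤ) := by
  have hN : M3 1 n = ∑ uv ∈ n.divisorsAntidiagonal.filter (fun uv => ¬ 3 ∣ uv.1), uv.2 := by
    unfold M3
    refine Finset.sum_nbij' (i := fun f => ((f 0).1, (f 0).2))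
      (j := fun uv => fun _ => (uv.1, uv.2)) ?_ ?_ ?_ ?_ ?_
    · intro f hf
      simp only [macTuples, Finset.mem_filter, Fintype.mem_piFinset, Finset.mem_product,
        Finset.mem_range] at hf
      obtain ⟨⟨hbound, hpos, hmono, hsum⟩, hdvd⟩ := hf
      rw [Fin.sum_univ_one] at hsum
      simp only [Finset.mem_filter, Nat.mem_divisorsAntidiagonal]
      exact ⟨⟨hsum, hn⟩, hdvd 0⟩
    · rintro ⟨u,v⟩ huv
      simp only [Finset.mem_filter, Nat.mem_divisorsAntidiagonal] at huv
      obtain ⟨⟨heq, hn0⟩, h3⟩ := huv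
      have hu : 0 < u := by
        rcases Nat.eq_zero_or_pos u with h|h
        · subst h; simp at heq; omega
        · exact h
      have hv : 0 < v := by
        rcases Nat.eq_zero_or_pos v with h|h
        · subst h; simp at heq; omega
        · exact h
      have b1 : u ≤ u * v := Nat.le_mul_of_pos_right u hv
      have b2 : v ≤ u * v := Nat.le_mul_of_pos_left v hu
      simp only [macTuples, Finset.mem_filter, Fintype.mem_piFinset, Finset.mem_product,
        Finset.mem_range]
      refine ⟨⟨?_, ?_, ?_, ?_⟩, ?_⟩
      · intro i; exact ⟨by omega, by omega⟩
      · intro i; exact ⟨hu, hv⟩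
      · intro i j hij
        rw [Subsingleton.elim i j] at hij
        exact absurd hij (lt_irrefl _)
      · rw [Fin.sum_univ_one]; exact heq
      · intro i; exact h3
    · intro f hf
      funext i
      have : i = 0 := Subsingleton.elim i 0
      subst this
      rfl
    · rintro ⟨u,v⟩ huv
      rfl
    · intro f hf
      rw [Fin.prod_univ_one]
  rw [hN]
  push_cast
  rfl

/-- The key closed form for the detection expression. -/
lemma L3closed (n : ℕ) (hn : 2 ≤ n) :
    ((n : ℤ) ^ 2 - 3 * n + 2) * M3 1 n - 12 * M3 2 n
      = ∑ uv ∈ n.divisorsAntidiagonal.filter (fun uv => ¬ 3 ∣ uv.1),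
          ((uv.2:ℤ) * (((n:ℤ)^2 - n + 1) - (uv.2:ℤ)^2)) := by
  rw [L3M1_repr n (by omega), L3M2_repr n, L3master n, Finset.mul_sum,
    ← Finset.sum_sub_distrib]
  refine Finset.sum_congr rfl ?_
  intro uv huv
  simp only [Finset.mem_filter, Nat.mem_divisorsAntidiagonal] at huv
  obtain ⟨⟨huvn, hn0⟩, h3⟩ := huv
  have hc : (uv.1:ℤ) * uv.2 = (n:ℤ) := by exact_mod_cast congrArg (Nat.cast : ℕ → ℤ) huvn
  linear_combination (2*(uv.2:ℤ)) * hc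

theorem level3_prime_detection (n : ℕ) (hn : 2 ≤ n) :
    (n.Prime ∧ n ≠ 3 →
      ((n : ℤ) ^ 2 - 3 * n + 2) * M3 1 n - 12 * M3 2 n = 0) ∧
    ((∃ l : ℕ, 1 ≤ l ∧ n = 3 ^ l) →
      ((n : ℤ) ^ 2 - 3 * n + 2) * M3 1 n - 12 * M3 2 n < 0) ∧
    (¬(n.Prime ∧ n ≠ 3) → ¬(∃ l : ℕ, 1 ≤ l ∧ n = 3 ^ l) →
      0 < ((n : ℤ) ^ 2 - 3 * n + 2) * M3 1 n - 12 * M3 2 n) := by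
  have hn0 : n ≠ 0 := by omega
  have hclosed := L3closed n hn
  rw [hclosed]
  have hmemS : ∀ u v : ℕ, (u, v) ∈ n.divisorsAntidiagonal.filter (fun uv => ¬ 3 ∣ uv.1)
      ↔ (u * v = n ∧ ¬ 3 ∣ u) := by
    intro u v
    simp only [Finset.mem_filter, Nat.mem_divisorsAntidiagonal]
    constructor
    · rintro ⟨⟨h1, _⟩, h2⟩; exact ⟨h1, h2⟩
    · rintro ⟨h1, h2⟩; exact ⟨⟨h1, hn0⟩, h2⟩
  have hone : ((1:ℕ), n) ∈ n.divisorsAntidiagonal.filter (fun uv => ¬ 3 ∣ uv.1) := by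
    rw [hmemS]; exact ⟨one_mul n, by omega⟩
  have hu1 : ∀ uv ∈ n.divisorsAntidiagonal.filter (fun uv => ¬ 3 ∣ uv.1),
      uv.1 = 1 → uv = (1, n) := by
    rintro ⟨u, v⟩ h h1
    simp only at h1
    subst h1
    rw [hmemS] at h
    have : v = n := by rw [← h.1, one_mul]
    rw [this]
  have hupos : ∀ uv ∈ n.divisorsAntidiagonal.filter (fun uv => ¬ 3 ∣ uv.1), uv.1 ≠ 0 := by
    rintro ⟨u, v⟩ h h0
    rw [hmemS] at h
    obtain ⟨h1, -⟩ := h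
    subst h0
    rw [zero_mul] at h1
    omega
  have hterm : ∀ uv ∈ n.divisorsAntidiagonal.filter (fun uv => ¬ 3 ∣ uv.1),
      2 ≤ uv.1 → 0 < (uv.2:ℤ) * (((n:ℤ)^2 - n + 1) - (uv.2:ℤ)^2) := by
    rintro ⟨u, v⟩ h hu2
    rw [hmemS] at h
    obtain ⟨huv, h3⟩ := h
    have hv1 : 1 ≤ v := by
      rcases Nat.eq_zero_or_pos v with hz|hz
      · subst hz; rw [Nat.mul_zero] at huv; omega
      · exact hz
    have h2v : 2 * v ≤ n := by
      calc 2 * v ≤ u * v := Nat.mul_le_mul_right v hu2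
        _ = n := huv
    have c1 : (1:ℤ) ≤ (v:ℤ) := by exact_mod_cast hv1
    have c2 : 2 * (v:ℤ) ≤ (n:ℤ) := by exact_mod_cast h2v
    have c3 : (2:ℤ) ≤ (n:ℤ) := by exact_mod_cast hn
    have h4 : 4 * (v:ℤ)^2 ≤ (n:ℤ)^2 := by nlinarith
    have h5 : 0 < ((n:ℤ)^2 - n + 1) - (v:ℤ)^2 := by nlinarith
    exact mul_pos (by linarith) h5
  refine ⟨?_, ?_, ?_⟩
  · -- n prime, n ≠ 3
    rintro ⟨hp, hp3⟩
    have h3n : ¬ 3 ∣ n := by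
      intro hd
      exact hp3 ((Nat.prime_dvd_prime_iff_eq Nat.prime_three hp).1 hd).symm
    have hSeq : n.divisorsAntidiagonal.filter (fun uv => ¬ 3 ∣ uv.1) = {(1, n), (n, 1)} := by
      ext ⟨u, v⟩
      rw [hmemS]
      simp only [Finset.mem_insert, Finset.mem_singleton, Prod.mk.injEq]
      constructor
      · rintro ⟨huv, h3⟩
        rcases (Nat.Prime.eq_one_or_self_of_dvd hp u ⟨v, huv.symm⟩) with h|h
        · subst h; left; exact ⟨rfl, by omega⟩
        · subst h
          right
          refine ⟨rfl, ?_⟩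
          have h2 : u * v = u * 1 := by omega
          exact Nat.eq_of_mul_eq_mul_left (by omega : 0 < u) h2
      · rintro (⟨h1, h2⟩|⟨h1, h2⟩)
        · refine ⟨by rw [h1, h2, one_mul], by rw [h1]; omega⟩
        · refine ⟨by rw [h1, h2, mul_one], by rw [h1]; exact h3n⟩
    rw [hSeq, Finset.sum_insert (by simp; omega), Finset.sum_singleton]
    push_cast
    ring
  · -- n = 3 ^ l
    rintro ⟨l, hl1, hln⟩
    have hn3 : (3:ℕ) ≤ n := by
      rw [hln]
      calc (3:ℕ) = 3 ^ 1 := (pow_one 3).symm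
        _ ≤ 3 ^ l := Nat.pow_le_pow_right (by omega) hl1
    have hSeq : n.divisorsAntidiagonal.filter (fun uv => ¬ 3 ∣ uv.1) = {(1, n)} := by
      ext ⟨u, v⟩
      rw [hmemS]
      simp only [Finset.mem_singleton, Prod.mk.injEq]
      constructor
      · rintro ⟨huv, h3⟩
        have hu : u ∣ 3 ^ l := ⟨v, by rw [← hln]; exact huv.symm⟩
        obtain ⟨k, hkl, hk⟩ := (Nat.dvd_prime_pow Nat.prime_three).1 hu
        have hk0 : k = 0 := by
          by_contra hknz
          exact h3 (by rw [hk]; exact dvd_pow_self 3 hknz)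
        subst hk0
        simp only [pow_zero] at hk
        subst hk
        exact ⟨rfl, by omega⟩
      · rintro ⟨h1, h2⟩
        refine ⟨by rw [h1, h2, one_mul], by rw [h1]; omega⟩
    rw [hSeq, Finset.sum_singleton]
    have c3 : (3:ℤ) ≤ (n:ℤ) := by exact_mod_cast hn3
    simp only
    nlinarith [c3]
  · -- remaining case
    intro hnp hn3p
    have hnotprime : ¬ n.Prime := by
      intro hp
      rcases eq_or_ne n 3 with h|h
      · exact hn3p ⟨1, le_refl 1, by rw [h, pow_one]⟩
      · exact hnp ⟨hp, h⟩
    by_cases h3n : 3 ∣ n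
    · -- 3 divides n, n is not a power of 3
      have hbm : (n / 3 ^ n.factorization 3) * 3 ^ n.factorization 3 = n := by
        rw [Nat.mul_comm]
        exact Nat.ordProj_mul_ordCompl_eq_self n 3
      have h3b : ¬ 3 ∣ (n / 3 ^ n.factorization 3) := Nat.not_dvd_ordCompl Nat.prime_three hn0
      have ha1 : 1 ≤ n.factorization 3 := Nat.Prime.factorization_pos_of_dvd Nat.prime_three hn0 h3n
      have hm3 : 3 ≤ 3 ^ n.factorization 3 := by
        calc (3:ℕ) = 3 ^ 1 := (pow_one 3).symm
          _ ≤ 3 ^ n.factorization 3 := Nat.pow_le_pow_right (by omega) ha1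
      have hb1 : n / 3 ^ n.factorization 3 ≠ 1 := by
        intro h
        rw [h, one_mul] at hbm
        exact hn3p ⟨n.factorization 3, ha1, hbm.symm⟩
      have hb0 : n / 3 ^ n.factorization 3 ≠ 0 := by
        intro h
        rw [h, zero_mul] at hbm
        omega
      have hb2 : 2 ≤ n / 3 ^ n.factorization 3 := by
        generalize hq : n / 3 ^ n.factorization 3 = q at hb0 hb1
        omega
      have hbS : (n / 3 ^ n.factorization 3, 3 ^ n.factorization 3)
          ∈ n.divisorsAntidiagonal.filter (fun uv => ¬ 3 ∣ uv.1) := by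
        rw [hmemS]; exact ⟨hbm, h3b⟩
      have hne : ((1:ℕ), n) ≠ (n / 3 ^ n.factorization 3, 3 ^ n.factorization 3) := by
        intro h
        rw [Prod.mk.injEq] at h
        exact hb1 h.1.symm
      have hsub : ({((1:ℕ), n), (n / 3 ^ n.factorization 3, 3 ^ n.factorization 3)} :
          Finset (ℕ × ℕ)) ⊆ n.divisorsAntidiagonal.filter (fun uv => ¬ 3 ∣ uv.1) := by
        rw [Finset.insert_subset_iff, Finset.singleton_subset_iff]
        exact ⟨hone, hbS⟩
      rw [← Finset.sum_sdiff hsub]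
      have hrest : 0 ≤ ∑ uv ∈ (n.divisorsAntidiagonal.filter (fun uv => ¬ 3 ∣ uv.1)) \
          {((1:ℕ), n), (n / 3 ^ n.factorization 3, 3 ^ n.factorization 3)},
          ((uv.2:ℤ) * (((n:ℤ)^2 - n + 1) - (uv.2:ℤ)^2)) := by
        apply Finset.sum_nonneg
        intro uv huv
        rw [Finset.mem_sdiff] at huv
        obtain ⟨hin, hnotin⟩ := huv
        have h0 := hupos uv hin
        have hu2 : 2 ≤ uv.1 := by
          rcases Nat.lt_or_ge uv.1 2 with h|h
          · exfalso
            apply hnotin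
            simp only [Finset.mem_insert, Finset.mem_singleton]
            left
            exact hu1 uv hin (by omega)
          · exact h
        exact le_of_lt (hterm uv hin hu2)
      have hS' : 0 < ∑ uv ∈ ({((1:ℕ), n),
          (n / 3 ^ n.factorization 3, 3 ^ n.factorization 3)} : Finset (ℕ × ℕ)),
          ((uv.2:ℤ) * (((n:ℤ)^2 - n + 1) - (uv.2:ℤ)^2)) := by
        rw [Finset.sum_insert (by simpa using hne), Finset.sum_singleton]
        have h2m : 2 * 3 ^ n.factorization 3 ≤ n := by
          calc 2 * 3 ^ n.factorization 3
              ≤ (n / 3 ^ n.factorization 3) * 3 ^ n.factorization 3 :=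
                Nat.mul_le_mul_right _ hb2
            _ = n := hbm
        have c1 : (3:ℤ) ≤ ((3 ^ n.factorization 3 : ℕ) : ℤ) := by exact_mod_cast hm3
        have c2 : 2 * ((3 ^ n.factorization 3 : ℕ) : ℤ) ≤ (n:ℤ) := by exact_mod_cast h2m
        have c3 : (2:ℤ) ≤ (n:ℤ) := by exact_mod_cast hn
        have h4 : 4 * ((3 ^ n.factorization 3 : ℕ) : ℤ)^2 ≤ (n:ℤ)^2 := by nlinarith
        have h5 : 0 < ((n:ℤ)^2 - n) - (((3 ^ n.factorization 3 : ℕ) : ℤ)^2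
            + ((3 ^ n.factorization 3 : ℕ) : ℤ)) := by nlinarith
        have h6 : 0 < (((3 ^ n.factorization 3 : ℕ) : ℤ) - 1) * (((n:ℤ)^2 - n)
            - (((3 ^ n.factorization 3 : ℕ) : ℤ)^2 + ((3 ^ n.factorization 3 : ℕ) : ℤ))) :=
          mul_pos (by linarith) h5
        simp only
        nlinarith [h6]
      linarith [hrest, hS']
    · -- 3 does not divide n
      obtain ⟨d, hddvd, hd2, hdlt⟩ := Nat.exists_dvd_of_not_prime2 hn hnotprime
      obtain ⟨w, hw⟩ := hddvd
      have hw0 : w ≠ 0 := by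
        intro h
        rw [h, mul_zero] at hw
        omega
      have hw1' : w ≠ 1 := by
        intro h
        rw [h, mul_one] at hw
        omega
      have hwn : w ≠ n := by
        intro h
        have h2n : 2 * n ≤ d * n := Nat.mul_le_mul_right n hd2
        rw [h] at hw
        rw [← hw] at h2n
        omega
      have h3d : ¬ 3 ∣ d := fun hdd => h3n (hdd.trans ⟨w, hw⟩)
      have hdS : (d, w) ∈ n.divisorsAntidiagonal.filter (fun uv => ¬ 3 ∣ uv.1) := by
        rw [hmemS]; exact ⟨hw.symm, h3d⟩
      have hnS : ((n:ℕ), 1) ∈ n.divisorsAntidiagonal.filter (fun uv => ¬ 3 ∣ uv.1) := by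
        rw [hmemS]; exact ⟨mul_one n, h3n⟩
      have hsub : ({((1:ℕ), n), (n, 1), (d, w)} : Finset (ℕ × ℕ))
          ⊆ n.divisorsAntidiagonal.filter (fun uv => ¬ 3 ∣ uv.1) := by
        rw [Finset.insert_subset_iff, Finset.insert_subset_iff, Finset.singleton_subset_iff]
        exact ⟨hone, hnS, hdS⟩
      rw [← Finset.sum_sdiff hsub]
      have hrest : 0 ≤ ∑ uv ∈ (n.divisorsAntidiagonal.filter (fun uv => ¬ 3 ∣ uv.1)) \
          {((1:ℕ), n), (n, 1), (d, w)},
          ((uv.2:ℤ) * (((n:ℤ)^2 - n + 1) - (uv.2:ℤ)^2)) := by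
        apply Finset.sum_nonneg
        intro uv huv
        rw [Finset.mem_sdiff] at huv
        obtain ⟨hin, hnotin⟩ := huv
        have h0 := hupos uv hin
        have hu2 : 2 ≤ uv.1 := by
          rcases Nat.lt_or_ge uv.1 2 with h|h
          · exfalso
            apply hnotin
            simp only [Finset.mem_insert, Finset.mem_singleton]
            left
            exact hu1 uv hin (by omega)
          · exact h
        exact le_of_lt (hterm uv hin hu2)
      have hS' : 0 < ∑ uv ∈ ({((1:ℕ), n), (n, 1), (d, w)} : Finset (ℕ × ℕ)),
          ((uv.2:ℤ) * (((n:ℤ)^2 - n + 1) - (uv.2:ℤ)^2)) := by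
        have hne1 : ((1:ℕ), n) ∉ ({((n:ℕ), 1), (d, w)} : Finset (ℕ × ℕ)) := by
          simp only [Finset.mem_insert, Finset.mem_singleton, Prod.mk.injEq]
          push_neg
          refine ⟨fun h => by omega, fun h => by omega⟩
        have hne2 : ((n:ℕ), 1) ∉ ({(d, w)} : Finset (ℕ × ℕ)) := by
          simp only [Finset.mem_singleton, Prod.mk.injEq]
          intro h
          omega
        rw [Finset.sum_insert hne1, Finset.sum_insert hne2, Finset.sum_singleton]
        have htw := hterm (d, w) hdS (by simpa using hd2)
        simp only at htw ⊢
        have hcancel : (n:ℤ) * (((n:ℤ)^2 - n + 1) - (n:ℤ)^2)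
            + (1:ℤ) * (((n:ℤ)^2 - n + 1) - (1:ℤ)^2) = 0 := by ring
        push_cast
        push_cast at htw hcancel
        linarith [htw, hcancel]
      linarith [hrest, hS']
end

section
/- Let N be a positive integer, S a non-empty subset of ℤ/Nℤ, and ε ∈ {1, −1}. Then for every positive integer n, 12·M_{S,N,ε,2}(n) = 6·Σ_{a+b=n, a,b ≥ 1} σ_{S,N,ε,1}(a)·σ_{S,N,ε,1}(b) + σ_{S,N,ε,1}(n) − σ_{S,N,ε,3}(n). -/
open Finset

/-- Admissible tuples `((m₁,d₁),…,(m_k,d_k))` with `0 < m₁ < ⋯ < m_k`,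
each `m_i mod N` lying in `S`, `d_i > 0`, and `n = m₁d₁ + ⋯ + m_k d_k`. -/
def genTuples (N : ℕ) (S : Finset (ZMod N)) (k n : ℕ) : Finset (Fin k → ℕ × ℕ) :=
  (Fintype.piFinset fun _ => Finset.range (n + 1) ×ˢ Finset.range (n + 1)).filter
    fun f => (∀ i, 0 < (f i).1 ∧ 0 < (f i).2) ∧
      (∀ i, (((f i).1 : ℕ) : ZMod N) ∈ S) ∧
      (∀ i j : Fin k, i < j → (f i).1 < (f j).1) ∧
      (∑ i, (f i).1 * (f i).2) = n

/-- The generalized MacMahon function coefficient `M_{S,N,ε,k}(n)`. -/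
def Mgen (N : ℕ) (S : Finset (ZMod N)) (ε : ℤ) (k n : ℕ) : ℤ :=
  ∑ f ∈ genTuples N S k n, ε ^ (∑ i, (f i).2) * ∏ i, ((f i).2 : ℤ)

/-- The twisted divisor sum `σ_{S,N,ε,k}(n) = ∑_{d ∣ n, (n/d mod N) ∈ S} ε^d d^k`. -/
def sigmaGen (N : ℕ) (S : Finset (ZMod N)) (ε : ℤ) (k n : ℕ) : ℤ :=
  ∑ d ∈ n.divisors.filter (fun d => (((n / d : ℕ) : ZMod N) ∈ S)), ε ^ d * (d : ℤ) ^ k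

/-- Pairs `(m, d)` with `m, d > 0`, `m mod N ∈ S`, `m * d = a`, bounded by `n`. -/
def pairsW (N : ℕ) (S : Finset (ZMod N)) (n a : ℕ) : Finset (ℕ × ℕ) :=
  ((Finset.range (n + 1)) ×ˢ (Finset.range (n + 1))).filter
    fun p => 0 < p.1 ∧ 0 < p.2 ∧ ((p.1 : ℕ) : ZMod N) ∈ S ∧ p.1 * p.2 = a

lemma mem_pairsW {N : ℕ} {S : Finset (ZMod N)} {n a : ℕ} (han : a ≤ n) {p : ℕ × ℕ} :
    p ∈ pairsW N S n a ↔
      0 < p.1 ∧ 0 < p.2 ∧ ((p.1 : ℕ) : ZMod N) ∈ S ∧ p.1 * p.2 = a := by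
  simp only [pairsW, mem_filter, mem_product, mem_range]
  constructor
  · tauto
  · rintro ⟨h1, h2, h3, h4⟩
    have k1 : p.1 ≤ p.1 * p.2 := Nat.le_mul_of_pos_right _ h2
    have k2 : p.2 ≤ p.1 * p.2 := Nat.le_mul_of_pos_left _ h1
    exact ⟨⟨by omega, by omega⟩, h1, h2, h3, h4⟩

lemma sigma_pairs {N : ℕ} (S : Finset (ZMod N)) (ε : ℤ) {k n a : ℕ}
    (ha : 0 < a) (han : a ≤ n) :
    sigmaGen N S ε k a = ∑ p ∈ pairsW N S n a, ε ^ p.2 * (p.2 : ℤ) ^ k := by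
  unfold sigmaGen
  refine Finset.sum_nbij' (fun d => (a / d, d)) (fun p => p.2) ?_ ?_ ?_ ?_ ?_
  · intro d hd
    simp only [mem_filter, Nat.mem_divisors] at hd
    obtain ⟨⟨hdvd, hane⟩, hmem⟩ := hd
    have hd0 : 0 < d := Nat.pos_of_dvd_of_pos hdvd ha
    rw [mem_pairsW han]
    exact ⟨Nat.div_pos (Nat.le_of_dvd ha hdvd) hd0, hd0, hmem, Nat.div_mul_cancel hdvd⟩
  · intro p hp
    rw [mem_pairsW han] at hp
    obtain ⟨h1, h2, h3, h4⟩ := hp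
    have hdvd : p.2 ∣ a := Dvd.intro_left p.1 h4
    have hq : a / p.2 = p.1 := by
      rw [← h4]; exact Nat.mul_div_cancel _ h2
    simp only [mem_filter, Nat.mem_divisors]
    exact ⟨⟨hdvd, by omega⟩, by rw [hq]; exact h3⟩
  · intro d _; rfl
  · intro p hp
    rw [mem_pairsW han] at hp
    obtain ⟨h1, h2, h3, h4⟩ := hp
    have hq : a / p.2 = p.1 := by
      rw [← h4]; exact Nat.mul_div_cancel _ h2
    exact Prod.ext hq rfl
  · intro d _; rfl

/-- Quadruples `((m₁,d₁),(m₂,d₂))` contributing to the convolution. -/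
def quadT (N : ℕ) (S : Finset (ZMod N)) (n : ℕ) : Finset ((ℕ × ℕ) × ℕ × ℕ) :=
  ((Finset.range (n + 1) ×ˢ Finset.range (n + 1)) ×ˢ
      (Finset.range (n + 1) ×ˢ Finset.range (n + 1))).filter
    fun x => 0 < x.1.1 ∧ 0 < x.1.2 ∧ 0 < x.2.1 ∧ 0 < x.2.2 ∧
      ((x.1.1 : ℕ) : ZMod N) ∈ S ∧ ((x.2.1 : ℕ) : ZMod N) ∈ S ∧
      x.1.1 * x.1.2 + x.2.1 * x.2.2 = n

lemma mem_quadT {N : ℕ} {S : Finset (ZMod N)} {n : ℕ} {x : (ℕ × ℕ) × ℕ × ℕ} :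
    x ∈ quadT N S n ↔
      0 < x.1.1 ∧ 0 < x.1.2 ∧ 0 < x.2.1 ∧ 0 < x.2.2 ∧
      ((x.1.1 : ℕ) : ZMod N) ∈ S ∧ ((x.2.1 : ℕ) : ZMod N) ∈ S ∧
      x.1.1 * x.1.2 + x.2.1 * x.2.2 = n := by
  simp only [quadT, mem_filter, mem_product, mem_range]
  constructor
  · tauto
  · rintro ⟨h1, h2, h3, h4, h5, h6, h7⟩
    have k1 : x.1.1 ≤ x.1.1 * x.1.2 := Nat.le_mul_of_pos_right _ h2
    have k2 : x.1.2 ≤ x.1.1 * x.1.2 := Nat.le_mul_of_pos_left _ h1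
    have k3 : x.2.1 ≤ x.2.1 * x.2.2 := Nat.le_mul_of_pos_right _ h4
    have k4 : x.2.2 ≤ x.2.1 * x.2.2 := Nat.le_mul_of_pos_left _ h3
    exact ⟨⟨⟨by omega, by omega⟩, by omega, by omega⟩, h1, h2, h3, h4, h5, h6, h7⟩

lemma mem_genTuples_two {N : ℕ} {S : Finset (ZMod N)} {n : ℕ} {f : Fin 2 → ℕ × ℕ} :
    f ∈ genTuples N S 2 n ↔
      0 < (f 0).1 ∧ 0 < (f 0).2 ∧ 0 < (f 1).1 ∧ 0 < (f 1).2 ∧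
      (((f 0).1 : ℕ) : ZMod N) ∈ S ∧ (((f 1).1 : ℕ) : ZMod N) ∈ S ∧
      (f 0).1 < (f 1).1 ∧ (f 0).1 * (f 0).2 + (f 1).1 * (f 1).2 = n := by
  simp only [genTuples, mem_filter, Fintype.mem_piFinset, mem_product, mem_range,
    Fin.sum_univ_two]
  constructor
  · rintro ⟨hr, h1, h2, h3, h4⟩
    exact ⟨(h1 0).1, (h1 0).2, (h1 1).1, (h1 1).2, h2 0, h2 1,
      h3 0 1 (by decide), h4⟩
  · rintro ⟨a1, a2, b1, b2, c1, c2, hlt, hsum⟩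
    have k1 : (f 0).1 ≤ (f 0).1 * (f 0).2 := Nat.le_mul_of_pos_right _ a2
    have k2 : (f 0).2 ≤ (f 0).1 * (f 0).2 := Nat.le_mul_of_pos_left _ a1
    have k3 : (f 1).1 ≤ (f 1).1 * (f 1).2 := Nat.le_mul_of_pos_right _ b2
    have k4 : (f 1).2 ≤ (f 1).1 * (f 1).2 := Nat.le_mul_of_pos_left _ b1
    have u1 : (f 0).1 * (f 0).2 ≤ n := by omega
    have u2 : (f 1).1 * (f 1).2 ≤ n := by omega
    refine ⟨?_, ?_, ?_, ?_, hsum⟩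
    · intro i; fin_cases i
      · exact ⟨Nat.lt_succ_of_le (k1.trans u1), Nat.lt_succ_of_le (k2.trans u1)⟩
      · exact ⟨Nat.lt_succ_of_le (k3.trans u2), Nat.lt_succ_of_le (k4.trans u2)⟩
    · intro i; fin_cases i
      · exact ⟨a1, a2⟩
      · exact ⟨b1, b2⟩
    · intro i; fin_cases i
      · exact c1
      · exact c2
    · intro i j hij
      fin_cases i <;> fin_cases j <;>
        first
          | exact absurd hij (by decide)
          | exact hlt

lemma six_sum_range (d : ℕ) :
    6 * ∑ j ∈ Finset.range d, (j : ℤ) * ((d : ℤ) - j) = (d : ℤ) ^ 3 - d := by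
  induction d with
  | zero => simp
  | succ d ih =>
    have hstep : ∑ j ∈ Finset.range (d + 1), (j : ℤ) * (((d : ℤ) + 1) - j)
        = (∑ j ∈ Finset.range (d + 1), (j : ℤ) * ((d : ℤ) - j))
          + ∑ j ∈ Finset.range (d + 1), (j : ℤ) := by
      rw [← Finset.sum_add_distrib]
      exact Finset.sum_congr rfl fun j _ => by ring
    have hlast : ∑ j ∈ Finset.range (d + 1), (j : ℤ) * ((d : ℤ) - j)
        = ∑ j ∈ Finset.range d, (j : ℤ) * ((d : ℤ) - j) := by
      rw [Finset.sum_range_succ]; simp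
    have hg : (∑ j ∈ Finset.range (d + 1), (j : ℤ)) * 2 = ((d : ℤ) + 1) * d := by
      have h0 := Finset.sum_range_id_mul_two (d + 1)
      have h2 : (((∑ i ∈ Finset.range (d + 1), i) * 2 : ℕ) : ℤ)
          = (((d + 1) * d : ℕ) : ℤ) := by rw [h0]; norm_num
      push_cast at h2
      linarith
    push_cast
    rw [hstep, hlast]
    linear_combination ih + 3 * hg

lemma six_sum (d : ℕ) :
    6 * ∑ j ∈ Finset.Ico 1 d, (j : ℤ) * ((d : ℤ) - j) = (d : ℤ) ^ 3 - d := by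
  have h : ∑ j ∈ Finset.Ico 1 d, (j : ℤ) * ((d : ℤ) - j)
      = ∑ j ∈ Finset.range d, (j : ℤ) * ((d : ℤ) - j) := by
    rcases Nat.eq_zero_or_pos d with h | h
    · subst h; simp
    · rw [Finset.range_eq_Ico, Finset.sum_eq_sum_Ico_succ_bot h]
      simp
  rw [h, six_sum_range]

theorem Mgen_two_formula (N : ℕ) (hN : 0 < N) (S : Finset (ZMod N))
    (hS : S.Nonempty) (ε : ℤ) (hε : ε = 1 ∨ ε = -1) (n : ℕ) (hn : 0 < n) :
    12 * Mgen N S ε 2 n =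
      6 * (∑ a ∈ Finset.Ico 1 n, sigmaGen N S ε 1 a * sigmaGen N S ε 1 (n - a))
        + sigmaGen N S ε 1 n - sigmaGen N S ε 3 n := by
  -- Step 1: convolution as sum over quadruples
  have key : ∑ a ∈ Finset.Ico 1 n, sigmaGen N S ε 1 a * sigmaGen N S ε 1 (n - a)
      = ∑ x ∈ quadT N S n, ε ^ (x.1.2 + x.2.2) * ((x.1.2 : ℤ) * (x.2.2 : ℤ)) := by
    have step1 : ∑ a ∈ Finset.Ico 1 n, sigmaGen N S ε 1 a * sigmaGen N S ε 1 (n - a)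
        = ∑ a ∈ Finset.Ico 1 n, ∑ x ∈ pairsW N S n a ×ˢ pairsW N S n (n - a),
            ε ^ (x.1.2 + x.2.2) * ((x.1.2 : ℤ) * (x.2.2 : ℤ)) := by
      refine Finset.sum_congr rfl fun a ha => ?_
      rw [mem_Ico] at ha
      rw [sigma_pairs S ε (n := n) (by omega) (by omega),
        sigma_pairs S ε (n := n) (a := n - a) (by omega) (by omega),
        Finset.sum_mul_sum, Finset.sum_product]
      refine Finset.sum_congr rfl fun p _ => Finset.sum_congr rfl fun q _ => ?_
      rw [pow_add]; ring
    rw [step1]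
    rw [Finset.sum_sigma' (Finset.Ico 1 n)
      (fun a => pairsW N S n a ×ˢ pairsW N S n (n - a))
      (fun _ x => ε ^ (x.1.2 + x.2.2) * ((x.1.2 : ℤ) * (x.2.2 : ℤ)))]
    refine Finset.sum_nbij' (fun y => y.2) (fun x => ⟨x.1.1 * x.1.2, x⟩)
      ?_ ?_ ?_ ?_ ?_
    · rintro ⟨a, x⟩ hy
      rw [Finset.mem_sigma, Finset.mem_product] at hy
      dsimp only at hy
      obtain ⟨ha, hx1, hx2⟩ := hy
      rw [mem_Ico] at ha
      rw [mem_pairsW (by omega)] at hx1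
      rw [mem_pairsW (by omega)] at hx2
      show x ∈ quadT N S n
      rw [mem_quadT]
      refine ⟨hx1.1, hx1.2.1, hx2.1, hx2.2.1, hx1.2.2.1, hx2.2.2.1, ?_⟩
      have e1 := hx1.2.2.2
      have e2 := hx2.2.2.2
      omega
    · intro x hx
      rw [mem_quadT] at hx
      obtain ⟨h1, h2, h3, h4, h5, h6, h7⟩ := hx
      show (⟨x.1.1 * x.1.2, x⟩ : (_ : ℕ) × ((ℕ × ℕ) × ℕ × ℕ)) ∈ _
      rw [Finset.mem_sigma, Finset.mem_product]
      dsimp only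
      have p1 : 0 < x.1.1 * x.1.2 := Nat.mul_pos h1 h2
      have p2 : 0 < x.2.1 * x.2.2 := Nat.mul_pos h3 h4
      refine ⟨by rw [mem_Ico]; omega, ?_, ?_⟩
      · show x.1 ∈ pairsW N S n (x.1.1 * x.1.2)
        rw [mem_pairsW (by omega)]
        exact ⟨h1, h2, h5, rfl⟩
      · show x.2 ∈ pairsW N S n (n - x.1.1 * x.1.2)
        rw [mem_pairsW (by omega)]
        exact ⟨h3, h4, h6, by omega⟩
    · rintro ⟨a, x⟩ hy
      rw [Finset.mem_sigma, Finset.mem_product] at hy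
      dsimp only at hy
      obtain ⟨ha, hx1, _⟩ := hy
      rw [mem_Ico] at ha
      rw [mem_pairsW (by omega)] at hx1
      have h : x.1.1 * x.1.2 = a := hx1.2.2.2
      show (⟨x.1.1 * x.1.2, x⟩ : (_ : ℕ) × ((ℕ × ℕ) × ℕ × ℕ)) = ⟨a, x⟩
      rw [h]
    · intro x _; rfl
    · intro y _; rfl
  -- split quadT by comparing m₁ and m₂
  set W : (ℕ × ℕ) × ℕ × ℕ → ℤ :=
    fun x => ε ^ (x.1.2 + x.2.2) * ((x.1.2 : ℤ) * (x.2.2 : ℤ)) with hW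
  have hsplit : ∑ x ∈ quadT N S n, W x
      = (∑ x ∈ (quadT N S n).filter (fun x => x.1.1 < x.2.1), W x)
        + (∑ x ∈ (quadT N S n).filter (fun x => x.2.1 < x.1.1), W x)
        + (∑ x ∈ (quadT N S n).filter (fun x => x.1.1 = x.2.1), W x) := by
    rw [← Finset.sum_filter_add_sum_filter_not (quadT N S n)
      (fun x => x.1.1 < x.2.1) W]
    rw [← Finset.sum_filter_add_sum_filter_not
      ((quadT N S n).filter (fun x => ¬ x.1.1 < x.2.1))
      (fun x => x.2.1 < x.1.1) W]
    have e1 : ((quadT N S n).filter (fun x => ¬ x.1.1 < x.2.1)).filter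
        (fun x => x.2.1 < x.1.1) = (quadT N S n).filter (fun x => x.2.1 < x.1.1) := by
      ext x
      simp only [Finset.mem_filter]
      constructor
      · rintro ⟨⟨h1, _⟩, h3⟩; exact ⟨h1, h3⟩
      · rintro ⟨h1, h2⟩; exact ⟨⟨h1, by omega⟩, h2⟩
    have e2 : ((quadT N S n).filter (fun x => ¬ x.1.1 < x.2.1)).filter
        (fun x => ¬ x.2.1 < x.1.1) = (quadT N S n).filter (fun x => x.1.1 = x.2.1) := by
      ext x
      simp only [Finset.mem_filter]
      constructor
      · rintro ⟨⟨h1, h2⟩, h3⟩; exact ⟨h1, by omega⟩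
      · rintro ⟨h1, h2⟩; exact ⟨⟨h1, by omega⟩, by omega⟩
    rw [e1, e2]
    ring
  -- the strictly increasing part equals Mgen
  have hA : ∑ x ∈ (quadT N S n).filter (fun x => x.1.1 < x.2.1), W x
      = Mgen N S ε 2 n := by
    unfold Mgen
    refine Finset.sum_nbij' (fun x => ![x.1, x.2]) (fun f => (f 0, f 1))
      ?_ ?_ ?_ ?_ ?_
    · intro x hx
      rw [Finset.mem_filter, mem_quadT] at hx
      obtain ⟨⟨h1, h2, h3, h4, h5, h6, h7⟩, hlt⟩ := hx
      rw [mem_genTuples_two]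
      simp only [Matrix.cons_val_zero, Matrix.cons_val_one, Matrix.head_cons]
      exact ⟨h1, h2, h3, h4, h5, h6, hlt, h7⟩
    · intro f hf
      rw [mem_genTuples_two] at hf
      obtain ⟨h1, h2, h3, h4, h5, h6, hlt, h7⟩ := hf
      rw [Finset.mem_filter, mem_quadT]
      exact ⟨⟨h1, h2, h3, h4, h5, h6, h7⟩, hlt⟩
    · intro x _
      simp
    · intro f _
      funext i
      fin_cases i <;> simp
    · intro x _
      simp only [hW, Fin.sum_univ_two, Fin.prod_univ_two,
        Matrix.cons_val_zero, Matrix.cons_val_one, Matrix.head_cons]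
  -- the strictly decreasing part also equals Mgen (swap)
  have hB : ∑ x ∈ (quadT N S n).filter (fun x => x.2.1 < x.1.1), W x
      = ∑ x ∈ (quadT N S n).filter (fun x => x.1.1 < x.2.1), W x := by
    refine Finset.sum_nbij' Prod.swap Prod.swap ?_ ?_ ?_ ?_ ?_
    · rintro ⟨p, q⟩ hx
      rw [Finset.mem_filter, mem_quadT] at hx
      dsimp only at hx
      obtain ⟨⟨h1, h2, h3, h4, h5, h6, h7⟩, hlt⟩ := hx
      simp only [Prod.swap_prod_mk]
      rw [Finset.mem_filter, mem_quadT]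
      dsimp only
      exact ⟨⟨h3, h4, h1, h2, h6, h5, by omega⟩, hlt⟩
    · rintro ⟨p, q⟩ hx
      rw [Finset.mem_filter, mem_quadT] at hx
      dsimp only at hx
      obtain ⟨⟨h1, h2, h3, h4, h5, h6, h7⟩, hlt⟩ := hx
      simp only [Prod.swap_prod_mk]
      rw [Finset.mem_filter, mem_quadT]
      dsimp only
      exact ⟨⟨h3, h4, h1, h2, h6, h5, by omega⟩, hlt⟩
    · intro x _; exact Prod.swap_swap x
    · intro x _; exact Prod.swap_swap x
    · rintro ⟨p, q⟩ _
      simp only [hW, Prod.swap_prod_mk]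
      rw [add_comm q.2 p.2, mul_comm (q.2 : ℤ) (p.2 : ℤ)]
  -- the diagonal part
  have hD : ∑ x ∈ (quadT N S n).filter (fun x => x.1.1 = x.2.1), W x
      = ∑ r ∈ pairsW N S n n, ∑ j ∈ Finset.Ico 1 r.2,
          ε ^ r.2 * ((j : ℤ) * ((r.2 : ℤ) - (j : ℤ))) := by
    rw [Finset.sum_sigma' (pairsW N S n n) (fun r => Finset.Ico 1 r.2)
      (fun r j => ε ^ r.2 * ((j : ℤ) * ((r.2 : ℤ) - (j : ℤ))))]
    refine Finset.sum_nbij'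
      (fun x => (⟨(x.1.1, x.1.2 + x.2.2), x.1.2⟩ : (r : ℕ × ℕ) × ℕ))
      (fun y => ((y.1.1, y.2), (y.1.1, y.1.2 - y.2))) ?_ ?_ ?_ ?_ ?_
    · rintro ⟨⟨m1, d1⟩, ⟨m2, d2⟩⟩ hx
      rw [Finset.mem_filter, mem_quadT] at hx
      dsimp only at hx
      obtain ⟨⟨h1, h2, h3, h4, h5, h6, h7⟩, heq⟩ := hx
      subst heq
      rw [Finset.mem_sigma]
      constructor
      · show (m1, d1 + d2) ∈ pairsW N S n n
        rw [mem_pairsW le_rfl]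
        refine ⟨h1, by omega, h5, ?_⟩
        rw [Nat.mul_add]
        exact h7
      · show d1 ∈ Finset.Ico 1 (d1 + d2)
        rw [mem_Ico]
        omega
    · rintro ⟨⟨m, d⟩, j⟩ hy
      rw [Finset.mem_sigma, mem_Ico] at hy
      dsimp only at hy
      obtain ⟨hr, hj1, hj2⟩ := hy
      rw [mem_pairsW le_rfl] at hr
      obtain ⟨h1, h2, h3, h4⟩ := hr
      show ((m, j), (m, d - j)) ∈ _
      rw [Finset.mem_filter, mem_quadT]
      dsimp only
      refine ⟨⟨h1, by omega, h1, by omega, h3, h3, ?_⟩, rfl⟩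
      show m * j + m * (d - j) = n
      rw [← Nat.mul_add]
      rw [show j + (d - j) = d by omega]
      exact h4
    · rintro ⟨⟨m1, d1⟩, ⟨m2, d2⟩⟩ hx
      rw [Finset.mem_filter, mem_quadT] at hx
      dsimp only at hx
      obtain ⟨-, heq⟩ := hx
      subst heq
      show ((m1, d1), (m1, d1 + d2 - d1)) = _
      rw [show d1 + d2 - d1 = d2 from by omega]
    · rintro ⟨⟨m, d⟩, j⟩ hy
      rw [Finset.mem_sigma, mem_Ico] at hy
      dsimp only at hy
      obtain ⟨-, hj1, hj2⟩ := hy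
      show (⟨(m, j + (d - j)), j⟩ : (r : ℕ × ℕ) × ℕ) = _
      rw [show j + (d - j) = d from by omega]
    · rintro ⟨⟨m1, d1⟩, ⟨m2, d2⟩⟩ hx
      simp only [hW]
      show (ε ^ (d1 + d2) * ((d1 : ℤ) * (d2 : ℤ)) : ℤ)
        = ε ^ (d1 + d2) * ((d1 : ℤ) * (((d1 + d2 : ℕ) : ℤ) - (d1 : ℤ)))
      push_cast
      ring
  -- evaluate the diagonal part
  have hD2 : 6 * ∑ r ∈ pairsW N S n n, ∑ j ∈ Finset.Ico 1 r.2,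
        ε ^ r.2 * ((j : ℤ) * ((r.2 : ℤ) - (j : ℤ)))
      = sigmaGen N S ε 3 n - sigmaGen N S ε 1 n := by
    have h1 : sigmaGen N S ε 3 n - sigmaGen N S ε 1 n
        = ∑ r ∈ pairsW N S n n, ε ^ r.2 * ((r.2 : ℤ) ^ 3 - (r.2 : ℤ)) := by
      rw [sigma_pairs S ε hn le_rfl, sigma_pairs S ε hn le_rfl,
        ← Finset.sum_sub_distrib]
      exact Finset.sum_congr rfl fun r _ => by ring
    rw [h1, Finset.mul_sum]
    refine Finset.sum_congr rfl fun r _ => ?_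
    have h2 : ∑ j ∈ Finset.Ico 1 r.2, ε ^ r.2 * ((j : ℤ) * ((r.2 : ℤ) - (j : ℤ)))
        = ε ^ r.2 * ∑ j ∈ Finset.Ico 1 r.2, (j : ℤ) * ((r.2 : ℤ) - (j : ℤ)) :=
      (Finset.mul_sum _ _ _).symm
    rw [h2, ← mul_assoc, mul_comm (6 : ℤ) (ε ^ r.2), mul_assoc, six_sum]
  rw [key]
  have hfin := hsplit
  rw [hA, hB, hA, hD] at hfin
  have goal2 : (6 : ℤ) * ∑ x ∈ quadT N S n, W x
      = 12 * Mgen N S ε 2 n + (sigmaGen N S ε 3 n - sigmaGen N S ε 1 n) := by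
    rw [hfin, mul_add, mul_add, hD2]
    ring
  have hWW : ∑ x ∈ quadT N S n,
      ε ^ (x.1.2 + x.2.2) * ((x.1.2 : ℤ) * (x.2.2 : ℤ)) = ∑ x ∈ quadT N S n, W x := rfl
  rw [hWW]
  linarith [goal2]
end

section
/- Let N be a positive integer, S a non-empty subset of ℤ/Nℤ, and ε ∈ {1, −1}. Then for every positive integer n, 360·M_{S,N,ε,3}(n) = 60·Σ_{a+b+c=n, a,b,c ≥ 1} σ_{S,N,ε,1}(a)σ_{S,N,ε,1}(b)σ_{S,N,ε,1}(c) + 30·Σ_{a+b=n, a,b ≥ 1} σ_{S,N,ε,1}(a)σ_{S,N,ε,1}(b) − 30·Σ_{a+b=n, a,b ≥ 1} σ_{S,N,ε,3}(a)σ_{S,N,ε,1}(b) + 4·σ_{S,N,ε,1}(n) − 5·σ_{S,N,ε,3}(n) + σ_{S,N,ε,5}(n). -/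
open Finset

open Polynomial

lemma pow1 (d : ℕ) : 2 * ∑ i ∈ range d, (i:ℤ) = d^2 - d := by
  induction d with
  | zero => simp
  | succ d ih => rw [Finset.sum_range_succ]; push_cast; ring_nf; ring_nf at ih; linarith

lemma pow2 (d : ℕ) : 6 * ∑ i ∈ range d, (i:ℤ)^2 = 2*d^3 - 3*d^2 + d := by
  induction d with
  | zero => simp
  | succ d ih => rw [Finset.sum_range_succ]; push_cast; ring_nf; ring_nf at ih; linarith

lemma pow3 (d : ℕ) : 4 * ∑ i ∈ range d, (i:ℤ)^3 = d^4 - 2*d^3 + d^2 := by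
  induction d with
  | zero => simp
  | succ d ih => rw [Finset.sum_range_succ]; push_cast; ring_nf; ring_nf at ih; linarith

lemma pow4 (d : ℕ) : 30 * ∑ i ∈ range d, (i:ℤ)^4 = 6*d^5 - 15*d^4 + 10*d^3 - d := by
  induction d with
  | zero => simp
  | succ d ih => rw [Finset.sum_range_succ]; push_cast; ring_nf; ring_nf at ih; linarith

lemma Ico_to_range (d : ℕ) (F : ℕ → ℤ) (h0 : F 0 = 0) :
    ∑ i ∈ Ico 1 d, F i = ∑ i ∈ range d, F i := by
  rcases Nat.eq_zero_or_pos d with h | h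
  · subst h; simp
  · rw [range_eq_Ico, Finset.sum_eq_sum_Ico_succ_bot h, h0, zero_add]

lemma L2_s14 (d : ℕ) : 6 * ∑ i ∈ Ico 1 d, ((i * (d - i) : ℕ) : ℤ) = (d:ℤ)^3 - d := by
  rw [Ico_to_range _ _ (by simp)]
  have h2 : ∑ i ∈ range d, ((i * (d - i) : ℕ) : ℤ) = ∑ i ∈ range d, ((d:ℤ)*i - (i:ℤ)^2) := by
    refine Finset.sum_congr rfl fun i hi => ?_
    have : i ≤ d := le_of_lt (mem_range.1 hi)
    push_cast [Nat.cast_sub this]; ring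
  rw [h2, Finset.sum_sub_distrib, ← Finset.mul_sum]
  linear_combination 3 * (d:ℤ) * (pow1 d) - pow2 d

lemma L3_s14 (d : ℕ) :
    20 * ∑ i ∈ Ico 1 d, ((i:ℤ) * (((d - i : ℕ):ℤ)^3 - ((d - i : ℕ):ℤ))) = (d:ℤ)^5 - 5*(d:ℤ)^3 + 4*d := by
  rw [Ico_to_range _ _ (by simp)]
  have h2 : ∑ i ∈ range d, ((i:ℤ) * (((d - i : ℕ):ℤ)^3 - ((d - i : ℕ):ℤ)))
      = ∑ i ∈ range d, ((d:ℤ)^3*(i:ℤ) - (d:ℤ)*(i:ℤ) - (3*(d:ℤ)^2 - 1)*(i:ℤ)^2 + 3*(d:ℤ)*(i:ℤ)^3 - (i:ℤ)^4) := by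
    refine Finset.sum_congr rfl fun i hi => ?_
    have : i ≤ d := le_of_lt (mem_range.1 hi)
    push_cast [Nat.cast_sub this]; ring
  rw [h2]
  simp only [Finset.sum_add_distrib, Finset.sum_sub_distrib, ← Finset.mul_sum]
  have key : 3 * (20 * ((d:ℤ)^3 * (∑ i ∈ range d, (i:ℤ)) - (d:ℤ) * (∑ i ∈ range d, (i:ℤ)) - (3*(d:ℤ)^2 - 1) * (∑ i ∈ range d, (i:ℤ)^2) + 3*(d:ℤ) * (∑ i ∈ range d, (i:ℤ)^3) - (∑ i ∈ range d, (i:ℤ)^4))) = 3 * ((d:ℤ)^5 - 5*(d:ℤ)^3 + 4*d) := by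
    linear_combination (30*(d:ℤ)^3 - 30*(d:ℤ)) * pow1 d - 10*(3*(d:ℤ)^2-1) * pow2 d + 45*(d:ℤ) * pow3 d - 2 * pow4 d
  linarith


section Aux
variable (N : ℕ) (S : Finset (ZMod N)) (ε : ℤ) (n : ℕ)

/-- relevant m values -/
def MMa (N : ℕ) (S : Finset (ZMod N)) (n : ℕ) : Finset ℕ :=
  (Icc 1 n).filter (fun m => ((m : ℕ) : ZMod N) ∈ S)

noncomputable def gpa (n : ℕ) (w : ℕ → ℤ) (m : ℕ) : Polynomial ℤ :=
  ∑ d ∈ Icc 1 n, C (w d) * X ^ (m * d)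

lemma gpa_coeff (w : ℕ → ℤ) (m a : ℕ) :
    (gpa n w m).coeff a = ∑ d ∈ Icc 1 n, if m * d = a then w d else 0 := by
  rw [gpa, Polynomial.finset_sum_coeff]
  refine Finset.sum_congr rfl fun d _ => ?_
  rw [Polynomial.coeff_C_mul, Polynomial.coeff_X_pow]
  by_cases h : a = m * d
  · simp [h]
  · rw [if_neg h, if_neg (fun hh => h hh.symm), mul_zero]

lemma gpa_mul (w w' : ℕ → ℤ) (m m' : ℕ) :
    gpa n w m * gpa n w' m' =
      ∑ d1 ∈ Icc 1 n, ∑ d2 ∈ Icc 1 n, C (w d1 * w' d2) * X ^ (m * d1 + m' * d2) := by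
  rw [gpa, gpa, Finset.sum_mul_sum]
  refine Finset.sum_congr rfl fun d1 _ => Finset.sum_congr rfl fun d2 _ => ?_
  rw [mul_mul_mul_comm, ← C_mul, ← pow_add]

lemma dsum_coeff (s t : Finset ℕ) (v : ℕ → ℕ → ℤ) (e : ℕ → ℕ → ℕ) (a : ℕ) :
    (∑ d1 ∈ s, ∑ d2 ∈ t, C (v d1 d2) * X ^ (e d1 d2)).coeff a
      = ∑ d1 ∈ s, ∑ d2 ∈ t, if e d1 d2 = a then v d1 d2 else 0 := by
  rw [Polynomial.finset_sum_coeff]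
  refine Finset.sum_congr rfl fun d1 _ => ?_
  rw [Polynomial.finset_sum_coeff]
  refine Finset.sum_congr rfl fun d2 _ => ?_
  rw [Polynomial.coeff_C_mul, Polynomial.coeff_X_pow]
  by_cases h : a = e d1 d2
  · simp [h]
  · rw [if_neg h, if_neg (fun hh => h hh.symm), mul_zero]

lemma pairs_div (w : ℕ → ℤ) (a : ℕ) (ha : a ≤ n) :
    ∑ m ∈ MMa N S n, ∑ d ∈ Icc 1 n, (if m * d = a then w d else 0)
      = ∑ d ∈ a.divisors.filter (fun d => (((a / d : ℕ) : ZMod N) ∈ S)), w d := by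
  rcases Nat.eq_zero_or_pos a with rfl | hapos
  · rw [Nat.divisors_zero]
    simp only [Finset.filter_empty, Finset.sum_empty]
    refine Finset.sum_eq_zero fun m hm => Finset.sum_eq_zero fun d hd => ?_
    have hm1 : 1 ≤ m := by
      simp only [MMa, Finset.mem_filter, Finset.mem_Icc] at hm; exact hm.1.1
    have hd1 : 1 ≤ d := (Finset.mem_Icc.1 hd).1
    have : m * d ≠ 0 := by positivity
    simp [this]
  · rw [← Finset.sum_product']
    rw [← Finset.sum_filter]
    refine Finset.sum_nbij' (fun p => p.2) (fun d => (a / d, d)) ?_ ?_ ?_ ?_ ?_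
    · rintro ⟨m, d⟩ hp
      simp only [Finset.mem_filter, Finset.mem_product, MMa, Finset.mem_Icc] at hp
      obtain ⟨⟨⟨hm, hS'⟩, hd⟩, heq⟩ := hp
      simp only [Nat.mem_divisors, Finset.mem_filter]
      constructor
      · exact ⟨⟨m, by rw [← heq]; ring⟩, by omega⟩
      · have : a / d = m := by
          rw [← heq]; exact Nat.mul_div_cancel _ (by omega)
        rw [this]; exact hS'
    · intro d hd
      simp only [Finset.mem_filter, Nat.mem_divisors] at hd
      obtain ⟨⟨hdvd, hane⟩, hS'⟩ := hd
      have hd0 : 0 < d := Nat.pos_of_dvd_of_pos hdvd hapos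
      have hda : d ≤ a := Nat.le_of_dvd hapos hdvd
      have hq : 0 < a / d := Nat.div_pos hda hd0
      have hqa : a / d ≤ a := Nat.div_le_self a d
      simp only [Finset.mem_filter, Finset.mem_product, MMa, Finset.mem_Icc]
      exact ⟨⟨⟨⟨hq, by omega⟩, hS'⟩, ⟨hd0, by omega⟩⟩, Nat.div_mul_cancel hdvd⟩
    · rintro ⟨m, d⟩ hp
      simp only [Finset.mem_filter, Finset.mem_product, MMa, Finset.mem_Icc] at hp
      obtain ⟨⟨⟨hm, _⟩, hd⟩, heq⟩ := hp
      have : a / d = m := by rw [← heq]; exact Nat.mul_div_cancel _ (by omega)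
      simp [this]
    · intro d _; rfl
    · intro p _; rfl

lemma coeffE (k a : ℕ) (ha : a ≤ n) :
    (∑ m ∈ MMa N S n, gpa n (fun d => ε ^ d * (d : ℤ) ^ k) m).coeff a
      = sigmaGen N S ε k a := by
  rw [Polynomial.finset_sum_coeff]
  rw [Finset.sum_congr rfl fun m _ => gpa_coeff n _ m a]
  rw [pairs_div N S n _ a ha, sigmaGen]

lemma reindex_pair (m a : ℕ) (hm : 1 ≤ m) (ha : a ≤ n) (V : ℕ → ℕ → ℤ) :
    ∑ d1 ∈ Icc 1 n, ∑ d2 ∈ Icc 1 n, (if m * d1 + m * d2 = a then V d1 d2 else 0)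
      = ∑ e ∈ Icc 1 n, (if m * e = a then ∑ i ∈ Ico 1 e, V i (e - i) else 0) := by
  have step1 : ∑ d1 ∈ Icc 1 n, ∑ d2 ∈ Icc 1 n, (if m * d1 + m * d2 = a then V d1 d2 else 0)
      = ∑ q ∈ ((Icc 1 n) ×ˢ (Icc 1 n)).filter (fun q => m * q.1 = a ∧ q.2 < q.1),
          V q.2 (q.1 - q.2) := by
    rw [← Finset.sum_product', ← Finset.sum_filter]
    refine Finset.sum_nbij' (fun p => (p.1 + p.2, p.1)) (fun q => (q.2, q.1 - q.2)) ?_ ?_ ?_ ?_ ?_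
    · rintro ⟨d1, d2⟩ hp
      simp only [Finset.mem_filter, Finset.mem_product, Finset.mem_Icc] at hp ⊢
      obtain ⟨⟨⟨h1, h2⟩, h3, h4⟩, heq⟩ := hp
      have heq2 : m * (d1 + d2) = a := by rw [Nat.mul_add]; omega
      have hle : d1 + d2 ≤ m * (d1 + d2) := Nat.le_mul_of_pos_left _ hm
      exact ⟨⟨⟨by omega, by omega⟩, h1, h2⟩, heq2, by omega⟩
    · rintro ⟨e, i⟩ hq
      simp only [Finset.mem_filter, Finset.mem_product, Finset.mem_Icc] at hq ⊢
      obtain ⟨⟨⟨h1, h2⟩, h3, h4⟩, heq, hlt⟩ := hq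
      have hsum : i + (e - i) = e := by omega
      refine ⟨⟨⟨h3, h4⟩, by omega, by omega⟩, ?_⟩
      rw [← Nat.mul_add, hsum]; exact heq
    · rintro ⟨d1, d2⟩ _
      simp only [Prod.mk.injEq]
      exact ⟨trivial, by omega⟩
    · rintro ⟨e, i⟩ hq
      simp only [Finset.mem_filter, Finset.mem_product, Finset.mem_Icc] at hq
      simp only [Prod.mk.injEq]
      exact ⟨by omega, trivial⟩
    · rintro ⟨d1, d2⟩ _
      simp only [Nat.add_sub_cancel_left]
  have step2 : ∑ q ∈ ((Icc 1 n) ×ˢ (Icc 1 n)).filter (fun q => m * q.1 = a ∧ q.2 < q.1),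
        V q.2 (q.1 - q.2)
      = ∑ e ∈ Icc 1 n, (if m * e = a then ∑ i ∈ Ico 1 e, V i (e - i) else 0) := by
    rw [Finset.sum_filter, Finset.sum_product]
    refine Finset.sum_congr rfl fun e he => ?_
    by_cases hP : m * e = a
    · simp only [hP, true_and, if_true]
      rw [← Finset.sum_filter]
      have hs : (Icc 1 n).filter (fun i => i < e) = Ico 1 e := by
        ext i
        simp only [Finset.mem_filter, Finset.mem_Icc, Finset.mem_Ico]
        have he' := Finset.mem_Icc.1 he
        omega
      rw [hs]
    · simp [hP]
  rw [step1, step2]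

lemma sq_coeff (m : ℕ) (hm1 : 1 ≤ m) (j : ℕ) (hj : j ≤ n) :
    6 * ((gpa n (fun d => ε ^ d * d) m) ^ 2).coeff j
      = ∑ e ∈ Icc 1 n, (if m * e = j then ε ^ e * ((e:ℤ) ^ 3 - e) else 0) := by
  rw [pow_two, gpa_mul, dsum_coeff, reindex_pair n m j hm1 hj, Finset.mul_sum]
  refine Finset.sum_congr rfl fun e he => ?_
  rw [mul_ite, mul_zero]
  by_cases hP : m * e = j
  · rw [if_pos hP, if_pos hP]
    have inner : ∑ i ∈ Ico 1 e, (ε ^ i * (i:ℤ)) * (ε ^ (e - i) * ((e - i : ℕ):ℤ))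
        = ε ^ e * ∑ i ∈ Ico 1 e, ((i * (e - i) : ℕ) : ℤ) := by
      rw [Finset.mul_sum]
      refine Finset.sum_congr rfl fun i hi => ?_
      have hi' := Finset.mem_Ico.1 hi
      have hpow : ε ^ i * ε ^ (e - i) = ε ^ e := by
        rw [← pow_add]; congr 1; omega
      push_cast
      linear_combination ((i:ℤ) * ((e - i : ℕ):ℤ)) * hpow
    rw [inner]
    linear_combination (ε ^ e) * L2_s14 e
  · rw [if_neg hP, if_neg hP]

lemma coeffP2 (a : ℕ) (ha : a ≤ n) :
    6 * (∑ m ∈ MMa N S n, (gpa n (fun d => ε ^ d * d) m) ^ 2).coeff a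
      = sigmaGen N S ε 3 a - sigmaGen N S ε 1 a := by
  rw [Polynomial.finset_sum_coeff, Finset.mul_sum]
  rw [Finset.sum_congr rfl fun m hm => sq_coeff ε n m
    (by simp only [MMa, Finset.mem_filter, Finset.mem_Icc] at hm; exact hm.1.1) a ha]
  rw [pairs_div N S n _ a ha, sigmaGen, sigmaGen, ← Finset.sum_sub_distrib]
  refine Finset.sum_congr rfl fun d _ => by push_cast; ring

lemma coeffP3 (a : ℕ) (ha : a ≤ n) :
    120 * (∑ m ∈ MMa N S n, (gpa n (fun d => ε ^ d * d) m) ^ 3).coeff a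
      = sigmaGen N S ε 5 a - 5 * sigmaGen N S ε 3 a + 4 * sigmaGen N S ε 1 a := by
  rw [Polynomial.finset_sum_coeff, Finset.mul_sum]
  have key : ∀ m ∈ MMa N S n,
      120 * ((gpa n (fun d => ε ^ d * d) m) ^ 3).coeff a
        = ∑ e ∈ Icc 1 n, (if m * e = a then ε ^ e * ((e:ℤ)^5 - 5*(e:ℤ)^3 + 4*e) else 0) := by
    intro m hm
    have hm1 : 1 ≤ m := by
      simp only [MMa, Finset.mem_filter, Finset.mem_Icc] at hm; exact hm.1.1
    have h3 : (gpa n (fun d => ε ^ d * d) m) ^ 3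
        = (gpa n (fun d => ε ^ d * d) m) * (gpa n (fun d => ε ^ d * d) m) ^ 2 := by ring
    rw [h3, Polynomial.coeff_mul]
    have step : (120 : ℤ) * ∑ p ∈ Finset.HasAntidiagonal.antidiagonal a,
          (gpa n (fun d => ε ^ d * d) m).coeff p.1 * ((gpa n (fun d => ε ^ d * d) m) ^ 2).coeff p.2
        = 20 * ∑ p ∈ Finset.HasAntidiagonal.antidiagonal a,
          (gpa n (fun d => ε ^ d * d) m).coeff p.1
            * (gpa n (fun e => ε ^ e * ((e:ℤ) ^ 3 - e)) m).coeff p.2 := by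
      rw [Finset.mul_sum, Finset.mul_sum]
      refine Finset.sum_congr rfl fun p hp => ?_
      have hp2 : p.2 ≤ n := by
        have := Finset.HasAntidiagonal.mem_antidiagonal.1 hp; omega
      have hcoeff : (gpa n (fun e => ε ^ e * ((e:ℤ) ^ 3 - e)) m).coeff p.2
          = 6 * ((gpa n (fun d => ε ^ d * d) m) ^ 2).coeff p.2 := by
        rw [sq_coeff ε n m hm1 p.2 hp2, gpa_coeff]
      rw [hcoeff]; ring
    rw [step, ← Polynomial.coeff_mul, gpa_mul, dsum_coeff,
      reindex_pair n m a hm1 ha, Finset.mul_sum]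
    refine Finset.sum_congr rfl fun e he => ?_
    rw [mul_ite, mul_zero]
    by_cases hP : m * e = a
    · rw [if_pos hP, if_pos hP]
      have inner : ∑ i ∈ Ico 1 e,
            (ε ^ i * (i:ℤ)) * (ε ^ (e - i) * (((e - i : ℕ):ℤ) ^ 3 - ((e - i : ℕ):ℤ)))
          = ε ^ e * ∑ i ∈ Ico 1 e, ((i:ℤ) * (((e - i : ℕ):ℤ) ^ 3 - ((e - i : ℕ):ℤ))) := by
        rw [Finset.mul_sum]
        refine Finset.sum_congr rfl fun i hi => ?_
        have hi' := Finset.mem_Ico.1 hi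
        have hpow : ε ^ i * ε ^ (e - i) = ε ^ e := by
          rw [← pow_add]; congr 1; omega
        linear_combination ((i:ℤ) * (((e - i : ℕ):ℤ)^3 - ((e - i : ℕ):ℤ))) * hpow
      rw [inner]
      linear_combination (ε ^ e) * L3_s14 e
    · rw [if_neg hP, if_neg hP]
  rw [Finset.sum_congr rfl key, pairs_div N S n _ a ha, sigmaGen, sigmaGen, sigmaGen,
    Finset.mul_sum, Finset.mul_sum, ← Finset.sum_sub_distrib, ← Finset.sum_add_distrib]
  refine Finset.sum_congr rfl fun d _ => by push_cast; ring

lemma sum_pi3 {α β : Type*} [DecidableEq α] [AddCommMonoid β] (s : Finset α)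
    (F : (Fin 3 → α) → β) :
    ∑ c ∈ Fintype.piFinset (fun _ : Fin 3 => s), F c
      = ∑ p ∈ s ×ˢ s ×ˢ s, F ![p.1, p.2.1, p.2.2] := by
  refine Finset.sum_nbij' (fun c => (c 0, c 1, c 2)) (fun p => ![p.1, p.2.1, p.2.2])
    ?_ ?_ ?_ ?_ ?_
  · intro c hc
    simp only [Fintype.mem_piFinset] at hc
    simp only [Finset.mem_product]
    exact ⟨hc 0, hc 1, hc 2⟩
  · intro p hp
    simp only [Finset.mem_product] at hp
    simp only [Fintype.mem_piFinset]
    intro i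
    fin_cases i
    · simpa using hp.1
    · simpa using hp.2.1
    · simpa using hp.2.2
  · intro c _
    funext i
    fin_cases i <;> rfl
  · intro p _
    rfl
  · intro c _
    have hc : (![c 0, c 1, c 2] : Fin 3 → α) = c := by
      funext i; fin_cases i <;> rfl
    rw [hc]

lemma inj_of_pairwise3 {α : Type*} (c : Fin 3 → α) (h1 : c 1 ≠ c 0) (h2 : c 2 ≠ c 0)
    (h3 : c 2 ≠ c 1) : Function.Injective c := by
  intro i j hij
  fin_cases i <;> fin_cases j <;> simp_all

lemma perm_fin3_id (σ : Equiv.Perm (Fin 3)) (hσ : StrictMono σ) : σ = Equiv.refl (Fin 3) := by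
  have h01 : σ 0 < σ 1 := hσ (by decide)
  have h12 : σ 1 < σ 2 := hσ (by decide)
  have l2 : (σ 2 : ℕ) < 3 := (σ 2).isLt
  rw [Fin.lt_def] at h01 h12
  apply Equiv.ext
  intro i
  fin_cases i <;> simp only [Equiv.refl_apply] <;> rw [Fin.ext_iff] <;> simp <;> omega

lemma sort_unique {c : Fin 3 → ℕ} (hinj : Function.Injective c) (π : Equiv.Perm (Fin 3))
    (hπ : Monotone (c ∘ π)) : π = Tuple.sort c := by
  have h1 : c ∘ π = c ∘ Tuple.sort c := Tuple.unique_monotone hπ (Tuple.monotone_sort c)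
  apply Equiv.ext; intro i
  exact hinj (congrFun h1 i)

lemma six_fold (M : Finset ℕ) (h : ℕ → Polynomial ℤ) :
    ∑ c ∈ (Fintype.piFinset fun _ : Fin 3 => M).filter
        (fun c => c 1 ≠ c 0 ∧ c 2 ≠ c 0 ∧ c 2 ≠ c 1), ∏ i, h (c i)
      = 6 * ∑ t ∈ (Fintype.piFinset fun _ : Fin 3 => M).filter
          (fun t => ∀ i j : Fin 3, i < j → t i < t j), ∏ i, h (t i) := by
  have smT : ∀ t ∈ (Fintype.piFinset fun _ : Fin 3 => M).filter
      (fun t => ∀ i j : Fin 3, i < j → t i < t j), StrictMono t := by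
    intro t ht
    have := (Finset.mem_filter.1 ht).2
    exact fun i j hij => this i j hij
  have main : ∑ p ∈ (Finset.univ : Finset (Equiv.Perm (Fin 3))) ×ˢ
      ((Fintype.piFinset fun _ : Fin 3 => M).filter
        (fun t => ∀ i j : Fin 3, i < j → t i < t j)),
        (∏ i, h ((p.2 ∘ p.1) i))
      = ∑ c ∈ (Fintype.piFinset fun _ : Fin 3 => M).filter
        (fun c => c 1 ≠ c 0 ∧ c 2 ≠ c 0 ∧ c 2 ≠ c 1), ∏ i, h (c i) := by
    refine Finset.sum_nbij' (fun p => p.2 ∘ p.1)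
      (fun c => ((Tuple.sort c)⁻¹, c ∘ Tuple.sort c)) ?_ ?_ ?_ ?_ ?_
    · rintro ⟨σ, t⟩ hp
      simp only [Finset.mem_product] at hp
      have hsm := smT t hp.2
      have htM : ∀ i, t i ∈ M := by
        have := (Finset.mem_filter.1 hp.2).1
        exact fun i => Fintype.mem_piFinset.1 this i
      have hinj : Function.Injective (t ∘ σ) := hsm.injective.comp σ.injective
      simp only [Finset.mem_filter, Fintype.mem_piFinset]
      refine ⟨fun i => htM (σ i), ?_, ?_, ?_⟩ <;>
        exact fun e => by have := hinj e; simp at this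
    · intro c hc
      simp only [Finset.mem_filter, Fintype.mem_piFinset] at hc
      obtain ⟨hcM, h1, h2, h3⟩ := hc
      have hinj : Function.Injective c := inj_of_pairwise3 c h1 h2 h3
      simp only [Finset.mem_product, Finset.mem_univ, true_and, Finset.mem_filter,
        Fintype.mem_piFinset]
      have hmono : Monotone (c ∘ Tuple.sort c) := Tuple.monotone_sort c
      have hsm : StrictMono (c ∘ Tuple.sort c) :=
        hmono.strictMono_of_injective (hinj.comp (Tuple.sort c).injective)
      exact ⟨fun i => hcM _, fun i j hij => hsm hij⟩
    · rintro ⟨σ, t⟩ hp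
      simp only [Finset.mem_product] at hp
      have hsm := smT t hp.2
      have hinj : Function.Injective (t ∘ σ) := hsm.injective.comp σ.injective
      have hmono : Monotone ((t ∘ ⇑σ) ∘ ⇑(σ⁻¹)) := by
        have he : (t ∘ ⇑σ) ∘ ⇑(σ⁻¹) = t := by
          funext x; simp
        rw [he]; exact hsm.monotone
      have hσ : σ⁻¹ = Tuple.sort (t ∘ σ) := sort_unique hinj σ⁻¹ hmono
      have comp2 : (t ∘ σ) ∘ Tuple.sort (t ∘ σ) = t := by
        rw [← hσ]; funext x; simp
      simp only [Prod.mk.injEq]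
      exact ⟨by rw [← hσ, inv_inv], comp2⟩
    · intro c _
      funext x
      simp
    · rintro ⟨σ, t⟩ _
      rfl
  rw [← main, Finset.sum_product]
  have inner : ∀ σ : Equiv.Perm (Fin 3),
      ∑ t ∈ (Fintype.piFinset fun _ : Fin 3 => M).filter
        (fun t => ∀ i j : Fin 3, i < j → t i < t j), (∏ i, h (((t : Fin 3 → ℕ) ∘ σ) i))
      = ∑ t ∈ (Fintype.piFinset fun _ : Fin 3 => M).filter
        (fun t => ∀ i j : Fin 3, i < j → t i < t j), ∏ i, h (t i) := by
    intro σ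
    refine Finset.sum_congr rfl fun t _ => ?_
    exact Equiv.prod_comp σ (fun i => h (t i))
  rw [Finset.sum_congr rfl fun σ _ => inner σ]
  rw [Finset.sum_const]
  have hc6 : (Finset.univ : Finset (Equiv.Perm (Fin 3))).card = 6 := by
    simp [Fintype.card_perm]
    rfl
  rw [hc6]
  simp [nsmul_eq_mul]

lemma alg_id (M : Finset ℕ) (h : ℕ → Polynomial ℤ) :
    ∑ a ∈ M, ∑ b ∈ M.erase a, ∑ c ∈ (M.erase a).erase b, h a * h b * h c
      = (∑ m ∈ M, h m) ^ 3 - 3 * ((∑ m ∈ M, h m ^ 2) * (∑ m ∈ M, h m))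
          + 2 * ∑ m ∈ M, h m ^ 3 := by
  set E := ∑ m ∈ M, h m with hE
  set P2 := ∑ m ∈ M, h m ^ 2 with hP2
  set P3 := ∑ m ∈ M, h m ^ 3 with hP3
  have key : ∀ a ∈ M, ∑ b ∈ M.erase a, ∑ c ∈ (M.erase a).erase b, h a * h b * h c
      = h a * (E - h a) ^ 2 - h a * (P2 - h a ^ 2) := by
    intro a ha
    calc ∑ b ∈ M.erase a, ∑ c ∈ (M.erase a).erase b, h a * h b * h c
        = ∑ b ∈ M.erase a, (h a * (E - h a) * h b - h a * h b ^ 2) := by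
          refine Finset.sum_congr rfl fun b hb => ?_
          rw [← Finset.mul_sum, Finset.sum_erase_eq_sub hb,
            Finset.sum_erase_eq_sub ha]
          ring
      _ = h a * (E - h a) * (E - h a) - h a * (P2 - h a ^ 2) := by
          rw [Finset.sum_sub_distrib, ← Finset.mul_sum, ← Finset.mul_sum,
            Finset.sum_erase_eq_sub ha, Finset.sum_erase_eq_sub ha]
      _ = h a * (E - h a) ^ 2 - h a * (P2 - h a ^ 2) := by ring
  rw [Finset.sum_congr rfl key]
  have expand : ∀ a ∈ M, h a * (E - h a) ^ 2 - h a * (P2 - h a ^ 2)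
      = (h a * (E ^ 2 - P2) - h a ^ 2 * (2 * E)) + 2 * h a ^ 3 := by
    intro a _; ring
  rw [Finset.sum_congr rfl expand, Finset.sum_add_distrib, Finset.sum_sub_distrib,
    ← Finset.sum_mul, ← Finset.sum_mul, ← Finset.mul_sum, ← hE, ← hP2, ← hP3]
  ring

lemma D3_iterated (M : Finset ℕ) (h : ℕ → Polynomial ℤ) :
    ∑ c ∈ (Fintype.piFinset fun _ : Fin 3 => M).filter
        (fun c => c 1 ≠ c 0 ∧ c 2 ≠ c 0 ∧ c 2 ≠ c 1), ∏ i, h (c i)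
      = ∑ a ∈ M, ∑ b ∈ M.erase a, ∑ c ∈ (M.erase a).erase b, h a * h b * h c := by
  rw [Finset.sum_filter, sum_pi3, Finset.sum_product]
  refine Finset.sum_congr rfl fun a _ => ?_
  rw [Finset.sum_product]
  have rhs1 : ∑ b ∈ M.erase a, ∑ c ∈ (M.erase a).erase b, h a * h b * h c
      = ∑ b ∈ M, if b ≠ a then
          (∑ c ∈ M, if c ≠ a ∧ c ≠ b then h a * h b * h c else 0) else 0 := by
    rw [← Finset.filter_ne', Finset.sum_filter]
    refine Finset.sum_congr rfl fun b _ => ?_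
    by_cases hb : b ≠ a
    · rw [if_pos hb,
        ← Finset.filter_ne' (Finset.filter (fun x => x ≠ a) M) b,
        Finset.filter_filter, Finset.sum_filter, if_pos hb]
    · rw [if_neg hb, if_neg hb]
  rw [rhs1]
  refine Finset.sum_congr rfl fun b _ => ?_
  by_cases hb : b ≠ a
  · rw [if_pos hb]
    refine Finset.sum_congr rfl fun c _ => ?_
    have e1 : (![a, b, c] : Fin 3 → ℕ) 1 = b := rfl
    have e0 : (![a, b, c] : Fin 3 → ℕ) 0 = a := rfl
    have e2 : (![a, b, c] : Fin 3 → ℕ) 2 = c := rfl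
    rw [e0, e1, e2, Fin.prod_univ_three, e0, e1, e2]
    by_cases hc : c ≠ a ∧ c ≠ b
    · rw [if_pos ⟨hb, hc.1, hc.2⟩, if_pos hc]
    · rw [if_neg (fun hh => hc ⟨hh.2.1, hh.2.2⟩), if_neg hc]
  · rw [if_neg hb]
    refine Finset.sum_eq_zero fun c _ => ?_
    have e1 : (![a, b, c] : Fin 3 → ℕ) 1 = b := rfl
    have e0 : (![a, b, c] : Fin 3 → ℕ) 0 = a := rfl
    rw [if_neg]
    rw [e0, e1]
    exact fun hh => hb hh.1

lemma gpa_mul3 (w : ℕ → ℤ) (m1 m2 m3 : ℕ) :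
    gpa n w m1 * gpa n w m2 * gpa n w m3 =
      ∑ d1 ∈ Icc 1 n, ∑ d2 ∈ Icc 1 n, ∑ d3 ∈ Icc 1 n,
        C (w d1 * w d2 * w d3) * X ^ (m1 * d1 + m2 * d2 + m3 * d3) := by
  rw [gpa_mul, Finset.sum_mul]
  refine Finset.sum_congr rfl fun d1 _ => ?_
  rw [Finset.sum_mul]
  refine Finset.sum_congr rfl fun d2 _ => ?_
  rw [gpa, Finset.mul_sum]
  refine Finset.sum_congr rfl fun d3 _ => ?_
  rw [mul_mul_mul_comm, ← C_mul, ← pow_add]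

lemma tsum_coeff (s : Finset ℕ) (v : ℕ → ℕ → ℕ → ℤ) (e : ℕ → ℕ → ℕ → ℕ) (a : ℕ) :
    (∑ d1 ∈ s, ∑ d2 ∈ s, ∑ d3 ∈ s, C (v d1 d2 d3) * X ^ (e d1 d2 d3)).coeff a
      = ∑ d1 ∈ s, ∑ d2 ∈ s, ∑ d3 ∈ s, if e d1 d2 d3 = a then v d1 d2 d3 else 0 := by
  rw [Polynomial.finset_sum_coeff]
  refine Finset.sum_congr rfl fun d1 _ => ?_
  rw [Polynomial.finset_sum_coeff]
  refine Finset.sum_congr rfl fun d2 _ => ?_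
  rw [Polynomial.finset_sum_coeff]
  refine Finset.sum_congr rfl fun d3 _ => ?_
  rw [Polynomial.coeff_C_mul, Polynomial.coeff_X_pow]
  by_cases h : a = e d1 d2 d3
  · simp [h]
  · rw [if_neg h, if_neg (fun hh => h hh.symm), mul_zero]

lemma conv_eq (n : ℕ) (hn : 0 < n) (F G : ℕ → ℤ) (hF : F 0 = 0) (hG : G 0 = 0) :
    ∑ p ∈ Finset.HasAntidiagonal.antidiagonal n, F p.1 * G p.2 = ∑ a ∈ Ico 1 n, F a * G (n - a) := by
  rw [Finset.Nat.sum_antidiagonal_eq_sum_range_succ (f := fun a b => F a * G b)]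
  rw [Finset.range_eq_Ico, Finset.sum_eq_sum_Ico_succ_bot (by omega),
    Finset.sum_Ico_succ_top (by omega)]
  simp [hF, hG]

lemma ite_sum_comm {γ : Type*} (s : Finset γ) (P : Prop) [Decidable P]
    (Q : γ → Prop) [DecidablePred Q] (v : γ → ℤ) :
    (if P then (∑ x ∈ s, if Q x then v x else 0) else 0)
      = ∑ x ∈ s, if P ∧ Q x then v x else 0 := by
  by_cases hP : P
  · simp [hP]
  · simp [hP]

lemma sorted3_intro (a b c : ℕ) (h1 : a < b) (h2 : b < c) :
    ∀ i j : Fin 3, i < j → (![a, b, c] : Fin 3 → ℕ) i < ![a, b, c] j := by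
  intro i j hij
  fin_cases i <;> fin_cases j <;>
    simp_all [Matrix.cons_val_zero, Matrix.cons_val_one, Matrix.head_cons,
      Matrix.cons_val_two, Matrix.vecTail, Matrix.vecHead] <;> omega

lemma Mgen_bridge :
    Mgen N S ε 3 n = ∑ y ∈ (((MMa N S n) ×ˢ (MMa N S n) ×ˢ (MMa N S n)) ×ˢ
        ((Icc 1 n) ×ˢ (Icc 1 n) ×ˢ (Icc 1 n))).filter
        (fun y => (y.1.1 < y.1.2.1 ∧ y.1.2.1 < y.1.2.2) ∧
          y.1.1 * y.2.1 + y.1.2.1 * y.2.2.1 + y.1.2.2 * y.2.2.2 = n),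
      ε ^ (y.2.1 + y.2.2.1 + y.2.2.2) * ((y.2.1 : ℤ) * (y.2.2.1 : ℤ) * (y.2.2.2 : ℤ)) := by
  rw [Mgen]
  refine Finset.sum_nbij'
    (fun f => (((f 0).1, (f 1).1, (f 2).1), ((f 0).2, (f 1).2, (f 2).2)))
    (fun y => ![(y.1.1, y.2.1), (y.1.2.1, y.2.2.1), (y.1.2.2, y.2.2.2)]) ?_ ?_ ?_ ?_ ?_
  · intro f hf
    rw [genTuples, Finset.mem_filter, Fintype.mem_piFinset] at hf
    obtain ⟨hpi, hpos, hres, hsort, hsum⟩ := hf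
    have hB : ∀ i : Fin 3, (f i).1 ≤ n ∧ (f i).2 ≤ n := by
      intro i
      have := hpi i
      rw [Finset.mem_product, Finset.mem_range, Finset.mem_range] at this
      omega
    simp only [Finset.mem_filter, Finset.mem_product, MMa, Finset.mem_Icc]
    refine ⟨⟨⟨⟨⟨(hpos 0).1, (hB 0).1⟩, hres 0⟩,
      ⟨⟨(hpos 1).1, (hB 1).1⟩, hres 1⟩, ⟨⟨(hpos 2).1, (hB 2).1⟩, hres 2⟩⟩,
      ⟨(hpos 0).2, (hB 0).2⟩, ⟨(hpos 1).2, (hB 1).2⟩, ⟨(hpos 2).2, (hB 2).2⟩⟩,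
      ⟨hsort 0 1 (by decide), hsort 1 2 (by decide)⟩, ?_⟩
    rw [Fin.sum_univ_three] at hsum
    exact hsum
  · intro y hy
    simp only [Finset.mem_filter, Finset.mem_product, MMa, Finset.mem_Icc] at hy
    obtain ⟨⟨⟨h1, h2, h3⟩, hd1, hd2, hd3⟩, ⟨hs1, hs2⟩, hsum⟩ := hy
    obtain ⟨⟨hm1, hm1'⟩, hr1⟩ := h1
    obtain ⟨⟨hm2, hm2'⟩, hr2⟩ := h2
    obtain ⟨⟨hm3, hm3'⟩, hr3⟩ := h3
    obtain ⟨hd1a, hd1b⟩ := hd1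
    obtain ⟨hd2a, hd2b⟩ := hd2
    obtain ⟨hd3a, hd3b⟩ := hd3
    rw [genTuples, Finset.mem_filter, Fintype.mem_piFinset]
    refine ⟨?_, ?_, ?_, ?_, ?_⟩
    · intro i
      fin_cases i <;>
        · simp [Matrix.cons_val_two, Matrix.vecTail, Matrix.vecHead, Finset.mem_product]
          omega
    · intro i
      fin_cases i <;>
        · simp [Matrix.cons_val_two, Matrix.vecTail, Matrix.vecHead]
          omega
    · intro i
      fin_cases i <;>
        · simp [Matrix.cons_val_two, Matrix.vecTail, Matrix.vecHead]
          assumption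
    · intro i j hij
      fin_cases i <;> fin_cases j <;>
        simp_all [Matrix.cons_val_two, Matrix.vecTail, Matrix.vecHead, Fin.lt_def] <;> omega
    · rw [Fin.sum_univ_three]
      simp [Matrix.cons_val_two, Matrix.vecTail, Matrix.vecHead]
      exact hsum
  · intro f hf
    funext i
    fin_cases i <;> rfl
  · intro y hy
    rfl
  · intro f hf
    rw [Fin.sum_univ_three, Fin.prod_univ_three]

lemma sorted3_iff (a b c : ℕ) :
    (∀ i j : Fin 3, i < j → (![a, b, c] : Fin 3 → ℕ) i < ![a, b, c] j) ↔ (a < b ∧ b < c) := by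
  constructor
  · intro h
    exact ⟨h 0 1 (by decide), h 1 2 (by decide)⟩
  · rintro ⟨h1, h2⟩ i j hij
    fin_cases i <;> fin_cases j <;>
      simp_all [Matrix.cons_val_two, Matrix.vecTail, Matrix.vecHead, Fin.lt_def] <;> omega

lemma T3_coeff :
    (∑ t ∈ (Fintype.piFinset fun _ : Fin 3 => MMa N S n).filter
        (fun t => ∀ i j : Fin 3, i < j → t i < t j),
        ∏ i, gpa n (fun d => ε ^ d * d) (t i)).coeff n
      = ∑ y ∈ (((MMa N S n) ×ˢ (MMa N S n) ×ˢ (MMa N S n)) ×ˢ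
          ((Icc 1 n) ×ˢ (Icc 1 n) ×ˢ (Icc 1 n))).filter
          (fun y => (y.1.1 < y.1.2.1 ∧ y.1.2.1 < y.1.2.2) ∧
            y.1.1 * y.2.1 + y.1.2.1 * y.2.2.1 + y.1.2.2 * y.2.2.2 = n),
        ε ^ (y.2.1 + y.2.2.1 + y.2.2.2) * ((y.2.1 : ℤ) * (y.2.2.1 : ℤ) * (y.2.2.2 : ℤ)) := by
  rw [Polynomial.finset_sum_coeff]
  have Ht : ∀ t : Fin 3 → ℕ, (∏ i, gpa n (fun d => ε ^ d * d) (t i)).coeff n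
      = ∑ d1 ∈ Icc 1 n, ∑ d2 ∈ Icc 1 n, ∑ d3 ∈ Icc 1 n,
          if t 0 * d1 + t 1 * d2 + t 2 * d3 = n
          then (ε ^ d1 * d1) * (ε ^ d2 * d2) * (ε ^ d3 * d3) else 0 := by
    intro t
    rw [Fin.prod_univ_three, gpa_mul3, tsum_coeff]
  rw [Finset.sum_congr rfl fun t _ => Ht t]
  conv_lhs => rw [Finset.sum_filter, sum_pi3]
  conv_rhs => rw [Finset.sum_filter]
  conv_lhs => simp only [Finset.sum_product]
  conv_rhs => simp only [Finset.sum_product]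
  refine Finset.sum_congr rfl fun m1 _ => Finset.sum_congr rfl fun m2 _ =>
    Finset.sum_congr rfl fun m3 _ => ?_
  by_cases hs : m1 < m2 ∧ m2 < m3
  · rw [if_pos ((sorted3_iff m1 m2 m3).2 hs)]
    refine Finset.sum_congr rfl fun d1 _ => Finset.sum_congr rfl fun d2 _ =>
      Finset.sum_congr rfl fun d3 _ => ?_
    have e0 : (![m1, m2, m3] : Fin 3 → ℕ) 0 = m1 := rfl
    have e1 : (![m1, m2, m3] : Fin 3 → ℕ) 1 = m2 := rfl
    have e2 : (![m1, m2, m3] : Fin 3 → ℕ) 2 = m3 := rfl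
    rw [e0, e1, e2]
    by_cases hsum : m1 * d1 + m2 * d2 + m3 * d3 = n
    · rw [if_pos hsum, if_pos ⟨hs, hsum⟩]
      rw [pow_add, pow_add]
      ring
    · rw [if_neg hsum, if_neg (fun hh => hsum hh.2)]
  · rw [if_neg (fun hh => hs ((sorted3_iff m1 m2 m3).1 hh))]
    refine (Finset.sum_eq_zero fun d1 _ => Finset.sum_eq_zero fun d2 _ =>
      Finset.sum_eq_zero fun d3 _ => ?_).symm
    exact if_neg (fun hh => hs hh.1)

end Aux

theorem Mgen_three_formula (N : ℕ) (hN : 0 < N) (S : Finset (ZMod N))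
    (hS : S.Nonempty) (ε : ℤ) (hε : ε = 1 ∨ ε = -1) (n : ℕ) (hn : 0 < n) :
    360 * Mgen N S ε 3 n =
      60 * (∑ a ∈ Finset.Ico 1 n, ∑ b ∈ Finset.Ico 1 (n - a),
              sigmaGen N S ε 1 a * sigmaGen N S ε 1 b * sigmaGen N S ε 1 (n - a - b))
        + 30 * (∑ a ∈ Finset.Ico 1 n, sigmaGen N S ε 1 a * sigmaGen N S ε 1 (n - a))
        - 30 * (∑ a ∈ Finset.Ico 1 n, sigmaGen N S ε 3 a * sigmaGen N S ε 1 (n - a))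
        + 4 * sigmaGen N S ε 1 n - 5 * sigmaGen N S ε 3 n + sigmaGen N S ε 5 n := by
  classical
  obtain ⟨E1, hE1⟩ : ∃ p : Polynomial ℤ,
      p = ∑ m ∈ MMa N S n, gpa n (fun d => ε ^ d * d) m := ⟨_, rfl⟩
  obtain ⟨Q2, hQ2⟩ : ∃ p : Polynomial ℤ,
      p = ∑ m ∈ MMa N S n, gpa n (fun d => ε ^ d * d) m ^ 2 := ⟨_, rfl⟩
  obtain ⟨Q3, hQ3⟩ : ∃ p : Polynomial ℤ,
      p = ∑ m ∈ MMa N S n, gpa n (fun d => ε ^ d * d) m ^ 3 := ⟨_, rfl⟩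
  obtain ⟨T3S, hT3S⟩ : ∃ p : Polynomial ℤ,
      p = ∑ t ∈ (Fintype.piFinset fun _ : Fin 3 => MMa N S n).filter
        (fun t => ∀ i j : Fin 3, i < j → t i < t j),
        ∏ i, gpa n (fun d => ε ^ d * d) (t i) := ⟨_, rfl⟩
  have hσ1 : ∀ a, a ≤ n → E1.coeff a = sigmaGen N S ε 1 a := by
    intro a ha
    rw [hE1]
    have h := coeffE N S ε n 1 a ha
    simp only [pow_one] at h
    exact h
  have hσ1_0 : sigmaGen N S ε 1 0 = 0 := by simp [sigmaGen]
  have hσ3_0 : sigmaGen N S ε 3 0 = 0 := by simp [sigmaGen]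
  have hE1_0 : E1.coeff 0 = 0 := by rw [hσ1 0 (by omega), hσ1_0]
  have hpoly : (6 : Polynomial ℤ) * T3S = E1 ^ 3 - 3 * (Q2 * E1) + 2 * Q3 := by
    rw [hT3S, hE1, hQ2, hQ3, ← six_fold (MMa N S n) (fun m => gpa n (fun d => ε ^ d * d) m),
      D3_iterated, alg_id]
  have hM : Mgen N S ε 3 n = T3S.coeff n := by
    rw [hT3S, Mgen_bridge N S ε n, ← T3_coeff N S ε n]
  have hQ2c : ∀ a, a ≤ n → 6 * Q2.coeff a = sigmaGen N S ε 3 a - sigmaGen N S ε 1 a := by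
    intro a ha
    rw [hQ2]
    exact coeffP2 N S ε n a ha
  have hQ3c : 120 * (Q3.coeff n) = sigmaGen N S ε 5 n - 5 * sigmaGen N S ε 3 n
      + 4 * sigmaGen N S ε 1 n := by
    rw [hQ3]
    exact coeffP3 N S ε n n le_rfl
  clear hE1 hQ2 hQ3 hT3S
  have hc : (6:ℤ) * Mgen N S ε 3 n = (E1 ^ 3 - 3 * (Q2 * E1) + 2 * Q3).coeff n := by
    rw [hM, ← hpoly, show ((6:Polynomial ℤ) = Polynomial.C 6) from (map_ofNat _ _).symm,
      Polynomial.coeff_C_mul]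
  have expand : (E1 ^ 3 - 3 * (Q2 * E1) + 2 * Q3).coeff n
      = (E1 ^ 3).coeff n - 3 * ((Q2 * E1).coeff n) + 2 * (Q3.coeff n) := by
    rw [Polynomial.coeff_add, Polynomial.coeff_sub,
      show ((3:Polynomial ℤ) = Polynomial.C 3) from (map_ofNat _ _).symm,
      show ((2:Polynomial ℤ) = Polynomial.C 2) from (map_ofNat _ _).symm,
      Polynomial.coeff_C_mul, Polynomial.coeff_C_mul]
  have hcube : (E1 ^ 3).coeff n = ∑ a ∈ Finset.Ico 1 n, ∑ b ∈ Finset.Ico 1 (n - a),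
      sigmaGen N S ε 1 a * sigmaGen N S ε 1 b * sigmaGen N S ε 1 (n - a - b) := by
    have h3 : E1 ^ 3 = E1 * (E1 * E1) := by ring
    rw [h3, Polynomial.coeff_mul]
    have step1 : ∑ p ∈ Finset.HasAntidiagonal.antidiagonal n, E1.coeff p.1 * (E1 * E1).coeff p.2
        = ∑ p ∈ Finset.HasAntidiagonal.antidiagonal n,
            sigmaGen N S ε 1 p.1 * (E1 * E1).coeff p.2 := by
      refine Finset.sum_congr rfl fun p hp => ?_
      have hpn := Finset.HasAntidiagonal.mem_antidiagonal.1 hp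
      have h1 : E1.coeff p.1 = sigmaGen N S ε 1 p.1 := hσ1 p.1 (by omega)
      rw [h1]
    rw [step1, conv_eq n hn (fun a => sigmaGen N S ε 1 a) (fun b => (E1 * E1).coeff b) hσ1_0
      (by show (E1 * E1).coeff 0 = 0; rw [Polynomial.mul_coeff_zero, hE1_0, zero_mul])]
    refine Finset.sum_congr rfl fun a ha => ?_
    have ha' := Finset.mem_Ico.1 ha
    have hpos : 0 < n - a := by omega
    have inner : (E1 * E1).coeff (n - a) = ∑ b ∈ Finset.Ico 1 (n - a),
        sigmaGen N S ε 1 b * sigmaGen N S ε 1 (n - a - b) := by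
      rw [Polynomial.coeff_mul]
      have step2 : ∑ p ∈ Finset.HasAntidiagonal.antidiagonal (n - a), E1.coeff p.1 * E1.coeff p.2
          = ∑ p ∈ Finset.HasAntidiagonal.antidiagonal (n - a),
              sigmaGen N S ε 1 p.1 * sigmaGen N S ε 1 p.2 := by
        refine Finset.sum_congr rfl fun p hp => ?_
        have hpn := Finset.HasAntidiagonal.mem_antidiagonal.1 hp
        have h1 : E1.coeff p.1 = sigmaGen N S ε 1 p.1 := hσ1 p.1 (by omega)
        have h2 : E1.coeff p.2 = sigmaGen N S ε 1 p.2 := hσ1 p.2 (by omega)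
        rw [h1, h2]
      rw [step2, conv_eq (n - a) hpos (fun b => sigmaGen N S ε 1 b)
        (fun b => sigmaGen N S ε 1 b) hσ1_0 hσ1_0]
    rw [inner, Finset.mul_sum]
    refine Finset.sum_congr rfl fun b _ => by ring
  have hpair6 : 6 * ((Q2 * E1).coeff n) = ∑ a ∈ Finset.Ico 1 n,
      (sigmaGen N S ε 3 a - sigmaGen N S ε 1 a) * sigmaGen N S ε 1 (n - a) := by
    rw [Polynomial.coeff_mul, Finset.mul_sum]
    have step : ∑ p ∈ Finset.HasAntidiagonal.antidiagonal n, 6 * (Q2.coeff p.1 * E1.coeff p.2)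
        = ∑ p ∈ Finset.HasAntidiagonal.antidiagonal n,
            (sigmaGen N S ε 3 p.1 - sigmaGen N S ε 1 p.1) * sigmaGen N S ε 1 p.2 := by
      refine Finset.sum_congr rfl fun p hp => ?_
      have hpn := Finset.HasAntidiagonal.mem_antidiagonal.1 hp
      have h1 : E1.coeff p.2 = sigmaGen N S ε 1 p.2 := hσ1 p.2 (by omega)
      have h2 : 6 * Q2.coeff p.1 = sigmaGen N S ε 3 p.1 - sigmaGen N S ε 1 p.1 :=
        hQ2c p.1 (by omega)
      rw [← mul_assoc, h2, h1]
    rw [step, conv_eq n hn (fun a => sigmaGen N S ε 3 a - sigmaGen N S ε 1 a)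
      (fun b => sigmaGen N S ε 1 b) (by simp [hσ3_0, hσ1_0]) hσ1_0]
  have hsplit : ∑ a ∈ Finset.Ico 1 n,
      (sigmaGen N S ε 3 a - sigmaGen N S ε 1 a) * sigmaGen N S ε 1 (n - a)
      = (∑ a ∈ Finset.Ico 1 n, sigmaGen N S ε 3 a * sigmaGen N S ε 1 (n - a))
        - ∑ a ∈ Finset.Ico 1 n, sigmaGen N S ε 1 a * sigmaGen N S ε 1 (n - a) := by
    rw [← Finset.sum_sub_distrib]
    refine Finset.sum_congr rfl fun a _ => by ring
  rw [expand] at hc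
  linarith [hc, hcube, hpair6, hQ3c, hsplit]
end

section
/- For all integers k ≥ 1 and N > k, the rational number Σ_{n=k}^{N} ((−1)^{n−k} / n) · C(2n, n−k) · C(N+n−1, 2n−1) equals 0, where C(·,·) denotes the binomial coefficient. -/
open Finset

-- (n+1-k)*(n+1+k)*C(2n+2, n+1-k) = (2n+1)*(2n+2)*C(2n, n-k), for k ≤ n
lemma auxA (k n : ℕ) (hk : k ≤ n) :
    (n + 1 - k) * ((n + 1 + k) * Nat.choose (2 * n + 2) (n + 1 - k)) =
      (2 * n + 1) * ((2 * n + 2) * Nat.choose (2 * n) (n - k)) := by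
  have h1 : n + 1 - k = (n - k) + 1 := by omega
  have h2 : ((n - k) + 1) * Nat.choose (2 * n + 2) ((n - k) + 1) =
      (2 * n + 2) * Nat.choose (2 * n + 1) (n - k) := by
    rw [mul_comm ((n-k)+1)]
    exact (Nat.add_one_mul_choose_eq (2 * n + 1) (n - k)).symm
  have h3 : Nat.choose (2 * n + 1) (n - k) = Nat.choose (2 * n + 1) (n + 1 + k) := by
    rw [show n - k = 2 * n + 1 - (n + 1 + k) by omega]
    exact Nat.choose_symm (by omega)
  have h4 : Nat.choose (2 * n) (n - k) = Nat.choose (2 * n) (n + k) := by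
    rw [show n - k = 2 * n - (n + k) by omega]
    exact Nat.choose_symm (by omega)
  have h5 : (n + 1 + k) * Nat.choose (2 * n + 1) (n + 1 + k) =
      (2 * n + 1) * Nat.choose (2 * n) (n + k) := by
    have := Nat.add_one_mul_choose_eq (2 * n) (n + k)
    have hh : n + k + 1 = n + 1 + k := by omega
    rw [hh] at this
    rw [mul_comm (n+1+k)]
    exact this.symm
  calc (n + 1 - k) * ((n + 1 + k) * Nat.choose (2 * n + 2) (n + 1 - k))
      = (n + 1 + k) * (((n - k) + 1) * Nat.choose (2 * n + 2) ((n - k) + 1)) := by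
        rw [h1]; ring
    _ = (n + 1 + k) * ((2 * n + 2) * Nat.choose (2 * n + 1) (n - k)) := by rw [h2]
    _ = (2 * n + 2) * ((n + 1 + k) * Nat.choose (2 * n + 1) (n + 1 + k)) := by
        rw [h3]; ring
    _ = (2 * n + 2) * ((2 * n + 1) * Nat.choose (2 * n) (n + k)) := by rw [h5]
    _ = (2 * n + 1) * ((2 * n + 2) * Nat.choose (2 * n) (n - k)) := by rw [h4]; ring

-- (N+n)*(N-n)*C(N+n-1, 2n-1) = (2n)*(2n+1)*C(N+n, 2n+1), for 1 ≤ n ≤ N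
lemma auxB (N n : ℕ) (hn : 1 ≤ n) (hN : n ≤ N) :
    (N + n) * ((N - n) * Nat.choose (N + n - 1) (2 * n - 1)) =
      (2 * n) * ((2 * n + 1) * Nat.choose (N + n) (2 * n + 1)) := by
  have h1 : (N + n) * Nat.choose (N + n - 1) (2 * n - 1) =
      (2 * n) * Nat.choose (N + n) (2 * n) := by
    have := Nat.add_one_mul_choose_eq (N + n - 1) (2 * n - 1)
    have e1 : N + n - 1 + 1 = N + n := by omega
    have e2 : 2 * n - 1 + 1 = 2 * n := by omega
    rw [e1, e2] at this
    rw [this]; ring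
  have h2 : Nat.choose (N + n) (2 * n + 1) * (2 * n + 1) =
      Nat.choose (N + n) (2 * n) * (N + n - 2 * n) :=
    Nat.choose_succ_right_eq (N + n) (2 * n)
  have e3 : N + n - 2 * n = N - n := by omega
  rw [e3] at h2
  calc (N + n) * ((N - n) * Nat.choose (N + n - 1) (2 * n - 1))
      = (N - n) * ((N + n) * Nat.choose (N + n - 1) (2 * n - 1)) := by ring
    _ = (N - n) * ((2 * n) * Nat.choose (N + n) (2 * n)) := by rw [h1]
    _ = (2 * n) * (Nat.choose (N + n) (2 * n) * (N - n)) := by ring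
    _ = (2 * n) * (Nat.choose (N + n) (2 * n + 1) * (2 * n + 1)) := by rw [h2]
    _ = (2 * n) * ((2 * n + 1) * Nat.choose (N + n) (2 * n + 1)) := by ring

theorem binomial_sum_vanishes (k N : ℕ) (hk : 1 ≤ k) (hN : k < N) :
    ∑ n ∈ Finset.Icc k N,
      ((-1 : ℚ) ^ (n - k) / n) * (Nat.choose (2 * n) (n - k)) *
        (Nat.choose (N + n - 1) (2 * n - 1)) = 0 := by
  set T : ℕ → ℚ := fun n =>
    -(((n : ℚ) ^ 2 - (k : ℚ) ^ 2) / ((N : ℚ) ^ 2 - (k : ℚ) ^ 2)) *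
      (((-1 : ℚ) ^ (n - k) / n) * (Nat.choose (2 * n) (n - k)) *
        (Nat.choose (N + n - 1) (2 * n - 1))) with hT
  have hNK : (N : ℚ) ^ 2 - (k : ℚ) ^ 2 ≠ 0 := by
    have h1 : (k : ℚ) < (N : ℚ) := by exact_mod_cast hN
    have hk0 : (0:ℚ) ≤ k := by positivity
    nlinarith
  have key : ∀ n ∈ Finset.Icc k N,
      ((-1 : ℚ) ^ (n - k) / n) * (Nat.choose (2 * n) (n - k)) *
        (Nat.choose (N + n - 1) (2 * n - 1)) = T (n + 1) - T n := by
    intro n hn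
    simp only [Finset.mem_Icc] at hn
    obtain ⟨hkn, hnN⟩ := hn
    have hn1 : 1 ≤ n := le_trans hk hkn
    have hn0 : (n : ℚ) ≠ 0 := by positivity
    have hn10 : ((n : ℚ) + 1) ≠ 0 := by positivity
    have hsub : n + 1 - k = (n - k) + 1 := by omega
    have hA := auxA k n hkn
    have hB := auxB N n hn1 hnN
    have hA' : ((n : ℚ) + 1 - k) * (((n : ℚ) + 1 + k) *
        (Nat.choose (2 * n + 2) (n + 1 - k) : ℚ)) =
        (2 * (n : ℚ) + 1) * ((2 * (n : ℚ) + 2) * (Nat.choose (2 * n) (n - k) : ℚ)) := by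
      have := congrArg (fun x : ℕ => (x : ℚ)) hA
      push_cast [Nat.cast_sub (by omega : k ≤ n + 1)] at this
      convert this using 2
    have hB' : ((N : ℚ) + n) * (((N : ℚ) - n) *
        (Nat.choose (N + n - 1) (2 * n - 1) : ℚ)) =
        (2 * (n : ℚ)) * ((2 * (n : ℚ) + 1) * (Nat.choose (N + n) (2 * n + 1) : ℚ)) := by
      have := congrArg (fun x : ℕ => (x : ℚ)) hB
      push_cast [Nat.cast_sub (by omega : n ≤ N)] at this
      convert this using 2
    have main : ((n : ℚ) + 1) * (((N:ℚ)^2 - (n:ℚ)^2) *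
          ((Nat.choose (2 * n) (n - k) : ℚ) * (Nat.choose (N + n - 1) (2 * n - 1) : ℚ))) =
        (n : ℚ) * ((((n:ℚ)+1)^2 - (k:ℚ)^2) *
          ((Nat.choose (2 * n + 2) (n + 1 - k) : ℚ) * (Nat.choose (N + n) (2 * n + 1) : ℚ))) := by
      linear_combination ((n:ℚ)+1) * (Nat.choose (2 * n) (n - k) : ℚ) * hB' -
        (n:ℚ) * (Nat.choose (N + n) (2 * n + 1) : ℚ) * hA'
    rw [hT]
    simp only
    have e1 : 2 * (n + 1) = 2 * n + 2 := by ring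
    rw [e1]
    have e2 : N + (n + 1) - 1 = N + n := by omega
    have e3 : 2 * n + 2 - 1 = 2 * n + 1 := by omega
    rw [e2, e3, hsub, pow_succ]
    push_cast
    rw [hsub] at main
    field_simp
    linear_combination ((-1:ℚ)^(n-k)) * main
  rw [Finset.sum_congr rfl key]
  have hIcc : Finset.Icc k N = Finset.Ico k (N + 1) := by
    rw [Finset.Ico_add_one_right_eq_Icc]
  rw [hIcc, Finset.sum_Ico_eq_sub _ (by omega : k ≤ N + 1),
    Finset.sum_range_sub (fun i => T i), Finset.sum_range_sub (fun i => T i)]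
  have hTk : T k = 0 := by
    have : ((k : ℚ) ^ 2 - (k : ℚ) ^ 2) = 0 := sub_self _
    simp [hT, this]
  have hTN : T (N + 1) = 0 := by
    have h0 : Nat.choose (N + N) (2 * (N + 1) - 1) = 0 := by
      apply Nat.choose_eq_zero_of_lt; omega
    simp only [hT]
    rw [show N + (N + 1) - 1 = N + N from by omega, h0]
    simp
  rw [hTk, hTN]
  ring
end
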